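/- arXiv:2503.06880 — 10 statements merged into one kernel-verified Lean document; each statement's English description precedes it below -/
import Mathlib

section
/- Every uniformly convex Banach space has the Banach–Saks property: every weakly convergent sequence admits a subsequence whose Cesàro means converge in norm to the weak limit. -/
/-!
Kakutani's dyadic argument. Put `u = x - x₀`, a bounded weakly null sequence, say `‖u n‖ ≤ C`.
Uniform convexity yields `r < 1` with `‖a + b‖ ≤ 2 r c` whenever `‖a‖, ‖b‖ ≤ c` and a norming
functional of `a` is at most `c / 4` on `b`. Choose the subsequence greedily, each new term almost
annihilated by the norming functionals of all aligned dyadic blocks completed before it; then by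
induction every aligned block of length `2^l` has sum of norm at most `C (2r)^l`. Cutting
`range N` into such blocks bounds the `N`-th Cesàro mean by `C r^l + C 2^l / N`.
-/

open Filter Topology Finset

theorem Filter.extraction_forall_of_eventually_dep {P : (ℕ → ℕ) → ℕ → ℕ → Prop}
    (hP : ∀ φ ψ i n, (∀ j < i, φ j = ψ j) → P φ i n → P ψ i n)
    (h : ∀ φ i, ∀ᶠ n in atTop, P φ i n) :
    ∃ φ : ℕ → ℕ, StrictMono φ ∧ ∀ i, P φ i (φ i) := by
  have h' : ∀ φ i, ∃ n, (∀ j < i, φ j < n) ∧ P φ i n := fun φ i =>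
    (((Set.finite_lt_nat i).eventually_all.2 fun j _ => eventually_gt_atTop (φ j)).and
      (h φ i)).exists
  choose F hF using h'
  let φ : ℕ → ℕ := Nat.strongRec fun i prev => F (fun j => if hj : j < i then prev j hj else 0) i
  let prefixOf (i : ℕ) : ℕ → ℕ := fun j => if j < i then φ j else 0
  have hφ (i : ℕ) : φ i = F (prefixOf i) i := Nat.strongRec_eq _ i
  have hprefix (i : ℕ) : ∀ j < i, prefixOf i j = φ j := fun j hj => if_pos hj
  refine ⟨φ, fun j i hji => ?_, fun i => hP _ _ i _ (hprefix i) ?_⟩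
  · rw [hφ i, ← hprefix i j hji]
    exact (hF _ i).1 j hji
  · rw [hφ i]
    exact (hF _ i).2

section DyadicBlocks

variable {M : Type*} [AddCommMonoid M]

def dyadicBlockSum (w : ℕ → M) (l m : ℕ) : M :=
  ∑ i ∈ range (2 ^ l), w (m * 2 ^ l + i)

theorem dyadicBlockSum_zero (w : ℕ → M) (m : ℕ) : dyadicBlockSum w 0 m = w m := by
  simp [dyadicBlockSum]

theorem dyadicBlockSum_succ (w : ℕ → M) (l m : ℕ) :
    dyadicBlockSum w (l + 1) m = dyadicBlockSum w l (2 * m) + dyadicBlockSum w l (2 * m + 1) := by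
  rw [dyadicBlockSum, pow_succ, mul_two, sum_range_add]
  congr 1 <;> refine sum_congr rfl fun i _ => congr_arg w (by ring)

theorem dyadicBlockSum_congr {w w' : ℕ → M} {l m : ℕ}
    (h : ∀ j < (m + 1) * 2 ^ l, w j = w' j) : dyadicBlockSum w l m = dyadicBlockSum w' l m :=
  sum_congr rfl fun i hi => h _ (by rw [mem_range] at hi; rw [add_one_mul]; omega)

theorem sum_range_mul_eq_sum_dyadicBlockSum (w : ℕ → M) (l q : ℕ) :
    ∑ i ∈ range (q * 2 ^ l), w i = ∑ m ∈ range q, dyadicBlockSum w l m := by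
  induction q with
  | zero => simp
  | succ q ih => rw [add_one_mul, sum_range_add, ih, sum_range_succ, dyadicBlockSum]

end DyadicBlocks

theorem exists_norm_le_of_forall_tendsto_dual {𝕜 F : Type*} [RCLike 𝕜]
    [SeminormedAddCommGroup F] [NormedSpace 𝕜 F] {u : ℕ → F} {y : F}
    (h : ∀ f : StrongDual 𝕜 F, Tendsto (fun n => f (u n)) atTop (𝓝 (f y))) :
    ∃ C, ∀ n, ‖u n‖ ≤ C := by
  obtain ⟨C, hC⟩ := banach_steinhaus (g := fun n => NormedSpace.inclusionInDoubleDualLi 𝕜 (u n))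
    fun f => let ⟨C, hC⟩ := (h f).norm.bddAbove_range; ⟨C, fun n => hC ⟨n, rfl⟩⟩
  exact ⟨C, fun n => (NormedSpace.inclusionInDoubleDualLi 𝕜).norm_map (u n) ▸ hC n⟩

theorem uniformConvexSpace_of_forall_lt_norm_sub {E : Type*} [SeminormedAddCommGroup E]
    (huc : ∀ ε ∈ Set.Ioo (0:ℝ) 1, ∃ δ ∈ Set.Ioo (0:ℝ) 1, ∀ x y : E,
      ‖x‖ ≤ 1 → ‖y‖ ≤ 1 → ε < ‖x - y‖ → ‖x + y‖ < 2 - δ) :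
    UniformConvexSpace E where
  uniform_convex ε hε := by
    obtain ⟨δ, ⟨hδ, -⟩, h⟩ := huc (min ε 1 / 2) ⟨by positivity, by linarith [min_le_right ε 1]⟩
    refine ⟨δ, hδ, fun x hx y hy hxy => (h x y hx.le hy.le ?_).le⟩
    linarith [min_le_left ε 1, half_lt_self (lt_min hε one_pos)]

section NormedSpace

variable {E : Type*} [SeminormedAddCommGroup E] [NormedSpace ℝ E]

theorem norm_cesaro_le_of_norm_dyadicBlockSum_le {w : ℕ → E} {C r : ℝ} (hr : 0 ≤ r)
    (hw : ∀ i, ‖w i‖ ≤ C) (hblock : ∀ l m, ‖dyadicBlockSum w l m‖ ≤ C * (2 * r) ^ l)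
    (l : ℕ) {N : ℕ} (hN : 0 < N) :
    ‖(N : ℝ)⁻¹ • ∑ i ∈ range N, w i‖ ≤ C * r ^ l + C * 2 ^ l / N := by
  have hC : 0 ≤ C := (norm_nonneg _).trans (hw 0)
  set q := N / 2 ^ l
  set s := N % 2 ^ l
  have hqs : q * 2 ^ l + s = N := by rw [mul_comm]; exact Nat.div_add_mod N (2 ^ l)
  have hq : (q : ℝ) * 2 ^ l ≤ N := by exact_mod_cast hqs ▸ Nat.le_add_right _ _
  have hs : (s : ℝ) ≤ 2 ^ l := by exact_mod_cast (Nat.mod_lt N (by positivity)).le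
  have hsum : ‖∑ i ∈ range N, w i‖ ≤ C * r ^ l * N + 2 ^ l * C := calc
    ‖∑ i ∈ range N, w i‖
        = ‖∑ m ∈ range q, dyadicBlockSum w l m + ∑ i ∈ range s, w (q * 2 ^ l + i)‖ := by
      rw [← hqs, sum_range_add, sum_range_mul_eq_sum_dyadicBlockSum]
    _ ≤ ∑ m ∈ range q, ‖dyadicBlockSum w l m‖ + ∑ i ∈ range s, ‖w (q * 2 ^ l + i)‖ :=
      (norm_add_le _ _).trans (add_le_add (norm_sum_le _ _) (norm_sum_le _ _))
    _ ≤ q * (C * (2 * r) ^ l) + s * C := by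
      gcongr
      · exact (sum_le_card_nsmul _ _ _ fun m _ => hblock l m).trans (by simp)
      · exact (sum_le_card_nsmul _ _ _ fun i _ => hw _).trans (by simp)
    _ = C * r ^ l * (q * 2 ^ l) + s * C := by ring
    _ ≤ C * r ^ l * N + 2 ^ l * C := by
      have := mul_nonneg hC (pow_nonneg hr l)
      gcongr
  have hN' : (0 : ℝ) < N := by exact_mod_cast hN
  rw [norm_smul, norm_inv, Real.norm_natCast, inv_mul_le_iff₀ hN']
  calc ‖∑ i ∈ range N, w i‖ ≤ C * r ^ l * N + 2 ^ l * C := hsum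
    _ = N * (C * r ^ l + C * 2 ^ l / N) := by field_simp

theorem tendsto_cesaro_zero_of_norm_dyadicBlockSum_le {w : ℕ → E} {C r : ℝ} (hr0 : 0 ≤ r)
    (hr1 : r < 1) (hw : ∀ i, ‖w i‖ ≤ C)
    (hblock : ∀ l m, ‖dyadicBlockSum w l m‖ ≤ C * (2 * r) ^ l) :
    Tendsto (fun N : ℕ => (N : ℝ)⁻¹ • ∑ i ∈ range N, w i) atTop (𝓝 0) := by
  refine NormedAddGroup.tendsto_nhds_zero.2 fun ε hε => ?_
  obtain ⟨l, hl⟩ : ∃ l : ℕ, C * r ^ l < ε / 2 := by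
    have := (tendsto_pow_atTop_nhds_zero_of_lt_one hr0 hr1).const_mul C
    rw [mul_zero] at this
    exact (this.eventually (gt_mem_nhds (half_pos hε))).exists
  filter_upwards [(tendsto_const_div_atTop_nhds_zero_nat (C * 2 ^ l)).eventually
    (gt_mem_nhds (half_pos hε)), eventually_gt_atTop 0] with N hN hN0
  exact (norm_cesaro_le_of_norm_dyadicBlockSum_le hr0 hw hblock l hN0).trans_lt (by linarith)

theorem UniformConvexSpace.exists_norm_add_le_of_apply_le [UniformConvexSpace E] :
    ∃ r < 1, 0 < r ∧ ∀ ⦃c : ℝ⦄ ⦃a b : E⦄ ⦃f : StrongDual ℝ E⦄, 0 < c → ‖a‖ ≤ c → ‖b‖ ≤ c →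
      ‖f‖ ≤ 1 → f a = ‖a‖ → f b ≤ c / 4 → ‖a + b‖ ≤ 2 * r * c := by
  obtain ⟨δ, hδ, hUC⟩ := exists_forall_closed_ball_dist_add_le_two_sub E (ε := 1 / 4) (by norm_num)
  -- `3 / 4` covers the case `‖a‖ ≤ c / 2`, where the triangle inequality gives `3 c / 2`
  refine ⟨max (3 / 4) (1 - δ / 2), max_lt (by norm_num) (by linarith), by positivity, ?_⟩
  intro c a b f hc ha hb hf hfa hfb
  have hr₁ := le_max_left (3 / 4 : ℝ) (1 - δ / 2)
  have hr₂ := le_max_right (3 / 4 : ℝ) (1 - δ / 2)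
  rcases le_or_gt ‖a‖ (c / 2) with ha₂ | ha₂
  · nlinarith [norm_add_le a b]
  have hsep : c / 4 ≤ ‖a - b‖ := calc
    c / 4 ≤ f (a - b) := by rw [map_sub, hfa]; linarith
    _ ≤ ‖f‖ * ‖a - b‖ := (le_abs_self _).trans (f.le_opNorm _)
    _ ≤ ‖a - b‖ := mul_le_of_le_one_left (norm_nonneg _) hf
  have hscale (z : E) : ‖c⁻¹ • z‖ = ‖z‖ / c := by
    rw [norm_smul, norm_inv, Real.norm_of_nonneg hc.le, inv_mul_eq_div]
  have key := @hUC (c⁻¹ • a) (by rw [hscale, div_le_one hc]; exact ha)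
    (c⁻¹ • b) (by rw [hscale, div_le_one hc]; exact hb)
    (by rw [← smul_sub, hscale, le_div_iff₀ hc]; linarith)
  rw [← smul_add, hscale, div_le_iff₀ hc] at key
  nlinarith

theorem norm_dyadicBlockSum_le {w : ℕ → E} {C r : ℝ} (hC : 0 < C) (hr : 0 < r)
    (hw : ∀ i, ‖w i‖ ≤ C)
    (hgain : ∀ ⦃c : ℝ⦄ ⦃a b : E⦄ ⦃f : StrongDual ℝ E⦄, 0 < c → ‖a‖ ≤ c → ‖b‖ ≤ c →
      ‖f‖ ≤ 1 → f a = ‖a‖ → f b ≤ c / 4 → ‖a + b‖ ≤ 2 * r * c)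
    (hnorming : ∀ l m, ∃ f : StrongDual ℝ E, ‖f‖ ≤ 1 ∧
      f (dyadicBlockSum w l m) = ‖dyadicBlockSum w l m‖ ∧
      ∀ i, (m + 1) * 2 ^ l ≤ i → f (w i) ≤ C * r ^ l / 4)
    (l m : ℕ) : ‖dyadicBlockSum w l m‖ ≤ C * (2 * r) ^ l := by
  induction l generalizing m with
  | zero => simpa [dyadicBlockSum_zero] using hw m
  | succ l ih =>
    obtain ⟨f, hf, hfa, hfw⟩ := hnorming l (2 * m)
    have hfb : f (dyadicBlockSum w l (2 * m + 1)) ≤ C * (2 * r) ^ l / 4 := calc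
      f (dyadicBlockSum w l (2 * m + 1))
          = ∑ i ∈ range (2 ^ l), f (w ((2 * m + 1) * 2 ^ l + i)) := map_sum f _ _
      _ ≤ ∑ _i ∈ range (2 ^ l), C * r ^ l / 4 := sum_le_sum fun i _ => hfw _ (by omega)
      _ = C * (2 * r) ^ l / 4 := by rw [sum_const, card_range, nsmul_eq_mul]; push_cast; ring
    rw [dyadicBlockSum_succ]
    exact (hgain (by positivity) (ih _) (ih _) hf hfa hfb).trans_eq (by ring)

theorem exists_strictMono_apply_dyadicBlockSum_lt {u : ℕ → E}
    (hu : ∀ f : StrongDual ℝ E, Tendsto (fun n => f (u n)) atTop (𝓝 0))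
    (g : E → StrongDual ℝ E) {ε : ℕ → ℝ} (hε : ∀ l, 0 < ε l) :
    ∃ φ : ℕ → ℕ, StrictMono φ ∧
      ∀ l m i, (m + 1) * 2 ^ l ≤ i → g (dyadicBlockSum (u ∘ φ) l m) (u (φ i)) < ε l := by
  refine extraction_forall_of_eventually_dep
    (P := fun φ i n => ∀ l m, (m + 1) * 2 ^ l ≤ i → g (dyadicBlockSum (u ∘ φ) l m) (u n) < ε l)
    (fun φ ψ i n hφψ H l m hlm => ?_) (fun φ i => ?_)
    |>.imp fun φ hφ => ⟨hφ.1, fun l m i => hφ.2 i l m⟩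
  · rw [← dyadicBlockSum_congr (w := u ∘ φ) (w' := u ∘ ψ)
      fun j hj => congr_arg u (hφψ j (by omega))]
    exact H l m hlm
  · have : ∀ᶠ n in atTop, ∀ l ∈ {l | l < i + 1}, ∀ m ∈ {m | m < i + 1},
        g (dyadicBlockSum (u ∘ φ) l m) (u n) < ε l :=
      (Set.finite_lt_nat _).eventually_all.2 fun l _ =>
        (Set.finite_lt_nat _).eventually_all.2 fun m _ => (hu _).eventually (gt_mem_nhds (hε l))
    filter_upwards [this] with n hn l m hlm
    have := Nat.lt_two_pow_self (n := l)
    exact hn l (show l < i + 1 by nlinarith) m (show m < i + 1 by nlinarith)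

variable [UniformConvexSpace E]

theorem UniformConvexSpace.exists_strictMono_tendsto_cesaro_zero {u : ℕ → E}
    (hu : ∀ f : StrongDual ℝ E, Tendsto (fun n => f (u n)) atTop (𝓝 0)) :
    ∃ φ : ℕ → ℕ, StrictMono φ ∧
      Tendsto (fun N : ℕ => (N : ℝ)⁻¹ • ∑ i ∈ range N, u (φ i)) atTop (𝓝 0) := by
  obtain ⟨C₀, hC₀⟩ := exists_norm_le_of_forall_tendsto_dual (𝕜 := ℝ) (u := u) (y := 0)
    (by simpa using hu)
  set C := max C₀ 1
  have hC : 0 < C := lt_max_of_lt_right one_pos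
  have hu_le (n : ℕ) : ‖u n‖ ≤ C := (hC₀ n).trans (le_max_left _ _)
  obtain ⟨r, hr1, hr0, hgain⟩ := exists_norm_add_le_of_apply_le (E := E)
  choose g hg hga using fun a : E => exists_dual_vector'' ℝ a
  obtain ⟨φ, hφ, hsmall⟩ := exists_strictMono_apply_dyadicBlockSum_lt hu g
    (ε := fun l => C * r ^ l / 4) fun l => by positivity
  refine ⟨φ, hφ, tendsto_cesaro_zero_of_norm_dyadicBlockSum_le hr0.le hr1 (fun i => hu_le _) ?_⟩
  exact norm_dyadicBlockSum_le hC hr0 (fun i => hu_le _) hgain fun l m =>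
    ⟨_, hg _, hga _, fun i hi => (hsmall l m i hi).le⟩

theorem UniformConvexSpace.exists_strictMono_tendsto_cesaro {x : ℕ → E} {x₀ : E}
    (hx : ∀ f : StrongDual ℝ E, Tendsto (fun n => f (x n)) atTop (𝓝 (f x₀))) :
    ∃ φ : ℕ → ℕ, StrictMono φ ∧
      Tendsto (fun N : ℕ => (N : ℝ)⁻¹ • ∑ i ∈ range N, x (φ i)) atTop (𝓝 x₀) := by
  obtain ⟨φ, hφ, hlim⟩ := exists_strictMono_tendsto_cesaro_zero (u := fun n => x n - x₀)
    fun f => by simpa using (hx f).sub_const (f x₀)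
  refine ⟨φ, hφ, (zero_add x₀ ▸ hlim.add_const x₀).congr' ?_⟩
  filter_upwards [eventually_gt_atTop 0] with N hN
  rw [sum_sub_distrib, sum_const, card_range, ← Nat.cast_smul_eq_nsmul ℝ, smul_sub, smul_smul,
    inv_mul_cancel₀ (by positivity), one_smul, sub_add_cancel]

end NormedSpace

theorem uniformly_convex_banachSaks_general {X : Type*} [NormedAddCommGroup X] [NormedSpace ℝ X]
    (huc : ∀ ε ∈ Set.Ioo (0:ℝ) 1, ∃ δ ∈ Set.Ioo (0:ℝ) 1, ∀ x y : X,
      ‖x‖ ≤ 1 → ‖y‖ ≤ 1 → ε < ‖x - y‖ → ‖x + y‖ < 2 - δ)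
    (x : ℕ → X) (x₀ : X)
    (hw : ∀ f : X →L[ℝ] ℝ, Tendsto (fun n => f (x n)) atTop (nhds (f x₀))) :
    ∃ φ : ℕ → ℕ, StrictMono φ ∧
      Tendsto (fun N : ℕ => (N : ℝ)⁻¹ • ∑ i ∈ Finset.range N, x (φ i)) atTop (nhds x₀) := by
  have := uniformConvexSpace_of_forall_lt_norm_sub huc
  exact UniformConvexSpace.exists_strictMono_tendsto_cesaro hw

/-- Every uniformly convex Banach space has the Banach–Saks property. -/
theorem uniformly_convex_banachSaks {X : Type*} [NormedAddCommGroup X] [NormedSpace ℝ X]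
    [CompleteSpace X]
    (huc : ∀ ε ∈ Set.Ioo (0:ℝ) 1, ∃ δ ∈ Set.Ioo (0:ℝ) 1, ∀ x y : X,
      ‖x‖ ≤ 1 → ‖y‖ ≤ 1 → ε < ‖x - y‖ → ‖x + y‖ < 2 - δ)
    (x : ℕ → X) (x₀ : X)
    (hw : ∀ f : X →L[ℝ] ℝ, Tendsto (fun n => f (x n)) atTop (nhds (f x₀))) :
    ∃ φ : ℕ → ℕ, StrictMono φ ∧
      Tendsto (fun N : ℕ => (N : ℝ)⁻¹ • ∑ i ∈ Finset.range N, x (φ i)) atTop (nhds x₀) :=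
  uniformly_convex_banachSaks_general huc x x₀ hw
end

section
/- Let X be a normed linear space, f₁,…,fₙ ∈ X*, M > 0, and c₁,…,cₙ scalars. Then for every ε > 0 there exists x ∈ X with ‖x‖ < M+ε satisfying f_i(x) = c_i for all i ≤ n, if and only if |∑_{i≤n} t_i c_i| ≤ M‖∑_{i≤n} t_i f_i‖ for every choice of scalars t₁,…,tₙ (Helly's condition). -/
/-!
Necessity: evaluate `∑ tᵢ fᵢ` at the almost optimal solutions and let `ε → 0`.
Sufficiency: Helly's condition for `∑ tᵢ fᵢ = 0` gives `∑ tᵢ cᵢ = 0`, so by finite-dimensional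
duality the system `fᵢ x = cᵢ` has a solution `x₀`. The solutions form `x₀ + Y` with
`Y = ⋂ ker fᵢ`, and by Hahn–Banach `dist(x₀, Y)` is the value at `x₀` of a functional of norm
`≤ 1` vanishing on `Y`, that is, of some `∑ tᵢ fᵢ`; Helly's condition bounds this value by `M`.
-/

open Metric Filter Topology

theorem exists_forall_apply_eq_of_forall_sum_mul_apply_eq_zero {K V ι : Type*} [Field K]
    [AddCommGroup V] [Module K V] [Fintype ι] (f : ι → Module.Dual K V) (c : ι → K)
    (h : ∀ t : ι → K, (∀ x, ∑ i, t i * f i x = 0) → ∑ i, t i * c i = 0) :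
    ∃ x, ∀ i, f i x = c i := by
  classical
  suffices c ∈ LinearMap.range (LinearMap.pi f) from
    let ⟨x, hx⟩ := this; ⟨x, congrFun hx⟩
  rw [← Subspace.forall_mem_dualAnnihilator_apply_eq_zero_iff]
  intro φ hφ
  set t : ι → K := fun i => φ fun j => if i = j then 1 else 0
  have hφ_apply (v : ι → K) : φ v = ∑ i, t i * v i := by
    simp_rw [LinearMap.pi_apply_eq_sum_univ φ v, smul_eq_mul, mul_comm (v _)]
    rfl
  rw [hφ_apply]
  refine h t fun x => ?_
  rw [← (Submodule.mem_dualAnnihilator φ).1 hφ _ (LinearMap.mem_range_self _ x), hφ_apply]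
  rfl

section Normed

variable {X : Type*} [SeminormedAddCommGroup X] [NormedSpace ℝ X]

theorem ContinuousLinearMap.abs_le_mul_opNorm_of_forall_exists_norm_lt {φ : StrongDual ℝ X}
    {M a : ℝ} (h : ∀ ε > 0, ∃ x, ‖x‖ < M + ε ∧ φ x = a) : |a| ≤ M * ‖φ‖ := by
  have hε : ∀ ε > 0, |a| ≤ (M + ε) * ‖φ‖ := fun ε hε => by
    obtain ⟨x, hx, rfl⟩ := h ε hε
    calc |φ x| ≤ ‖φ‖ * ‖x‖ := φ.le_opNorm x
      _ ≤ (M + ε) * ‖φ‖ := by rw [mul_comm]; gcongr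
  have hlim : Tendsto (fun ε => (M + ε) * ‖φ‖) (𝓝[>] 0) (𝓝 (M * ‖φ‖)) := by
    refine tendsto_nhdsWithin_of_tendsto_nhds ?_
    exact (by fun_prop : Continuous fun ε : ℝ => (M + ε) * ‖φ‖).tendsto' 0 _ (by simp)
  exact ge_of_tendsto hlim (eventually_nhdsWithin_of_forall hε)

theorem Submodule.exists_dual_vector_infDist (Y : Submodule ℝ X) (x : X) :
    ∃ g : StrongDual ℝ X, ‖g‖ ≤ 1 ∧ (∀ y ∈ Y, g y = 0) ∧ g x = infDist x Y := by
  obtain ⟨g, hg, hgx⟩ := exists_dual_vector'' ℝ (Y.mkQ x)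
  refine ⟨g.comp Y.mkQL, ?_, fun y hy => by simp [(Submodule.Quotient.mk_eq_zero Y).2 hy], ?_⟩
  · refine ContinuousLinearMap.opNorm_le_bound _ zero_le_one fun y => ?_
    calc ‖g (Y.mkQ y)‖ ≤ ‖g‖ * ‖Y.mkQ y‖ := g.le_opNorm _
      _ ≤ 1 * ‖y‖ := mul_le_mul hg QuotientAddGroup.norm_mk_le_norm (norm_nonneg _) zero_le_one
  · exact hgx.trans (QuotientAddGroup.norm_mk x)

theorem infDist_iInf_ker_le_of_forall_abs_sum_le {ι : Type*} [Fintype ι] {f : ι → StrongDual ℝ X}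
    {M : ℝ} (hM : 0 ≤ M) (x₀ : X)
    (h : ∀ t : ι → ℝ, |∑ i, t i * f i x₀| ≤ M * ‖∑ i, t i • f i‖) :
    infDist x₀ (⨅ i, LinearMap.ker (f i : X →ₗ[ℝ] ℝ) : Submodule ℝ X) ≤ M := by
  obtain ⟨g, hg, hgY, hgx⟩ :=
    (⨅ i, LinearMap.ker (f i : X →ₗ[ℝ] ℝ)).exists_dual_vector_infDist x₀
  obtain ⟨t, rfl⟩ : ∃ t : ι → ℝ, ∑ i, t i • f i = g := by
    have := mem_span_of_iInf_ker_le_ker (L := fun i => (f i : X →ₗ[ℝ] ℝ)) (K := g) hgY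
    obtain ⟨t, ht⟩ := (Submodule.mem_span_range_iff_exists_fun ℝ).1 this
    exact ⟨t, by ext x; simpa using LinearMap.congr_fun ht x⟩
  calc infDist x₀ _ = (∑ i, t i • f i) x₀ := hgx.symm
    _ ≤ |∑ i, t i * f i x₀| := by simpa using le_abs_self _
    _ ≤ M * ‖∑ i, t i • f i‖ := h t
    _ ≤ M := mul_le_of_le_one_right hM hg

end Normed

/-- Helly's condition. -/
theorem helly_condition {X : Type*} [NormedAddCommGroup X] [NormedSpace ℝ X]
    (n : ℕ) (f : Fin n → (X →L[ℝ] ℝ)) (M : ℝ) (hM : 0 < M) (c : Fin n → ℝ) :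
    (∀ ε > (0:ℝ), ∃ x : X, ‖x‖ < M + ε ∧ ∀ i, f i x = c i) ↔
    (∀ t : Fin n → ℝ, |∑ i, t i * c i| ≤ M * ‖∑ i, t i • f i‖) := by
  refine ⟨fun h t => ?_, fun H ε hε => ?_⟩
  · refine ContinuousLinearMap.abs_le_mul_opNorm_of_forall_exists_norm_lt fun ε hε => ?_
    obtain ⟨x, hx, hfx⟩ := h ε hε
    exact ⟨x, hx, by simp [hfx]⟩
  obtain ⟨x₀, hx₀⟩ : ∃ x₀, ∀ i, f i x₀ = c i := exists_forall_apply_eq_of_forall_sum_mul_apply_eq_zero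
    (fun i => (f i : Module.Dual ℝ X)) c fun t ht => by
      have hzero : ∑ i, t i • f i = 0 := by ext x; simpa using ht x
      simpa [hzero] using H t
  have hdist := infDist_iInf_ker_le_of_forall_abs_sum_le (f := f) hM.le x₀ (by simpa [hx₀] using H)
  obtain ⟨y, hy, hxy⟩ := (infDist_lt_iff ⟨0, Submodule.zero_mem _⟩).1
    (hdist.trans_lt (lt_add_of_pos_right M hε))
  refine ⟨x₀ - y, by rwa [← dist_eq_norm], fun i => ?_⟩
  have hfy : f i y = 0 := Submodule.mem_iInf _ |>.1 hy i
  simp [hx₀, hfy]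
end

section
/- Let X be a normed linear space and E a closed proper affine subset of X not containing 0. Then there exists a closed hyperplane H containing E with inf_{h∈H}‖h‖ = inf_{e∈E}‖e‖. -/
/-!
Let `d > 0` be the distance from `0` to `E = e + V`. Hahn–Banach separates the open ball of
radius `d` from the convex set `E` by a functional `f` with `f < u` on the ball and `u ≤ f` on `E`.
Being bounded below on the affine set `E`, `f` is constant on it, so `E` lies in the hyperplane
`H = f⁻¹{f e}`, which still misses the ball; hence `d ≤ dist(0, H) ≤ dist(0, E) = d`.
-/

open Metric Set

theorem sInf_norm_image_eq_infDist_zero {X : Type*} [SeminormedAddCommGroup X] (s : Set X) :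
    sInf (norm '' s) = infDist 0 s := by
  simp [infDist_eq_iInf, sInf_image']

theorem LinearMap.apply_eq_zero_of_bddBelow_image_submodule {𝕜 M : Type*} [Field 𝕜]
    [LinearOrder 𝕜] [IsStrictOrderedRing 𝕜] [AddCommGroup M] [Module 𝕜 M]
    {f : M →ₗ[𝕜] 𝕜} {V : Submodule 𝕜 M} (hf : BddBelow (f '' V)) {v : M} (hv : v ∈ V) :
    f v = 0 := by
  obtain ⟨b, hb⟩ := hf
  by_contra hfv
  have hle : b ≤ f (((b - 1) / f v) • v) := hb ⟨_, V.smul_mem _ hv, rfl⟩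
  rw [map_smul, smul_eq_mul, div_mul_cancel₀ _ hfv] at hle
  linarith

section AffineSet

variable {M : Type*} [AddCommGroup M] {E : Set M} {e : M}

theorem mem_iff_sub_mem_of_image_sub_eq {V : Set M} (hV : (fun z => z - e) '' E = V) (x : M) :
    x ∈ E ↔ x - e ∈ V := by
  rw [← hV, sub_left_injective.mem_set_image]

theorem convex_of_mem_iff_sub_mem {𝕜 : Type*} [Semiring 𝕜] [PartialOrder 𝕜] [Module 𝕜 M]
    {V : Submodule 𝕜 M} (hE : ∀ x, x ∈ E ↔ x - e ∈ V) : Convex 𝕜 E := by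
  have hpre : E = (fun x => -e + x) ⁻¹' V := by
    ext x
    rw [hE, mem_preimage, neg_add_eq_sub]
    rfl
  exact hpre ▸ V.convex.translate_preimage_right (-e)

variable {𝕜 : Type*} [Field 𝕜] [LinearOrder 𝕜] [IsStrictOrderedRing 𝕜] [Module 𝕜 M]
  {V : Submodule 𝕜 M}

theorem LinearMap.apply_eq_of_mem_iff_sub_mem {f : M →ₗ[𝕜] 𝕜} {u : 𝕜}
    (hE : ∀ x, x ∈ E ↔ x - e ∈ V) (hf : ∀ x ∈ E, u ≤ f x) {x : M} (hx : x ∈ E) :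
    f x = f e := by
  have hbdd : BddBelow (f '' V) := by
    refine ⟨u - f e, ?_⟩
    rintro _ ⟨v, hv, rfl⟩
    have := hf (e + v) ((hE _).2 (by simpa using hv))
    rw [map_add] at this
    linarith
  have := f.apply_eq_zero_of_bddBelow_image_submodule hbdd ((hE x).1 hx)
  rwa [map_sub, sub_eq_zero] at this

end AffineSet

/-- A closed proper affine set not containing zero is contained in a closed hyperplane
with the same distance to the origin. -/
theorem affine_subset_hyperplane_same_dist {X : Type*} [NormedAddCommGroup X]
    [NormedSpace ℝ X]
    (E : Set X) (hne : E.Nonempty) (hclosed : IsClosed E)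
    (haff : ∀ e ∈ E, ∃ V : Submodule ℝ X, V ≠ ⊤ ∧ ((fun z => z - e) '' E) = (V : Set X))
    (h0 : (0 : X) ∉ E) :
    ∃ (f : X →L[ℝ] ℝ) (c : ℝ), f ≠ 0 ∧ E ⊆ f ⁻¹' {c} ∧
      sInf (norm '' (f ⁻¹' {c} : Set X)) = sInf (norm '' E) := by
  obtain ⟨e, he⟩ := hne
  obtain ⟨V, -, hV⟩ := haff e he
  have hE := mem_iff_sub_mem_of_image_sub_eq hV
  have hd : 0 < infDist 0 E := (hclosed.notMem_iff_infDist_pos ⟨e, he⟩).1 h0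
  obtain ⟨f, u, hball, hEu⟩ := geometric_hahn_banach_open (convex_ball 0 _) isOpen_ball
    (convex_of_mem_iff_sub_mem hE) disjoint_ball_infDist
  have hEH : E ⊆ f ⁻¹' {f e} := fun x hx =>
    (f : X →ₗ[ℝ] ℝ).apply_eq_of_mem_iff_sub_mem hE hEu hx
  have hu : 0 < u := by simpa using hball 0 (mem_ball_self hd)
  refine ⟨f, f e, ?_, hEH, ?_⟩
  · rintro rfl
    linarith [hEu e he, show (0 : X →L[ℝ] ℝ) e = 0 from rfl]
  rw [sInf_norm_image_eq_infDist_zero, sInf_norm_image_eq_infDist_zero]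
  refine le_antisymm (infDist_le_infDist_of_subset hEH ⟨e, he⟩)
    ((le_infDist ⟨e, hEH he⟩).2 fun y hy => le_of_not_gt fun hy0 => ?_)
  have hfy : f y = f e := hy
  linarith [hball y (mem_ball_comm.1 hy0), hEu e he]
end

section
/- A Banach space X is not reflexive if and only if there exist θ ∈ (0,1) and a sequence (x_i) in the closed unit ball of X such that for every n, the distance between the convex hull of {x₁,…,xₙ} and the convex hull of {x_{n+1}, x_{n+2},…} is at least θ. -/
/-!
If `X` is not reflexive, a normalised element `F` of `X**` lies at some distance `δ > 0` from
`J X`, `J` being the canonical embedding. Helly's theorem, applied alternately in `X*` and in `X`,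
then builds inductively `x_n` in the unit ball of `X` and `f_n` in the unit ball of `X*` with
`f_n x_m = 0` for `m < n` and `f_m x_n = θ` for `m ≤ n`, where `0 < θ < δ`; the functional
`f_{n+1}` separates the first `n + 1` points from the tail by `θ`.

Conversely, if `X` is reflexive, Banach–Alaoglu in `X** = J X` gives a weak cluster point `b` of
the sequence. By Hahn–Banach, `b` lies in the closed convex hull of every tail, and approximating
`b` by a finite convex combination puts `conv {x_0, …, x_n}` and `conv {x_{n+1}, …}` at distance
less than `θ` for some `n`.
-/

open Metric Set Filter Topology NormedSpace

theorem Module.Dual.exists_forall_apply_eq_of_forall_sum_smul_eq_zero {K V ι : Type*} [Field K]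
    [AddCommGroup V] [Module K V] [Fintype ι] (f : ι → Module.Dual K V) (c : ι → K)
    (h : ∀ a : ι → K, ∑ i, a i • f i = 0 → ∑ i, a i * c i = 0) :
    ∃ x, ∀ i, f i x = c i := by
  classical
  suffices c ∈ LinearMap.range (LinearMap.pi f) from
    let ⟨x, hx⟩ := this; ⟨x, fun i => congrFun hx i⟩
  rw [← Subspace.forall_mem_dualAnnihilator_apply_eq_zero_iff]
  intro φ hφ
  have hφf : ∀ y, φ (fun i => f i y) = 0 := fun y =>
    (Submodule.mem_dualAnnihilator φ).1 hφ _ ⟨y, rfl⟩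
  set a : ι → K := fun i => φ fun j => if i = j then 1 else 0
  have hφa : ∀ v : ι → K, φ v = ∑ i, a i * v i := fun v => by
    rw [LinearMap.pi_apply_eq_sum_univ φ v]
    simp only [smul_eq_mul, mul_comm, a]
  have hsum : ∑ i, a i • f i = 0 := by
    ext y
    simpa [hφa] using hφf y
  rw [hφa]
  exact h a hsum

section

variable {E : Type*} [NormedAddCommGroup E] [NormedSpace ℝ E]

theorem Submodule.exists_dual_norm_le_one_apply_eq_infDist (S : Submodule ℝ E) (x : E) :
    ∃ g : StrongDual ℝ E, ‖g‖ ≤ 1 ∧ (∀ y ∈ S, g y = 0) ∧ g x = infDist x S := by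
  obtain ⟨g, hg, hgx⟩ := exists_dual_vector'' ℝ (S.mkQ x)
  refine ⟨g.comp S.mkQL, ?_, fun y hy => ?_, ?_⟩
  · refine ContinuousLinearMap.opNorm_le_bound _ zero_le_one fun y => ?_
    calc ‖g (S.mkQ y)‖ ≤ ‖g‖ * ‖S.mkQ y‖ := g.le_opNorm _
      _ ≤ 1 * ‖y‖ := by gcongr; exact Submodule.Quotient.norm_mk_le S y
  · simp [(Submodule.Quotient.mk_eq_zero S).2 hy]
  · exact hgx.trans (QuotientAddGroup.norm_mk (S := S.toAddSubgroup) x)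

/-- Helly's theorem. -/
theorem exists_norm_lt_forall_apply_eq {ι : Type*} [Fintype ι] (f : ι → StrongDual ℝ E)
    (c : ι → ℝ) {M : ℝ} (hM : 0 ≤ M) (h : ∀ a : ι → ℝ, |∑ i, a i * c i| ≤ M * ‖∑ i, a i • f i‖)
    {ε : ℝ} (hε : 0 < ε) : ∃ x : E, ‖x‖ < M + ε ∧ ∀ i, f i x = c i := by
  -- Solve the system exactly, then correct the solution by an element of the common kernel;
  -- the distance to that kernel is computed by a functional, which is a combination of the `f i`.
  obtain ⟨x₀, hx₀⟩ : ∃ x₀ : E, ∀ i, f i x₀ = c i :=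
    Module.Dual.exists_forall_apply_eq_of_forall_sum_smul_eq_zero
      (fun i => (f i : Module.Dual ℝ E)) c fun a ha => by
        have h0 : ∑ i, a i • f i = 0 := by ext y; simpa using LinearMap.congr_fun ha y
        simpa [h0] using h a
  set S := ⨅ i, LinearMap.ker (f i : E →ₗ[ℝ] ℝ)
  obtain ⟨g, hg, hgS, hgx⟩ := S.exists_dual_norm_le_one_apply_eq_infDist x₀
  obtain ⟨a, rfl⟩ : ∃ a : ι → ℝ, ∑ i, a i • f i = g := by
    have hspan := mem_span_of_iInf_ker_le_ker (L := fun i => (f i : E →ₗ[ℝ] ℝ)) (K := g) hgS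
    obtain ⟨a, ha⟩ := (Submodule.mem_span_range_iff_exists_fun ℝ).1 hspan
    exact ⟨a, by ext y; simpa using LinearMap.congr_fun ha y⟩
  have hdist : infDist x₀ S ≤ M :=
    calc infDist x₀ S = ∑ i, a i * c i := by simp [← hgx, hx₀]
      _ ≤ |∑ i, a i * c i| := le_abs_self _
      _ ≤ M * ‖∑ i, a i • f i‖ := h a
      _ ≤ M := mul_le_of_le_one_right hM hg
  obtain ⟨y, hyS, hy⟩ :=
    (infDist_lt_iff ⟨0, S.zero_mem⟩).1 (hdist.trans_lt (lt_add_of_pos_right M hε))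
  refine ⟨x₀ - y, by rwa [← dist_eq_norm], fun i => ?_⟩
  have hy0 : f i y = 0 := (Submodule.mem_iInf _).1 hyS i
  simp [hx₀, hy0]

theorem exists_norm_lt_one_forall_le_norm_sub_inclusionInDoubleDual [CompleteSpace E]
    (hJ : ¬ Function.Surjective (inclusionInDoubleDual ℝ E)) :
    ∃ F : StrongDual ℝ (StrongDual ℝ E), ‖F‖ < 1 ∧
      ∃ δ > 0, ∀ y, δ ≤ ‖F - inclusionInDoubleDual ℝ E y‖ := by
  set J := inclusionInDoubleDual ℝ E
  obtain ⟨F₀, hF₀⟩ : ∃ F₀, F₀ ∉ range J := by simpa [Function.Surjective] using hJ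
  have hclosed : IsClosed (range J) :=
    let hJi := (inclusionInDoubleDualLi ℝ (E := E)).isometry
    (hJi.antilipschitz.isComplete_range hJi.uniformContinuous).isClosed
  have hd : 0 < infDist F₀ (range J) :=
    (hclosed.notMem_iff_infDist_pos (range_nonempty J)).1 hF₀
  set c := (‖F₀‖ + 1)⁻¹
  have hc : 0 < c := by positivity
  refine ⟨c • F₀, ?_, c * infDist F₀ (range J), by positivity, fun y => ?_⟩
  -- Instance search does not find `NormSMulClass` on the bidual, hence the explicit instance.
  · rw [NormedSpace.toNormSMulClass.norm_smul c F₀, Real.norm_of_nonneg hc.le,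
      inv_mul_lt_one₀ (by positivity)]
    linarith
  have hscale : c • F₀ - J y = c • (F₀ - J (c⁻¹ • y)) := by
    ext f
    simp [J, dual_def, mul_sub, hc.ne']
  rw [hscale, NormedSpace.toNormSMulClass.norm_smul c (F₀ - J (c⁻¹ • y)),
    Real.norm_of_nonneg hc.le]
  gcongr
  exact (infDist_le_dist_of_mem (mem_range_self _)).trans_eq (dist_eq_norm F₀ (J (c⁻¹ • y)))

theorem exists_dual_apply_eq_zero_of_forall_le_norm_sub_inclusionInDoubleDual {ι : Type*}
    [Fintype ι] (F : StrongDual ℝ (StrongDual ℝ E)) {δ : ℝ} (hδ : 0 < δ)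
    (hF : ∀ y, δ ≤ ‖F - inclusionInDoubleDual ℝ E y‖) (θ : ℝ) (v : ι → E) {ε : ℝ} (hε : 0 < ε) :
    ∃ f : StrongDual ℝ E, ‖f‖ < |θ| / δ + ε ∧ F f = θ ∧ ∀ i, f (v i) = 0 := by
  set J := inclusionInDoubleDual ℝ E
  have hbound : ∀ a : Option ι → ℝ, |∑ o, a o * o.elim θ (fun _ => 0)| ≤
      |θ| / δ * ‖∑ o, a o • o.elim F (fun i => J (v i))‖ := by
    intro a
    simp only [Fintype.sum_option, Option.elim_none, Option.elim_some, mul_zero,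
      Finset.sum_const_zero, add_zero]
    rcases eq_or_ne (a none) 0 with h0 | h0
    · simp only [h0, zero_mul, abs_zero]
      positivity
    set w : E := -(a none)⁻¹ • ∑ i, a (some i) • v i
    have hw : a none • F + ∑ i, a (some i) • J (v i) = a none • (F - J w) := by
      ext f
      simp [w, J, dual_def, h0]
    rw [hw, NormedSpace.toNormSMulClass.norm_smul (a none) (F - J w), abs_mul,
      Real.norm_eq_abs]
    calc |a none| * |θ| = |θ| / δ * (|a none| * δ) := by field_simp
      _ ≤ |θ| / δ * (|a none| * ‖F - J w‖) := by gcongr; exact hF w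
  obtain ⟨f, hf, hfeq⟩ := exists_norm_lt_forall_apply_eq _ _ (by positivity) hbound hε
  exact ⟨f, hf, hfeq none, fun i => by simpa [J, dual_def] using hfeq (some i)⟩

theorem exists_forall_apply_eq_of_bidual_apply_eq {ι : Type*} [Fintype ι]
    (F : StrongDual ℝ (StrongDual ℝ E)) {θ : ℝ} (g : ι → StrongDual ℝ E) (hg : ∀ i, F (g i) = θ)
    {ε : ℝ} (hε : 0 < ε) : ∃ x : E, ‖x‖ < ‖F‖ + ε ∧ ∀ i, g i x = θ :=
  exists_norm_lt_forall_apply_eq g (fun _ => θ) (norm_nonneg F) (fun a =>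
    calc |∑ i, a i * θ| = |F (∑ i, a i • g i)| := by simp [map_sum, hg]
      _ ≤ ‖F‖ * ‖∑ i, a i • g i‖ := F.le_opNorm _) hε

theorem exists_pair_extending_of_forall_le_norm_sub_inclusionInDoubleDual
    (F : StrongDual ℝ (StrongDual ℝ E)) {θ δ : ℝ} (hF : ‖F‖ < 1) (hθδ : |θ| < δ)
    (hFJ : ∀ y, δ ≤ ‖F - inclusionInDoubleDual ℝ E y‖) (s : Finset (E × StrongDual ℝ E))
    (hs : ∀ p ∈ s, F p.2 = θ) :
    ∃ q : E × StrongDual ℝ E, (‖q.1‖ ≤ 1 ∧ ‖q.2‖ ≤ 1 ∧ F q.2 = θ ∧ q.2 q.1 = θ) ∧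
      ∀ p ∈ s, q.2 p.1 = 0 ∧ p.2 q.1 = θ := by
  have hδ : 0 < δ := (abs_nonneg θ).trans_lt hθδ
  obtain ⟨f, hf, hFf, hfs⟩ :=
    exists_dual_apply_eq_zero_of_forall_le_norm_sub_inclusionInDoubleDual F hδ hFJ θ
      (fun p : s => p.1.1) (ε := 1 - |θ| / δ) (by rwa [sub_pos, div_lt_one hδ])
  obtain ⟨x, hx, hfx⟩ := exists_forall_apply_eq_of_bidual_apply_eq F
    (fun o : Option s => o.elim f fun p => p.1.2) (by rintro (_ | p); exacts [hFf, hs _ p.2])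
    (ε := 1 - ‖F‖) (by linarith)
  exact ⟨(x, f), ⟨by linarith, by linarith, hFf, hfx none⟩,
    fun p hp => ⟨hfs ⟨p, hp⟩, hfx (some ⟨p, hp⟩)⟩⟩

theorem exists_biorthogonal_seq_of_forall_le_norm_sub_inclusionInDoubleDual
    (F : StrongDual ℝ (StrongDual ℝ E)) {θ δ : ℝ} (hF : ‖F‖ < 1) (hθδ : |θ| < δ)
    (hFJ : ∀ y, δ ≤ ‖F - inclusionInDoubleDual ℝ E y‖) :
    ∃ (x : ℕ → E) (f : ℕ → StrongDual ℝ E), (∀ n, ‖x n‖ ≤ 1 ∧ ‖f n‖ ≤ 1 ∧ f n (x n) = θ) ∧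
      ∀ m n, m < n → f n (x m) = 0 ∧ f m (x n) = θ := by
  obtain ⟨q, hq, hqq⟩ := exists_seq_of_forall_finset_exists
    (fun q : E × StrongDual ℝ E => ‖q.1‖ ≤ 1 ∧ ‖q.2‖ ≤ 1 ∧ F q.2 = θ ∧ q.2 q.1 = θ)
    (fun p q => q.2 p.1 = 0 ∧ p.2 q.1 = θ) fun s hs =>
      exists_pair_extending_of_forall_le_norm_sub_inclusionInDoubleDual F hF hθδ hFJ s
        fun p hp => (hs p hp).2.2.1
  exact ⟨fun n => (q n).1, fun n => (q n).2,
    fun n => ⟨(hq n).1, (hq n).2.1, (hq n).2.2.2⟩, hqq⟩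

theorem le_norm_sub_of_mem_convexHull {φ : StrongDual ℝ E} (hφ : ‖φ‖ ≤ 1) {A B : Set E}
    {α β : ℝ} (hA : ∀ y ∈ A, φ y ≤ α) (hB : ∀ y ∈ B, β ≤ φ y) {a b : E} (ha : a ∈ convexHull ℝ A)
    (hb : b ∈ convexHull ℝ B) : β - α ≤ ‖a - b‖ := by
  have hαa : φ a ≤ α := convexHull_min hA (convex_halfSpace_le φ.isLinear α) ha
  have hβb : β ≤ φ b := convexHull_min hB (convex_halfSpace_ge φ.isLinear β) hb
  calc β - α ≤ φ (b - a) := by rw [map_sub]; linarith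
    _ ≤ ‖φ‖ * ‖b - a‖ := (le_abs_self _).trans (φ.le_opNorm _)
    _ ≤ ‖a - b‖ := by rw [norm_sub_rev]; exact mul_le_of_le_one_left (norm_nonneg _) hφ

theorem le_norm_sub_of_mem_convexHull_of_biorthogonal {x : ℕ → E} {f : ℕ → StrongDual ℝ E}
    {θ : ℝ} (hf : ∀ n, ‖f n‖ ≤ 1) (hdiag : ∀ n, f n (x n) = θ)
    (hlt : ∀ m n, m < n → f n (x m) = 0 ∧ f m (x n) = θ) (n : ℕ) {a b : E}
    (ha : a ∈ convexHull ℝ (x '' {i | i ≤ n})) (hb : b ∈ convexHull ℝ (x '' {i | n < i})) :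
    θ ≤ ‖a - b‖ := by
  have hA : ∀ y ∈ x '' {i | i ≤ n}, f (n + 1) y ≤ 0 := by
    rintro _ ⟨i, hi, rfl⟩
    exact ((hlt i (n + 1) (Nat.lt_succ_of_le hi)).1).le
  have hB : ∀ y ∈ x '' {i | n < i}, θ ≤ f (n + 1) y := by
    rintro _ ⟨j, hj, rfl⟩
    rcases (Nat.succ_le_of_lt hj).eq_or_lt with rfl | hj'
    exacts [(hdiag _).ge, (hlt _ _ hj').2.ge]
  simpa using le_norm_sub_of_mem_convexHull (hf (n + 1)) hA hB ha hb

theorem exists_forall_mapClusterPt_apply (hJ : Function.Surjective (inclusionInDoubleDual ℝ E))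
    {ι : Type*} {l : Filter ι} [l.NeBot] {x : ι → E} {R : ℝ} (hx : ∀ i, ‖x i‖ ≤ R) :
    ∃ b : E, ∀ f : StrongDual ℝ E, MapClusterPt (f b) l fun i => f (x i) := by
  obtain ⟨F, -, hF⟩ := (WeakDual.isCompact_closedBall 0 R).exists_mapClusterPt
    (f := l) (u := fun i => StrongDual.toWeakDual (inclusionInDoubleDual ℝ E (x i)))
    (tendsto_principal.2 <| .of_forall fun i => by
      simpa using (double_dual_bound ℝ E (x i)).trans (hx i))
  obtain ⟨b, hb⟩ := hJ (WeakDual.toStrongDual F)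
  refine ⟨b, fun f => ?_⟩
  have hFf : F f = f b := by rw [← dual_def ℝ E b f, hb]; rfl
  exact hFf ▸ hF.continuousAt_comp (WeakDual.eval_continuous f).continuousAt

theorem mem_of_forall_mapClusterPt_apply {ι : Type*} {l : Filter ι} {x : ι → E} {b : E}
    (hb : ∀ f : StrongDual ℝ E, MapClusterPt (f b) l fun i => f (x i)) {C : Set E}
    (hC : Convex ℝ C) (hCc : IsClosed C) (hxC : ∀ᶠ i in l, x i ∈ C) : b ∈ C := by
  by_contra hbC
  obtain ⟨f, u, hfC, hfb⟩ := geometric_hahn_banach_closed_point hC hCc hbC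
  have hfbu : f b ≤ u :=
    isClosed_Iic.mem_of_mapClusterPt (hb f) (hxC.mono fun i hi => (hfC _ hi).le)
  linarith

theorem convexHull_range_subset_iUnion_convexHull_image (x : ℕ → E) :
    convexHull ℝ (range x) ⊆ ⋃ n, convexHull ℝ (x '' {i | i ≤ n}) := by
  have hmono : Monotone fun n => convexHull ℝ (x '' {i | i ≤ n}) := fun m n hmn =>
    convexHull_mono (image_mono fun i hi => le_trans hi hmn)
  refine convexHull_min ?_ (hmono.directed_le.convex_iUnion fun n => convex_convexHull ℝ _)
  rintro _ ⟨i, rfl⟩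
  exact mem_iUnion.2 ⟨i, subset_convexHull ℝ _ ⟨i, le_refl i, rfl⟩⟩

theorem exists_norm_sub_lt_of_forall_mem_closure_convexHull {x : ℕ → E} {b : E}
    (hb : ∀ n, b ∈ closure (convexHull ℝ (x '' {i | n < i}))) {ε : ℝ} (hε : 0 < ε) :
    ∃ n, ∃ a ∈ convexHull ℝ (x '' {i | i ≤ n}), ∃ b' ∈ convexHull ℝ (x '' {i | n < i}),
      ‖a - b'‖ < ε := by
  obtain ⟨a, ha, hba⟩ := mem_closure_iff.1
    (closure_mono (convexHull_mono (image_subset_range x _)) (hb 0)) (ε / 2) (half_pos hε)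
  obtain ⟨n, han⟩ := mem_iUnion.1 (convexHull_range_subset_iUnion_convexHull_image x ha)
  obtain ⟨b', hb', hbb'⟩ := mem_closure_iff.1 (hb n) (ε / 2) (half_pos hε)
  refine ⟨n, a, han, b', hb', ?_⟩
  calc ‖a - b'‖ = dist a b' := (dist_eq_norm a b').symm
    _ ≤ dist b a + dist b b' := dist_triangle_left a b' b
    _ < ε / 2 + ε / 2 := add_lt_add hba hbb'
    _ = ε := add_halves ε

end

/-- A Banach space is non-reflexive iff there is `θ ∈ (0,1)` and a sequence in the closed
unit ball whose initial and tail convex hulls stay `θ`-separated. -/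
theorem nonreflexive_iff_separated_convex_hulls {X : Type*} [NormedAddCommGroup X]
    [NormedSpace ℝ X] [CompleteSpace X] :
    ¬ Function.Surjective (NormedSpace.inclusionInDoubleDual ℝ X) ↔
    ∃ θ ∈ Set.Ioo (0:ℝ) 1, ∃ x : ℕ → X, (∀ i, ‖x i‖ ≤ 1) ∧
      ∀ n : ℕ, ∀ a ∈ convexHull ℝ (x '' {i | i ≤ n}),
        ∀ b ∈ convexHull ℝ (x '' {i | n < i}), θ ≤ ‖a - b‖ := by
  constructor
  · intro hJ
    obtain ⟨F, hF, δ, hδ, hFJ⟩ := exists_norm_lt_one_forall_le_norm_sub_inclusionInDoubleDual hJ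
    obtain ⟨θ, hθ, hθδ1⟩ := exists_between (lt_min hδ one_pos)
    have hθδ : |θ| < δ := by rw [abs_of_pos hθ]; exact hθδ1.trans_le (min_le_left _ _)
    obtain ⟨x, f, hxf, hlt⟩ :=
      exists_biorthogonal_seq_of_forall_le_norm_sub_inclusionInDoubleDual F hF hθδ hFJ
    exact ⟨θ, ⟨hθ, hθδ1.trans_le (min_le_right _ _)⟩, x, fun n => (hxf n).1, fun n a ha b hb =>
      le_norm_sub_of_mem_convexHull_of_biorthogonal (fun n => (hxf n).2.1)
        (fun n => (hxf n).2.2) hlt n ha hb⟩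
  · rintro ⟨θ, ⟨hθ, -⟩, x, hx, hsep⟩ hJ
    obtain ⟨b, hb⟩ := exists_forall_mapClusterPt_apply hJ (l := atTop) hx
    have hbC : ∀ n, b ∈ closure (convexHull ℝ (x '' {i | n < i})) := fun n =>
      mem_of_forall_mapClusterPt_apply hb (convex_convexHull ℝ _).closure isClosed_closure
        ((eventually_gt_atTop n).mono fun i hi =>
          subset_closure (subset_convexHull ℝ _ ⟨i, hi, rfl⟩))
    obtain ⟨n, a, ha, b', hb', hab⟩ := exists_norm_sub_lt_of_forall_mem_closure_convexHull hbC hθ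
    exact (hsep n a ha b' hb').not_gt hab
end

section
/- Let X be a non-reflexive separable Banach space and θ ∈ (0,1). Then there exists a sequence (f_n) in the closed unit ball of X* converging pointwise to 0 on X such that ‖f‖ ≥ θ for every f in the convex hull of {f_n : n ∈ ℕ}. -/
/-!
Since `X` is complete, its image in `X**` is a closed proper subspace, so Riesz's lemma gives
`F₀ ∈ X**` of norm one at distance more than `θ` from it. For a finite-dimensional `Y ⊆ X`,
Hahn–Banach extends the restriction of `F₀` to the annihilator `Y^⊥` to some `G` of the same norm;
`F₀ - G` vanishes on `Y^⊥`, so it is evaluation at a point of `Y`, whence `‖F₀|Y^⊥‖ > θ`. This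
gives `f` in the dual unit ball, vanishing on `Y`, with `F₀ f > θ`. Taking `Y` spanned by the first
`n` terms of a dense sequence yields `fₙ` tending to `0` pointwise, and the half-space
`{F₀ ≥ θ}` contains their convex hull, on which `‖g‖ ≥ F₀ g ≥ θ`.
-/

open Filter Topology NormedSpace

theorem ContinuousLinearMap.tendsto_apply_zero_of_dense {𝕜 E F ι : Type*}
    [NontriviallyNormedField 𝕜] [SeminormedAddCommGroup E] [NormedSpace 𝕜 E]
    [SeminormedAddCommGroup F] [NormedSpace 𝕜 F] {l : Filter ι} (f : ι → E →L[𝕜] F)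
    (hf : ∃ C, ∀ i, ‖f i‖ ≤ C) {s : Set E} (hs : Dense s)
    (h : ∀ y ∈ s, Tendsto (f · y) l (𝓝 0)) (x : E) :
    Tendsto (f · x) l (𝓝 0) := by
  have hequi : Equicontinuous ((↑) ∘ f) := ((NormedSpace.equicontinuous_TFAE f).out 5 1).mp hf
  have hclosed := hequi.isClosed_setOfPred_tendsto (l := l) (f := 0) continuous_const
  exact hclosed.closure_subset_iff.mpr h (hs x)

theorem exists_norm_le_one_forall_eq_zero_lt_apply {E ι : Type*} [NormedAddCommGroup E]
    [NormedSpace ℝ E] [Fintype ι] (L : ι → StrongDual ℝ E) {φ : StrongDual ℝ E} {θ : ℝ}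
    (hφ : ∀ c : ι → ℝ, θ < ‖φ - ∑ i, c i • L i‖) :
    ∃ x : E, ‖x‖ ≤ 1 ∧ (∀ i, L i x = 0) ∧ θ < φ x := by
  let S : Submodule ℝ E := ⨅ i, LinearMap.ker (L i : E →ₗ[ℝ] ℝ)
  obtain ⟨G, hGφ, hGnorm⟩ := exists_extension_norm_eq S (φ.comp S.subtypeL)
  have hspan : ((φ - G : StrongDual ℝ E) : E →ₗ[ℝ] ℝ) ∈
      Submodule.span ℝ (Set.range fun i => (L i : E →ₗ[ℝ] ℝ)) :=
    mem_span_of_iInf_ker_le_ker fun x hx => by simp [hGφ ⟨x, hx⟩]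
  obtain ⟨c, hc⟩ := (Submodule.mem_span_range_iff_exists_fun ℝ).mp hspan
  have hG : G = φ - ∑ i, c i • L i := by
    ext x
    have hcx := congr($hc x)
    simp only [LinearMap.coe_sum, LinearMap.coe_smul, ContinuousLinearMap.coe_coe,
      Finset.sum_apply, Pi.smul_apply, smul_eq_mul, ContinuousLinearMap.toLinearMap_sub,
      LinearMap.sub_apply, sub_apply, sum_apply, smul_apply] at hcx ⊢
    linarith
  have hθ : θ < ‖φ.comp S.subtypeL‖ := hGnorm ▸ hG ▸ hφ c
  obtain ⟨⟨x, hxS⟩, hx1, hθx⟩ := ContinuousLinearMap.exists_lt_apply_of_lt_opNorm _ hθ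
  have hxL : ∀ i, L i x = 0 := by simpa [S, Submodule.mem_iInf] using hxS
  rcases lt_abs.mp hθx with h | h
  · exact ⟨x, hx1.le, hxL, h⟩
  · exact ⟨-x, by simpa using hx1.le, by simpa using hxL, by simpa using h⟩

theorem LinearIsometry.exists_norm_eq_one_forall_lt_norm_sub {E F : Type*}
    [SeminormedAddCommGroup E] [NormedSpace ℝ E] [CompleteSpace E] [NormedAddCommGroup F]
    [NormedSpace ℝ F] (e : E →ₗᵢ[ℝ] F) (he : ¬ Function.Surjective e) {θ : ℝ} (hθ : θ < 1) :
    ∃ y : F, ‖y‖ = 1 ∧ ∀ x, θ < ‖y - e x‖ := by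
  have hclosed : IsClosed (LinearMap.range e.toLinearMap : Set F) := by
    rw [LinearMap.coe_range]
    exact e.isometry.isUniformInducing.isComplete_range.isClosed
  have hproper : ∃ y, y ∉ LinearMap.range e.toLinearMap := by
    simpa [Function.Surjective] using he
  obtain ⟨y, -, hy1, hyfar⟩ := riesz_lemma_of_lt_one hclosed hproper (r := (θ + 1) / 2)
    (by linarith)
  exact ⟨y, hy1, fun x => by linarith [hyfar (e x) ⟨x, rfl⟩]⟩

/- The module structure that unification reads off `StrongDual ℝ (StrongDual ℝ X)` is not
reducibly the one underlying its `NormedSpace` instance, so the two corollaries below pass that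
instance explicitly. -/

theorem NormedSpace.exists_norm_eq_one_forall_lt_norm_sub_inclusionInDoubleDual {X : Type*}
    [NormedAddCommGroup X] [NormedSpace ℝ X] [CompleteSpace X]
    (hnr : ¬ Function.Surjective (inclusionInDoubleDual ℝ X)) {θ : ℝ} (hθ : θ < 1) :
    ∃ F₀ : StrongDual ℝ (StrongDual ℝ X), ‖F₀‖ = 1 ∧
      ∀ x, θ < ‖F₀ - inclusionInDoubleDual ℝ X x‖ := by
  obtain ⟨F₀, hF₀norm, hF₀far⟩ :=
    @LinearIsometry.exists_norm_eq_one_forall_lt_norm_sub X (StrongDual ℝ (StrongDual ℝ X))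
      _ _ _ _ ContinuousLinearMap.toNormedSpace (inclusionInDoubleDualLi ℝ) hnr θ hθ
  exact ⟨F₀, hF₀norm, hF₀far⟩

theorem NormedSpace.exists_dual_norm_le_one_forall_eq_zero_lt_apply {X ι : Type*}
    [NormedAddCommGroup X] [NormedSpace ℝ X] [Fintype ι] (v : ι → X)
    {F₀ : StrongDual ℝ (StrongDual ℝ X)} {θ : ℝ}
    (hF₀ : ∀ x, θ < ‖F₀ - inclusionInDoubleDual ℝ X x‖) :
    ∃ f : StrongDual ℝ X, ‖f‖ ≤ 1 ∧ (∀ i, f (v i) = 0) ∧ θ < F₀ f :=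
  @exists_norm_le_one_forall_eq_zero_lt_apply (StrongDual ℝ X) ι _
    ContinuousLinearMap.toNormedSpace _ (fun i => inclusionInDoubleDual ℝ X (v i)) F₀ θ
    fun c => by simpa [map_sum, map_smul] using hF₀ (∑ i, c i • v i)

theorem le_norm_of_mem_convexHull {E : Type*} [SeminormedAddCommGroup E] [NormedSpace ℝ E]
    {φ : StrongDual ℝ E} (hφ : ‖φ‖ ≤ 1) {s : Set E} {θ : ℝ} (hs : ∀ x ∈ s, θ ≤ φ x)
    {g : E} (hg : g ∈ convexHull ℝ s) : θ ≤ ‖g‖ :=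
  calc θ ≤ φ g := convexHull_min hs (convex_halfSpace_ge φ.isLinear θ) hg
    _ ≤ ‖φ g‖ := le_abs_self _
    _ ≤ ‖φ‖ * ‖g‖ := φ.le_opNorm g
    _ ≤ ‖g‖ := mul_le_of_le_one_left (norm_nonneg g) hφ

/-- In a non-reflexive separable Banach space, for each `θ ∈ (0,1)` there is a sequence in
the closed dual unit ball converging pointwise to `0` whose convex hull stays `θ`-away
from `0` in norm. -/
theorem nonreflexive_separable_dual_sequence {X : Type*} [NormedAddCommGroup X]
    [NormedSpace ℝ X] [CompleteSpace X] [TopologicalSpace.SeparableSpace X]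
    (hnr : ¬ Function.Surjective (NormedSpace.inclusionInDoubleDual ℝ X))
    (θ : ℝ) (hθ : θ ∈ Set.Ioo (0:ℝ) 1) :
    ∃ f : ℕ → (X →L[ℝ] ℝ), (∀ n, ‖f n‖ ≤ 1) ∧
      (∀ x : X, Tendsto (fun n => f n x) atTop (nhds 0)) ∧
      (∀ g ∈ convexHull ℝ (Set.range f), θ ≤ ‖g‖) := by
  obtain ⟨F₀, hF₀norm, hF₀far⟩ :=
    exists_norm_eq_one_forall_lt_norm_sub_inclusionInDoubleDual hnr hθ.2
  obtain ⟨u, hu⟩ := TopologicalSpace.exists_dense_seq X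
  choose f hf1 hfu hθf using fun n =>
    exists_dual_norm_le_one_forall_eq_zero_lt_apply (fun k : Fin (n + 1) => u k) hF₀far
  refine ⟨f, hf1, fun x => ?_, fun g hg => le_norm_of_mem_convexHull hF₀norm.le ?_ hg⟩
  · refine ContinuousLinearMap.tendsto_apply_zero_of_dense f ⟨1, hf1⟩ hu ?_ x
    rintro - ⟨k, rfl⟩
    refine tendsto_const_nhds.congr' (eventually_atTop.mpr ⟨k, fun n hn => ?_⟩)
    exact (hfu n ⟨k, Nat.lt_succ_of_le hn⟩).symm
  · rintro - ⟨n, rfl⟩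
    exact (hθf n).le
end

section
/- Let S be an infinite set and (f_n) a uniformly bounded sequence of real-valued functions on S. Then (f_n) has a subsequence that either converges pointwise on S, or is equivalent in the sup norm to the standard basis of ℓ¹ (Rosenthal's dichotomy). -/
/-!
For rationals `r < R` put `A k = {f k < r}` and `B k = {R < f k}`. Rosenthal's lemma says that
some subsequence of the pairs `(A k, B k)` either converges (no point lies in infinitely many
`A k` and infinitely many `B k`) or is Boolean independent. It follows from the Nash-Williams
theorem applied to the finite sets `t` along which the alternating intersection
`A t₀ ∩ B t₁ ∩ A t₂ ∩ ⋯` is empty; the Nash-Williams theorem itself is proved by the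
accept/reject combinatorics of Galvin and Prikry together with a fusion argument.

If some subsequence is independent for one pair `r < R`, comparing `∑ aₖ fₖ` at a point where
`fₖ > R` for `aₖ ≥ 0` and `fₖ < r` for `aₖ < 0` with a point where the roles are swapped gives
the lower `ℓ¹` estimate with constant `(R - r) / 2`. Otherwise a diagonal argument over all rational pairs
yields a subsequence along which no point has `liminf < r < R < limsup`, so it converges
pointwise.
-/

open Filter Set
open scoped Finset

namespace Rosenthal

def DenseBelow (P : Set ℕ → Prop) (M : Set ℕ) : Prop :=
  ∀ M' ⊆ M, M'.Infinite → ∃ N ⊆ M', N.Infinite ∧ P N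

theorem DenseBelow.exists {P : Set ℕ → Prop} {M : Set ℕ} (h : DenseBelow P M)
    (hM : M.Infinite) : ∃ N ⊆ M, N.Infinite ∧ P N :=
  h M subset_rfl hM

theorem DenseBelow.and {P Q : Set ℕ → Prop} {M : Set ℕ} (hP : DenseBelow P M)
    (hQ : DenseBelow Q M) (hP_anti : Antitone P) : DenseBelow (fun N => P N ∧ Q N) M := by
  intro M' hM' hM'_inf
  obtain ⟨N₁, hN₁, hN₁_inf, hPN₁⟩ := hP M' hM' hM'_inf
  obtain ⟨N₂, hN₂, hN₂_inf, hQN₂⟩ := hQ N₁ (hN₁.trans hM') hN₁_inf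
  exact ⟨N₂, hN₂.trans hN₁, hN₂_inf, hP_anti hN₂ hPN₁, hQN₂⟩

theorem DenseBelow.finset_forall {ι : Type*} {P : ι → Set ℕ → Prop} {M : Set ℕ}
    (I : Finset ι) (hP : ∀ i ∈ I, DenseBelow (P i) M) (hP_anti : ∀ i, Antitone (P i)) :
    DenseBelow (fun N => ∀ i ∈ I, P i N) M := by
  classical
  induction I using Finset.induction_on with
  | empty => exact fun M' _ hM' => ⟨M', subset_rfl, hM', by simp⟩
  | insert i I _ ih =>
    have hI_anti : Antitone fun N => ∀ j ∈ I, P j N :=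
      fun _ _ h hN j hj => hP_anti j h (hN j hj)
    have := (ih fun j hj => hP j (Finset.mem_insert_of_mem hj)).and
      (hP i (Finset.mem_insert_self i I)) hI_anti
    simpa only [Finset.forall_mem_insert, and_comm] using this

def above (N : Set ℕ) (s : Finset ℕ) : Set ℕ := {a ∈ N | ∀ b ∈ s, b < a}

theorem above_subset (N : Set ℕ) (s : Finset ℕ) : above N s ⊆ N := fun _ ha => ha.1

theorem above_mono {M N : Set ℕ} (h : N ⊆ M) (s : Finset ℕ) : above N s ⊆ above M s :=
  fun _ ha => ⟨h ha.1, ha.2⟩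

@[simp]
theorem above_empty (N : Set ℕ) : above N ∅ = N := by simp [above]

theorem finite_sdiff_above (N : Set ℕ) (s : Finset ℕ) : (N \ above N s).Finite :=
  (finite_Iic (s.sup id)).subset fun _ ha =>
    not_lt.1 fun hlt => ha.2 ⟨ha.1, fun _ hb => (Finset.le_sup (f := id) hb).trans_lt hlt⟩

theorem infinite_above {N : Set ℕ} (hN : N.Infinite) (s : Finset ℕ) : (above N s).Infinite := by
  simpa [sdiff_sdiff_cancel_left (above_subset N s)] using hN.sdiff (finite_sdiff_above N s)

section Fusion

variable {R : Finset ℕ → Set ℕ → Prop} {M : Set ℕ}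

theorem exists_fusion_sequence (hM : M.Infinite) (hR : ∀ s, DenseBelow (R s) M)
    (hR_anti : ∀ s, Antitone (R s)) :
    ∃ Ms : ℕ → Set ℕ, Antitone Ms ∧ (∀ k, (Ms k).Infinite) ∧ Ms 0 ⊆ M ∧ R ∅ (Ms 0) ∧
      ∀ k, Ms (k + 1) ⊆ Ioi (sInf (Ms k)) ∧
        ∀ s ⊆ Finset.range (sInf (Ms k) + 1), R s (Ms (k + 1)) := by
  let T := {P : Set ℕ // P ⊆ M ∧ P.Infinite}
  have step (P : T) : ∃ Q : T, Q.1 ⊆ above P.1 {sInf P.1} ∧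
      ∀ s ∈ (Finset.range (sInf P.1 + 1)).powerset, R s Q.1 := by
    obtain ⟨Q, hQ, hQ_inf, hRQ⟩ := DenseBelow.finset_forall _ (fun s _ => hR s) hR_anti
      (above P.1 {sInf P.1}) ((above_subset _ _).trans P.2.1) (infinite_above P.2.2 _)
    exact ⟨⟨Q, hQ.trans ((above_subset _ _).trans P.2.1), hQ_inf⟩, hQ, hRQ⟩
  choose next hnext_sub hnext_R using step
  obtain ⟨M₀, hM₀, hM₀_inf, hRM₀⟩ := (hR ∅).exists hM
  let Ms (k : ℕ) : T := next^[k] ⟨M₀, hM₀, hM₀_inf⟩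
  have hMs_succ (k : ℕ) : Ms (k + 1) = next (Ms k) := Function.iterate_succ_apply' ..
  refine ⟨fun k => (Ms k).1, antitone_nat_of_succ_le fun k => ?_, fun k => (Ms k).2.2, hM₀,
    hRM₀, fun k => ⟨fun a ha => ?_, fun s hs => ?_⟩⟩
  · show (Ms (k + 1)).1 ⊆ _
    rw [hMs_succ]
    exact (hnext_sub _).trans (above_subset _ _)
  · change a ∈ (Ms (k + 1)).1 at ha
    rw [hMs_succ] at ha
    exact (hnext_sub _ ha).2 _ (Finset.mem_singleton_self _)
  · show R s (Ms (k + 1)).1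
    rw [hMs_succ]
    exact hnext_R _ s (Finset.mem_powerset.2 hs)

theorem exists_fusion (hM : M.Infinite) (hR : ∀ s, DenseBelow (R s) M)
    (hR_anti : ∀ s, Antitone (R s)) :
    ∃ N ⊆ M, N.Infinite ∧ ∀ s : Finset ℕ, ↑s ⊆ N → R s (above N s) := by
  obtain ⟨Ms, hMs_anti, hMs_inf, hMs₀, hRMs₀, hMs_succ⟩ := exists_fusion_sequence hM hR hR_anti
  set n : ℕ → ℕ := fun k => sInf (Ms k)
  have hn_mem (k : ℕ) : n k ∈ Ms k := Nat.sInf_mem (hMs_inf k).nonempty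
  have hn_mono : StrictMono n := strictMono_nat_of_lt_succ fun k => (hMs_succ k).1 (hn_mem _)
  have hn_above {j k : ℕ} (h : n k < n j) : n j ∈ Ms (k + 1) :=
    hMs_anti (hn_mono.lt_iff_lt.1 h) (hn_mem j)
  refine ⟨range n, range_subset_iff.2 fun k => hMs₀ (hMs_anti k.zero_le (hn_mem k)),
    infinite_range_of_injective hn_mono.injective, fun s hs => ?_⟩
  rcases s.eq_empty_or_nonempty with rfl | hs_ne
  · rw [above_empty]
    exact hR_anti ∅ (range_subset_iff.2 fun k => hMs_anti k.zero_le (hn_mem k)) hRMs₀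
  obtain ⟨k, hk⟩ := hs (s.max'_mem hs_ne)
  have hs_le : s ⊆ Finset.range (n k + 1) := fun b hb =>
    Finset.mem_range_succ_iff.2 (hk ▸ s.le_max' b hb)
  refine hR_anti s ?_ ((hMs_succ k).2 s hs_le)
  rintro _ ⟨⟨j, rfl⟩, hj⟩
  exact hn_above (hk ▸ hj _ (s.max'_mem hs_ne))

theorem exists_forall_of_countable {ι : Type*} [Countable ι] {P : ι → Set ℕ → Prop}
    (hM : M.Infinite) (hP : ∀ i, DenseBelow (P i) M) (hP_anti : ∀ i, Antitone (P i))
    (hP_fin : ∀ i {N N'}, (N \ N').Finite → P i N' → P i N) :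
    ∃ N ⊆ M, N.Infinite ∧ ∀ i, P i N := by
  rcases isEmpty_or_nonempty ι with hι | hι
  · exact ⟨M, subset_rfl, hM, isEmptyElim⟩
  obtain ⟨q, hq⟩ := exists_surjective_nat ι
  obtain ⟨N, hNM, hN, hPN⟩ :=
    exists_fusion (R := fun s N => ∀ j ∈ Finset.range (s.sup id + 1), P (q j) N) hM
      (fun s => DenseBelow.finset_forall _ (fun j _ => hP (q j)) fun j => hP_anti _)
      fun s _ _ h hN j hj => hP_anti _ h (hN j hj)
  refine ⟨N, hNM, hN, fun i => ?_⟩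
  obtain ⟨j, rfl⟩ := hq i
  obtain ⟨n, hn, hjn⟩ := hN.exists_gt j
  exact hP_fin _ (finite_sdiff_above N {n})
    (hPN {n} (by simpa using hn) j (by simpa using hjn.le))

end Fusion

section NashWilliams

def IsInitialSegment (t : Finset ℕ) (P : Set ℕ) : Prop := ∃ c, (t : Set ℕ) = P ∩ Iio c

theorem isInitialSegment_empty (P : Set ℕ) : IsInitialSegment ∅ P := ⟨0, by simp⟩

theorem IsInitialSegment.insert_sInf {t : Finset ℕ} {P : Set ℕ} (hP : P.Nonempty)
    (ht : IsInitialSegment t (P \ {sInf P})) : IsInitialSegment (insert (sInf P) t) P := by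
  obtain ⟨c, hc⟩ := ht
  have hmin : ∀ x ∈ P, sInf P ≤ x := fun x hx => Nat.sInf_le hx
  refine ⟨max c (sInf P + 1), ?_⟩
  ext x
  simp only [Finset.coe_insert, hc, mem_insert_iff, mem_inter_iff, Set.mem_sdiff,
    mem_singleton_iff, mem_Iio, lt_max_iff]
  constructor
  · rintro (rfl | ⟨⟨hx, -⟩, hxc⟩)
    · exact ⟨Nat.sInf_mem hP, Or.inr (Nat.lt_succ_self _)⟩
    · exact ⟨hx, Or.inl hxc⟩
  · rintro ⟨hx, hxc⟩
    have := hmin x hx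
    by_cases hxP : x = sInf P
    · exact Or.inl hxP
    · exact Or.inr ⟨⟨hx, hxP⟩, by omega⟩

variable (Fam : Finset ℕ → Prop)

def Accepts (M : Set ℕ) (s : Finset ℕ) : Prop :=
  ∀ P ⊆ above M s, P.Infinite → ∃ t, IsInitialSegment t P ∧ Fam (s ∪ t)

def Rejects (M : Set ℕ) (s : Finset ℕ) : Prop := ∀ P ⊆ M, P.Infinite → ¬ Accepts Fam P s

def Decides (M : Set ℕ) (s : Finset ℕ) : Prop := Accepts Fam M s ∨ Rejects Fam M s

variable {Fam}

theorem accepts_anti (s : Finset ℕ) : Antitone (Accepts Fam · s) :=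
  fun _ _ hNM h P hP => h P (hP.trans (above_mono hNM s))

theorem rejects_anti (s : Finset ℕ) : Antitone (Rejects Fam · s) :=
  fun _ _ hNM h P hP => h P (hP.trans hNM)

theorem decides_anti (s : Finset ℕ) : Antitone (Decides Fam · s) :=
  fun _ _ hNM h => h.imp (accepts_anti s hNM) (rejects_anti s hNM)

theorem denseBelow_decides (s : Finset ℕ) (M : Set ℕ) : DenseBelow (Decides Fam · s) M := by
  intro M' _ hM'
  by_cases h : ∃ N ⊆ M', N.Infinite ∧ Accepts Fam N s
  · obtain ⟨N, hN, hN_inf, hacc⟩ := h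
    exact ⟨N, hN, hN_inf, Or.inl hacc⟩
  · push Not at h
    exact ⟨M', subset_rfl, hM', Or.inr h⟩

theorem accepts_of_fam {s : Finset ℕ} (hs : Fam s) (M : Set ℕ) : Accepts Fam M s :=
  fun P _ _ => ⟨∅, isInitialSegment_empty P, by simpa using hs⟩

theorem Rejects.not_fam {M : Set ℕ} {s : Finset ℕ} (h : Rejects Fam M s) (hM : M.Infinite) :
    ¬ Fam s :=
  fun hs => h M subset_rfl hM (accepts_of_fam hs M)

theorem Decides.of_above {M : Set ℕ} {s : Finset ℕ} (h : Decides Fam (above M s) s) :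
    Decides Fam M s := by
  refine h.imp (fun hacc P hP => hacc P fun a ha => ⟨hP ha, (hP ha).2⟩)
    fun hrej P hP hP_inf hacc => ?_
  exact hrej (above P s) (above_mono hP s) (infinite_above hP_inf s)
    (accepts_anti s (above_subset P s) hacc)

theorem exists_forall_decides {M : Set ℕ} (hM : M.Infinite) :
    ∃ N ⊆ M, N.Infinite ∧ ∀ s : Finset ℕ, ↑s ⊆ N → Decides Fam N s := by
  obtain ⟨N, hNM, hN, hdec⟩ :=
    exists_fusion hM (fun s => denseBelow_decides s M) (fun s => decides_anti s)
  exact ⟨N, hNM, hN, fun s hs => (hdec s hs).of_above⟩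

theorem Rejects.finite_accepts_insert {M : Set ℕ} {s : Finset ℕ} (h : Rejects Fam M s) :
    {m ∈ above M s | Accepts Fam M (insert m s)}.Finite := by
  by_contra hX
  refine h _ (fun m hm => hm.1.1) hX fun P hP hP_inf => ?_
  set a := sInf P
  have ha : a ∈ P := Nat.sInf_mem hP_inf.nonempty
  have hP' : P \ {a} ⊆ above M (insert a s) := by
    rintro x ⟨hx, hxa⟩
    exact ⟨(hP hx).1.1.1, (Finset.forall_mem_insert _ _ _).2
      ⟨(Nat.sInf_le hx).lt_of_ne' hxa, (hP hx).2⟩⟩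
  obtain ⟨t, ht, hFam⟩ := (hP ha).1.2 _ hP' (hP_inf.sdiff (finite_singleton a))
  refine ⟨insert a t, ht.insert_sInf hP_inf.nonempty, ?_⟩
  rwa [Finset.union_insert, ← Finset.insert_union]

theorem exists_forall_rejects {M : Set ℕ} (hM : M.Infinite)
    (hdec : ∀ s : Finset ℕ, ↑s ⊆ M → Decides Fam M s) (hrej : Rejects Fam M ∅) :
    ∃ N ⊆ M, N.Infinite ∧ ∀ t : Finset ℕ, ↑t ⊆ N → Rejects Fam M t := by
  let R (s : Finset ℕ) (P : Set ℕ) : Prop :=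
    ↑s ⊆ M → Rejects Fam M s → ∀ m ∈ P, Rejects Fam M (insert m s)
  have hR (s : Finset ℕ) : DenseBelow (R s) M := by
    intro M' hM' hM'_inf
    by_cases hs : ↑s ⊆ M ∧ Rejects Fam M s
    · refine ⟨above M' s \ {m ∈ above M s | Accepts Fam M (insert m s)},
        sdiff_subset.trans (above_subset M' s),
        (infinite_above hM'_inf s).sdiff hs.2.finite_accepts_insert, fun _ _ m hm => ?_⟩
      have hmM : m ∈ above M s := above_mono hM' s hm.1
      refine (hdec _ ?_).resolve_left fun hacc => hm.2 ⟨hmM, hacc⟩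
      simpa [insert_subset_iff] using ⟨hmM.1, hs.1⟩
    · exact ⟨M', subset_rfl, hM'_inf, fun h₁ h₂ => absurd ⟨h₁, h₂⟩ hs⟩
  obtain ⟨N, hNM, hN, hRN⟩ :=
    exists_fusion hM hR fun s _ _ h hP hs hrej m hm => hP hs hrej m (h hm)
  refine ⟨N, hNM, hN, fun t => ?_⟩
  induction t using Finset.induction_on_max with
  | empty => exact fun _ => hrej
  | insert a t ht ih =>
    intro hat
    have htN : ↑t ⊆ N := (Finset.coe_subset.2 (Finset.subset_insert a t)).trans hat
    exact hRN t htN (htN.trans hNM) (ih htN) a ⟨hat (by simp), ht⟩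

theorem nash_williams (Fam : Finset ℕ → Prop) {M : Set ℕ} (hM : M.Infinite) :
    ∃ N ⊆ M, N.Infinite ∧
      ((∀ P ⊆ N, P.Infinite → ∃ t, IsInitialSegment t P ∧ Fam t) ∨
        ∀ t : Finset ℕ, ↑t ⊆ N → ¬ Fam t) := by
  obtain ⟨N, hNM, hN, hdec⟩ := exists_forall_decides (Fam := Fam) hM
  rcases hdec ∅ (by simp) with hacc | hrej
  · refine ⟨N, hNM, hN, Or.inl fun P hP hP_inf => ?_⟩
    simpa using hacc P (by simpa using hP) hP_inf
  · obtain ⟨N', hN'N, hN', hrej'⟩ := exists_forall_rejects hN hdec hrej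
    exact ⟨N', hN'N.trans hNM, hN', Or.inr fun t ht => (hrej' t ht).not_fam hN⟩

end NashWilliams

section RosenthalLemma

variable {S : Type*}

def ConvergesOn (A B : ℕ → Set S) (N : Set ℕ) : Prop :=
  ∀ s, {n ∈ N | s ∈ A n}.Finite ∨ {n ∈ N | s ∈ B n}.Finite

def IsIndependent (A B : ℕ → Set S) : Prop :=
  ∀ F G : Finset ℕ, Disjoint F G → ∃ s, (∀ k ∈ F, s ∈ A k) ∧ ∀ k ∈ G, s ∈ B k

/-- `#{y ∈ t | y < x}` is the rank of `x` in `t`: the sets `A` and `B` alternate along `t`,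
starting with `A`. -/
def altInter (A B : ℕ → Set S) (t : Finset ℕ) : Set S :=
  {s | ∀ x ∈ t, s ∈ if Even #{y ∈ t | y < x} then A x else B x}

variable {A B : ℕ → Set S}

theorem convergesOn_range_iff {φ : ℕ → ℕ} (hφ : φ.Injective) :
    ConvergesOn A B (range φ) ↔ ConvergesOn (A ∘ φ) (B ∘ φ) univ := by
  have hsep (C : ℕ → Set S) (s : S) : {n ∈ range φ | s ∈ C n} = φ '' {k | s ∈ C (φ k)} := by
    ext n
    constructor
    · rintro ⟨⟨k, rfl⟩, hk⟩
      exact ⟨k, hk, rfl⟩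
    · rintro ⟨k, hk, rfl⟩
      exact ⟨⟨k, rfl⟩, hk⟩
  simp only [ConvergesOn, hsep, finite_image_iff hφ.injOn, sep_univ, Function.comp_apply]

theorem convergesOn_anti : Antitone (ConvergesOn A B) := fun _ _ hNM h s =>
  (h s).imp (fun h' => h'.subset fun _ hn => ⟨hNM hn.1, hn.2⟩)
    (fun h' => h'.subset fun _ hn => ⟨hNM hn.1, hn.2⟩)

theorem ConvergesOn.of_finite_sdiff {N N' : Set ℕ} (h : ConvergesOn A B N')
    (hfin : (N \ N').Finite) : ConvergesOn A B N := by
  have hsub (C : ℕ → Set S) (s : S) : {n ∈ N | s ∈ C n} ⊆ {n ∈ N' | s ∈ C n} ∪ (N \ N') :=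
    fun n hn => by by_cases hn' : n ∈ N' <;> simp_all
  exact fun s => (h s).imp (fun h' => (h'.union hfin).subset (hsub A s))
    (fun h' => (h'.union hfin).subset (hsub B s))

theorem altInter_image {e : ℕ → ℕ} (he : StrictMono e) (T : Finset ℕ) :
    altInter A B (T.image e) = altInter (A ∘ e) (B ∘ e) T := by
  ext s
  simp [altInter, Finset.filter_image, Finset.card_image_of_injective _ he.injective,
    he.lt_iff_lt]

theorem mem_altInter_range {s : S} (h : ∀ j, s ∈ if Even j then A j else B j) (m : ℕ) :
    s ∈ altInter A B (Finset.range m) := by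
  rw [altInter, mem_ofPred_eq]
  intro j hj
  have : {y ∈ Finset.range m | y < j} = Finset.range j := by
    ext y
    simp only [Finset.mem_filter, Finset.mem_range]
    constructor
    · exact fun h => h.2
    · exact fun hy => ⟨hy.trans (Finset.mem_range.1 hj), hy⟩
  simpa [this] using h j

theorem _root_.StrictMono.exists_range_inter_Iio {g : ℕ → ℕ} (hg : StrictMono g) (c : ℕ) :
    ∃ m, range g ∩ Iio c = g '' Iio m := by
  classical
  have hex : ∃ j, c ≤ g j := ⟨c, hg.id_le c⟩
  refine ⟨Nat.find hex, ?_⟩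
  ext x
  constructor
  · rintro ⟨⟨j, rfl⟩, hj⟩
    exact ⟨j, not_le.1 fun h => (Nat.find_spec hex).not_gt ((hg.monotone h).trans_lt hj), rfl⟩
  · rintro ⟨j, hj, rfl⟩
    exact ⟨⟨j, rfl⟩, not_le.1 (Nat.find_min hex hj)⟩

theorem convergesOn_univ_of_forall_altInter
    (h : ∀ g : ℕ → ℕ, StrictMono g → ∃ m, altInter (A ∘ g) (B ∘ g) (Finset.range m) = ∅) :
    ConvergesOn A B univ := by
  intro s
  by_contra! hs
  simp only [sep_univ] at hs
  obtain ⟨g, hg, hgs⟩ := extraction_forall_of_frequently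
    (P := fun j k => s ∈ if Even j then A k else B k) fun j => by
      by_cases hj : Even j
      · simpa [hj] using Nat.frequently_atTop_iff_infinite.2 hs.1
      · simpa [hj] using Nat.frequently_atTop_iff_infinite.2 hs.2
  obtain ⟨m, hm⟩ := h g hg
  exact eq_empty_iff_forall_notMem.1 hm s
    (mem_altInter_range (A := A ∘ g) (B := B ∘ g) hgs m)

theorem count_blocks (F : Finset ℕ) (k : ℕ) :
    Nat.count (fun i => i % 3 = 1 ∨ (i % 3 = 2 ∧ i / 3 ∈ F) ∨ (i % 3 = 0 ∧ i / 3 ∉ F))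
      (3 * k + 1) = 2 * k + if k ∈ F then 0 else 1 := by
  have h₀ (j : ℕ) : (3 * j) % 3 = 0 ∧ (3 * j) / 3 = j := by omega
  have h₁ (j : ℕ) : (3 * j + 1) % 3 = 1 ∧ (3 * j + 1) / 3 = j := by omega
  have h₂ (j : ℕ) : (3 * j + 2) % 3 = 2 ∧ (3 * j + 2) / 3 = j := by omega
  have hblocks (j : ℕ) : Nat.count (fun i => i % 3 = 1 ∨ (i % 3 = 2 ∧ i / 3 ∈ F) ∨
      (i % 3 = 0 ∧ i / 3 ∉ F)) (3 * j) = 2 * j := by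
    induction j with
    | zero => simp
    | succ j ih =>
      rw [show 3 * (j + 1) = 3 * j + 2 + 1 by ring, Nat.count_succ, Nat.count_succ,
        Nat.count_succ, ih]
      by_cases hj : j ∈ F <;> simp [h₀, h₁, h₂, hj] <;> ring
  rw [Nat.count_succ, hblocks]
  by_cases hk : k ∈ F <;> simp [h₀, hk]

/-- A pattern `(F, G)` on the points `3k+1` is realized by the set `T` taking from each block
`{3k, 3k+1, 3k+2}` the point `3k+1` together with `3k+2` if `k ∈ F` and `3k` otherwise: then
`3k+1` has even rank in `T` exactly when `k ∈ F`. -/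
theorem isIndependent_of_altInter_nonempty (h : ∀ T : Finset ℕ, (altInter A B T).Nonempty) :
    IsIndependent (fun k => A (3 * k + 1)) (fun k => B (3 * k + 1)) := by
  intro F G hFG
  set p : ℕ → Prop := fun i => i % 3 = 1 ∨ (i % 3 = 2 ∧ i / 3 ∈ F) ∨ (i % 3 = 0 ∧ i / 3 ∉ F)
  set K := (F ∪ G).sup id + 1
  set T := {i ∈ Finset.range (3 * K) | p i}
  have hK {k : ℕ} (hk : k ∈ F ∪ G) : k < K := Nat.lt_succ_of_le (Finset.le_sup (f := id) hk)
  have hT {k : ℕ} (hk : k < K) : 3 * k + 1 ∈ T := by simp [T, p]; omega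
  have hrank {k : ℕ} (hk : k < K) :
      #{y ∈ T | y < 3 * k + 1} = 2 * k + if k ∈ F then 0 else 1 := by
    rw [← count_blocks, Nat.count_eq_card_filter_range, Finset.filter_filter]
    congr 1
    ext y
    simp only [Finset.mem_filter, Finset.mem_range]
    constructor
    · rintro ⟨-, hp, hy⟩
      exact ⟨hy, hp⟩
    · rintro ⟨hy, hp⟩
      exact ⟨by omega, hp, hy⟩
  obtain ⟨s, hs⟩ := h T
  refine ⟨s, fun k hk => ?_, fun k hk => ?_⟩
  · have hkK := hK (Finset.mem_union_left G hk)
    have hs_k := hs _ (hT hkK)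
    rw [hrank hkK] at hs_k
    simpa [hk] using hs_k
  · have hkK := hK (Finset.mem_union_right F hk)
    have hkF : k ∉ F := Finset.disjoint_right.1 hFG hk
    have hs_k := hs _ (hT hkK)
    rw [hrank hkK] at hs_k
    simpa [hkF, Nat.even_add_one] using hs_k

theorem exists_convergesOn_or_isIndependent (A B : ℕ → Set S) {M : Set ℕ} (hM : M.Infinite) :
    ∃ φ : ℕ → ℕ, StrictMono φ ∧ range φ ⊆ M ∧
      (ConvergesOn A B (range φ) ∨ IsIndependent (A ∘ φ) (B ∘ φ)) := by
  obtain ⟨N, hNM, hN, hseg | hnot⟩ := nash_williams (fun t => altInter A B t = ∅) hM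
  all_goals
    set e := Nat.nth (· ∈ N)
    have he : StrictMono e := Nat.nth_strictMono hN
    have he_range : range e = N := Nat.range_nth_of_infinite hN
  · refine ⟨e, he, he_range ▸ hNM, Or.inl ?_⟩
    rw [convergesOn_range_iff he.injective]
    refine convergesOn_univ_of_forall_altInter fun g hg => ?_
    obtain ⟨t, ⟨c, hc⟩, ht⟩ := hseg (range (e ∘ g))
      (he_range ▸ range_comp_subset_range g e)
      (infinite_range_of_injective (he.comp hg).injective)
    obtain ⟨m, hm⟩ := (he.comp hg).exists_range_inter_Iio c
    have ht_eq : t = (Finset.range m).image (e ∘ g) :=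
      Finset.coe_injective (by simp [hc, hm])
    refine ⟨m, ?_⟩
    change altInter (A ∘ (e ∘ g)) (B ∘ (e ∘ g)) _ = ∅
    rw [← altInter_image (he.comp hg), ← ht_eq, ht]
  · refine ⟨e ∘ (3 * · + 1), he.comp fun a b h => by omega, ?_, Or.inr ?_⟩
    · exact (range_comp_subset_range _ e).trans (he_range ▸ hNM)
    refine isIndependent_of_altInter_nonempty (A := A ∘ e) (B := B ∘ e) fun T => ?_
    rw [← altInter_image he, nonempty_iff_ne_empty]
    exact hnot _ (by simp [← he_range])

theorem exists_forall_convergesOn {ι : Type*} [Countable ι] (A B : ι → ℕ → Set S)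
    (H : ∀ i φ, StrictMono φ → ¬ IsIndependent (A i ∘ φ) (B i ∘ φ)) :
    ∃ N : Set ℕ, N.Infinite ∧ ∀ i, ConvergesOn (A i) (B i) N := by
  have hdense (i : ι) : DenseBelow (ConvergesOn (A i) (B i)) univ := by
    intro M _ hM
    obtain ⟨φ, hφ, hφM, hconv | hind⟩ := exists_convergesOn_or_isIndependent (A i) (B i) hM
    · exact ⟨range φ, hφM, infinite_range_of_injective hφ.injective, hconv⟩
    · exact absurd hind (H i φ hφ)
  obtain ⟨N, -, hN, hconv⟩ := exists_forall_of_countable infinite_univ hdense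
    (fun _ => convergesOn_anti) fun _ _ _ hfin h => h.of_finite_sdiff hfin
  exact ⟨N, hN, hconv⟩

end RosenthalLemma

section RealSequences

variable {S : Type*} {g : ℕ → S → ℝ} {C₀ r R : ℝ}

theorem exists_tendsto_of_forall_finite {u : ℕ → ℝ} (hb : ∀ n, |u n| ≤ C₀)
    (h : ∀ r R : ℚ, (r : ℝ) < R → {n | u n < r}.Finite ∨ {n | (R : ℝ) < u n}.Finite) :
    ∃ l, Tendsto u atTop (nhds l) := by
  have hle : IsBoundedUnder (· ≤ ·) atTop u :=
    isBoundedUnder_of ⟨C₀, fun n => (abs_le.1 (hb n)).2⟩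
  have hge : IsBoundedUnder (· ≥ ·) atTop u :=
    isBoundedUnder_of ⟨-C₀, fun n => (abs_le.1 (hb n)).1⟩
  refine ⟨limsup u atTop, tendsto_of_liminf_eq_limsup ?_ rfl hle hge⟩
  refine le_antisymm (liminf_le_limsup hle hge) (not_lt.1 fun hlt => ?_)
  obtain ⟨r, hr_lo, hr_hi⟩ := exists_rat_btwn hlt
  obtain ⟨R, hR_lo, hR_hi⟩ := exists_rat_btwn hr_hi
  rcases h r R hR_lo with hfin | hfin
  · exact Nat.frequently_atTop_iff_infinite.1
      (frequently_lt_of_liminf_lt hle.isCoboundedUnder_ge hr_lo) hfin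
  · exact Nat.frequently_atTop_iff_infinite.1
      (frequently_lt_of_lt_limsup hge.isCoboundedUnder_le hR_hi) hfin

theorem abs_sum_mul_le (hb : ∀ n s, |g n s| ≤ C₀) (a : ℕ → ℝ) (N : ℕ) (s : S) :
    |∑ k ∈ Finset.range N, a k * g k s| ≤ C₀ * ∑ k ∈ Finset.range N, |a k| := by
  rw [Finset.mul_sum]
  refine (Finset.abs_sum_le_sum_abs _ _).trans (Finset.sum_le_sum fun k _ => ?_)
  rw [abs_mul, mul_comm]
  exact mul_le_mul_of_nonneg_right (hb k s) (abs_nonneg _)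

theorem exists_sum_sub_sum_ge
    (hind : IsIndependent (fun k => {s | g k s < r}) (fun k => {s | R < g k s}))
    (a : ℕ → ℝ) (N : ℕ) : ∃ s₁ s₂ : S, (R - r) * ∑ k ∈ Finset.range N, |a k| ≤
      ∑ k ∈ Finset.range N, a k * g k s₁ - ∑ k ∈ Finset.range N, a k * g k s₂ := by
  classical
  set F := {k ∈ Finset.range N | a k < 0}
  set G := {k ∈ Finset.range N | ¬ a k < 0}
  have hFG : Disjoint F G := Finset.disjoint_filter_filter_not _ _ _
  obtain ⟨s₁, hs₁F, hs₁G⟩ := hind F G hFG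
  obtain ⟨s₂, hs₂G, hs₂F⟩ := hind G F hFG.symm
  refine ⟨s₁, s₂, ?_⟩
  rw [← Finset.sum_sub_distrib, Finset.mul_sum]
  refine Finset.sum_le_sum fun k hk => ?_
  by_cases hak : a k < 0
  · have h₁ : g k s₁ < r := hs₁F k (Finset.mem_filter.2 ⟨hk, hak⟩)
    have h₂ : R < g k s₂ := hs₂F k (Finset.mem_filter.2 ⟨hk, hak⟩)
    rw [abs_of_neg hak]
    nlinarith
  · have h₁ : R < g k s₁ := hs₁G k (Finset.mem_filter.2 ⟨hk, hak⟩)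
    have h₂ : g k s₂ < r := hs₂G k (Finset.mem_filter.2 ⟨hk, hak⟩)
    rw [abs_of_nonneg (not_lt.1 hak)]
    nlinarith

theorem exists_l1_bounds_of_isIndependent (hb : ∀ n s, |g n s| ≤ C₀) (hrR : r < R)
    (hind : IsIndependent (fun k => {s | g k s < r}) (fun k => {s | R < g k s})) :
    ∃ c C : ℝ, 0 < c ∧ c ≤ C ∧ ∀ (a : ℕ → ℝ) (N : ℕ),
      (c * ∑ k ∈ Finset.range N, |a k| ≤ ⨆ s : S, |∑ k ∈ Finset.range N, a k * g k s|) ∧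
        ((⨆ s : S, |∑ k ∈ Finset.range N, a k * g k s|) ≤
          C * ∑ k ∈ Finset.range N, |a k|) := by
  obtain ⟨s₀, -⟩ := hind ∅ ∅ (Finset.disjoint_empty_left ∅)
  have : Nonempty S := ⟨s₀⟩
  refine ⟨(R - r) / 2, max C₀ ((R - r) / 2), by linarith, le_max_right _ _, fun a N => ?_⟩
  have hupper (s : S) : |∑ k ∈ Finset.range N, a k * g k s| ≤
      max C₀ ((R - r) / 2) * ∑ k ∈ Finset.range N, |a k| :=
    (abs_sum_mul_le hb a N s).trans (mul_le_mul_of_nonneg_right (le_max_left _ _)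
      (Finset.sum_nonneg fun k _ => abs_nonneg (a k)))
  have hbdd : BddAbove (range fun s => |∑ k ∈ Finset.range N, a k * g k s|) :=
    ⟨_, forall_mem_range.2 hupper⟩
  refine ⟨?_, ciSup_le hupper⟩
  obtain ⟨s₁, s₂, hs⟩ := exists_sum_sub_sum_ge hind a N
  have h₁ := (le_abs_self _).trans (le_ciSup hbdd s₁)
  have h₂ := (neg_le_abs _).trans (le_ciSup hbdd s₂)
  linarith

end RealSequences

end Rosenthal

open Rosenthal

theorem rosenthal_dichotomy_general {S : Type*} (f : ℕ → S → ℝ) (C₀ : ℝ)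
    (hb : ∀ n s, |f n s| ≤ C₀) :
    ∃ φ : ℕ → ℕ, StrictMono φ ∧
      ((∀ s : S, ∃ l : ℝ, Tendsto (fun n => f (φ n) s) atTop (nhds l)) ∨
        (∃ c C : ℝ, 0 < c ∧ c ≤ C ∧ ∀ (a : ℕ → ℝ) (N : ℕ),
          (c * ∑ k ∈ Finset.range N, |a k| ≤
              ⨆ s : S, |∑ k ∈ Finset.range N, a k * f (φ k) s|) ∧
            ((⨆ s : S, |∑ k ∈ Finset.range N, a k * f (φ k) s|) ≤
              C * ∑ k ∈ Finset.range N, |a k|))) := by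
  let A (q : {q : ℚ × ℚ // (q.1 : ℝ) < q.2}) (n : ℕ) : Set S := {s | f n s < q.1.1}
  let B (q : {q : ℚ × ℚ // (q.1 : ℝ) < q.2}) (n : ℕ) : Set S := {s | q.1.2 < f n s}
  by_cases H : ∃ q φ, StrictMono φ ∧ IsIndependent (A q ∘ φ) (B q ∘ φ)
  · obtain ⟨q, φ, hφ, hind⟩ := H
    exact ⟨φ, hφ, Or.inr (exists_l1_bounds_of_isIndependent (fun n s => hb (φ n) s) q.2 hind)⟩
  push Not at H
  obtain ⟨N, hN, hconv⟩ := exists_forall_convergesOn A B H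
  set φ := Nat.nth (· ∈ N)
  have hφ : StrictMono φ := Nat.nth_strictMono hN
  have hφ_range : range φ = N := Nat.range_nth_of_infinite hN
  refine ⟨φ, hφ, Or.inl fun s => exists_tendsto_of_forall_finite (fun n => hb _ s) ?_⟩
  intro r R hrR
  have := hconv ⟨(r, R), hrR⟩
  rw [← hφ_range, convergesOn_range_iff hφ.injective] at this
  simpa [A, B] using this s

/-- Rosenthal's dichotomy: a uniformly bounded sequence of real functions on an infinite set
has a subsequence that either converges pointwise or is equivalent, in the sup norm,
to the standard basis of `ℓ¹`. -/
theorem rosenthal_dichotomy {S : Type*} [Infinite S] (f : ℕ → S → ℝ) (C₀ : ℝ)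
    (hb : ∀ n s, |f n s| ≤ C₀) :
    ∃ φ : ℕ → ℕ, StrictMono φ ∧
      ((∀ s : S, ∃ l : ℝ, Tendsto (fun n => f (φ n) s) atTop (nhds l)) ∨
        (∃ c C : ℝ, 0 < c ∧ c ≤ C ∧ ∀ (a : ℕ → ℝ) (N : ℕ),
          (c * ∑ k ∈ Finset.range N, |a k| ≤
              ⨆ s : S, |∑ k ∈ Finset.range N, a k * f (φ k) s|) ∧
            ((⨆ s : S, |∑ k ∈ Finset.range N, a k * f (φ k) s|) ≤
              C * ∑ k ∈ Finset.range N, |a k|))) :=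
  rosenthal_dichotomy_general f C₀ hb
end

section
/- In a real Banach space, every bounded sequence has a subsequence that is either weakly Cauchy or equivalent to the standard unit vector basis of ℓ¹ (Rosenthal's ℓ¹ theorem). -/
open Filter Set

namespace RosenthalAux

/-- Build an infinite sequence by recursion with choice. -/
lemma exists_seq {α : Type*} (Q : α → Prop) (R : α → α → Prop) (a0 : α) (h0 : Q a0)
    (step : ∀ a, Q a → ∃ b, Q b ∧ R a b) :
    ∃ g : ℕ → α, g 0 = a0 ∧ (∀ n, Q (g n)) ∧ ∀ n, R (g n) (g (n + 1)) := by
  choose f hf1 hf2 using step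
  let g : ℕ → {a // Q a} := fun n =>
    Nat.rec ⟨a0, h0⟩ (fun _ p => ⟨f p.1 p.2, hf1 p.1 p.2⟩) n
  exact ⟨fun n => (g n).1, rfl, fun n => (g n).2, fun n => hf2 _ _⟩

/-- `t` is a finite initial segment of `K`. -/
def IsInit (t : Finset ℕ) (K : Set ℕ) : Prop :=
  ↑t ⊆ K ∧ ∀ a ∈ t, ∀ b ∈ K, b ∉ t → a < b

lemma isInit_empty (K : Set ℕ) : IsInit ∅ K := by
  constructor
  · simp
  · simp

variable (F : Finset ℕ → Prop)

def Accepts (s : Finset ℕ) (M : Set ℕ) : Prop :=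
  ∀ K ⊆ M, K.Infinite → ∃ t : Finset ℕ, IsInit t K ∧ F (s ∪ t)

def Rejects (s : Finset ℕ) (M : Set ℕ) : Prop :=
  ∀ M' ⊆ M, M'.Infinite → ¬ Accepts F s M'

lemma Accepts.mono {s : Finset ℕ} {M M' : Set ℕ} (h : Accepts F s M) (hMM : M' ⊆ M) :
    Accepts F s M' := fun K hK hKi => h K (hK.trans hMM) hKi

lemma Rejects.mono {s : Finset ℕ} {M M' : Set ℕ} (h : Rejects F s M) (hMM : M' ⊆ M) :
    Rejects F s M' := fun P hP hPi => h P (hP.trans hMM) hPi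

/-- One-step extension of rejecting sets. -/
lemma step_reject {s : Finset ℕ} {M : Set ℕ} (hM : M.Infinite) (hrej : Rejects F s M) :
    ∃ M' ⊆ M, M'.Infinite ∧ ∀ n ∈ M', Rejects F (insert n s) M' := by
  by_cases hc : ∃ P ⊆ M, P.Infinite ∧ ∀ n ∈ P, Rejects F (insert n s) P
  · obtain ⟨P, h1, h2, h3⟩ := hc; exact ⟨P, h1, h2, h3⟩
  push_neg at hc
  -- hc : ∀ P ⊆ M, P.Infinite → ∃ n ∈ P, ¬ Rejects F (insert n s) P
  have hc' : ∀ P, P ⊆ M → P.Infinite →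
      ∃ n, n ∈ P ∧ ∃ Q, Q ⊆ P ∧ Q.Infinite ∧ Accepts F (insert n s) Q := by
    intro P hP hPi
    obtain ⟨n, hn, hnr⟩ := hc P hP hPi
    rw [Rejects] at hnr
    push_neg at hnr
    obtain ⟨Q, hQ1, hQ2, hQ3⟩ := hnr
    exact ⟨n, hn, Q, hQ1, hQ2, hQ3⟩
  -- build a sequence of pairs (n, P) with P accepted by insert n s
  let Qp : ℕ × Set ℕ → Prop := fun p =>
    p.1 ∈ M ∧ p.2 ⊆ M ∧ p.2.Infinite ∧ Accepts F (insert p.1 s) p.2 ∧ ∀ m ∈ p.2, p.1 < m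
  let Rp : ℕ × Set ℕ → ℕ × Set ℕ → Prop := fun p p' => p'.2 ⊆ p.2 ∧ p'.1 ∈ p.2
  have hstep : ∀ P, P ⊆ M → P.Infinite →
      ∃ p' : ℕ × Set ℕ, Qp p' ∧ p'.2 ⊆ P ∧ p'.1 ∈ P := by
    intro P hP hPi
    obtain ⟨n, hn, Q, hQ1, hQ2, hQ3⟩ := hc' P hP hPi
    refine ⟨(n, Q ∩ Set.Ioi n), ⟨hP hn, ?_, ?_, ?_, ?_⟩, ?_, hn⟩
    · exact (Set.inter_subset_left).trans (hQ1.trans hP)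
    · have : Q ∩ Set.Ioi n = Q \ Set.Iic n := by
        ext m; simp [Set.mem_Ioi, Set.mem_Iic, not_le]
      rw [this]; exact hQ2.diff (Set.finite_Iic n)
    · exact Accepts.mono F hQ3 Set.inter_subset_left
    · intro m hm; exact hm.2
    · exact Set.inter_subset_left.trans hQ1
  obtain ⟨p0, hp0, _, _⟩ := hstep M (subset_rfl) hM
  obtain ⟨g, hg0, hgQ, hgR⟩ := exists_seq Qp Rp p0 hp0
    (fun p hp => by
      obtain ⟨p', hp', hsub, hmem⟩ := hstep p.2 hp.2.1 hp.2.2.1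
      exact ⟨p', hp', hsub, hmem⟩)
  set nseq : ℕ → ℕ := fun k => (g k).1 with hnseq
  set Mseq : ℕ → Set ℕ := fun k => (g k).2 with hMseq
  have hMsub : ∀ k, Mseq (k + 1) ⊆ Mseq k := fun k => (hgR k).1
  have hManti : ∀ i j, i ≤ j → Mseq j ⊆ Mseq i := by
    intro i j hij
    induction j with
    | zero => simp_all
    | succ j ih =>
      rcases Nat.lt_or_ge i (j + 1) with h | h
      · exact (hMsub j).trans (ih (Nat.lt_succ_iff.mp h))
      · have : i = j + 1 := le_antisymm hij h
        subst this; exact subset_rfl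
  have hnm : ∀ k, nseq (k + 1) ∈ Mseq k := fun k => (hgR k).2
  have hmono : StrictMono nseq := by
    apply strictMono_nat_of_lt_succ
    intro k
    exact (hgQ k).2.2.2.2 _ (hnm k)
  have hnMj : ∀ i j, i < j → nseq j ∈ Mseq i := by
    intro i j hij
    have : nseq j ∈ Mseq (j - 1) := by
      obtain ⟨j', rfl⟩ := Nat.exists_eq_add_of_lt hij
      have := hnm (i + j')
      simpa using this
    exact hManti i (j - 1) (by omega) this
  -- the range of nseq is accepted by s, contradiction
  have hrange : Set.range nseq ⊆ M := by
    rintro _ ⟨k, rfl⟩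
    exact (hgQ k).1
  have hrinf : (Set.range nseq).Infinite := Set.infinite_range_of_injective hmono.injective
  refine absurd ?_ (hrej _ hrange hrinf)
  intro K hK hKi
  have hKne : ∃ j, nseq j ∈ K := by
    obtain ⟨m, hm⟩ := hKi.nonempty
    obtain ⟨j, rfl⟩ := hK hm
    exact ⟨j, hm⟩
  classical
  let j := Nat.find hKne
  have hjK : nseq j ∈ K := Nat.find_spec hKne
  have hjmin : ∀ i < j, nseq i ∉ K := fun i hi => Nat.find_min hKne hi
  have hKgt : ∀ b ∈ K, b ≠ nseq j → ∃ i, j < i ∧ b = nseq i := by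
    intro b hb hbne
    obtain ⟨i, rfl⟩ := hK hb
    refine ⟨i, ?_, rfl⟩
    rcases Nat.lt_trichotomy i j with h | h | h
    · exact absurd hb (hjmin i h)
    · exact absurd (by rw [h]) hbne
    · exact h
  have hK'sub : K \ {nseq j} ⊆ Mseq j := by
    intro b hb
    obtain ⟨i, hij, rfl⟩ := hKgt b hb.1 (by simpa using hb.2)
    exact hnMj j i hij
  have hK'inf : (K \ {nseq j}).Infinite := hKi.diff (Set.finite_singleton _)
  obtain ⟨t, ht, htF⟩ := (hgQ j).2.2.2.1 _ hK'sub hK'inf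
  refine ⟨insert (nseq j) t, ⟨?_, ?_⟩, ?_⟩
  · intro a ha
    simp only [Finset.coe_insert, Set.mem_insert_iff] at ha
    rcases ha with rfl | ha
    · exact hjK
    · exact (ht.1 ha).1
  · intro a ha b hb hbt
    simp only [Finset.mem_insert] at ha hbt
    push_neg at hbt
    rcases ha with rfl | ha
    · obtain ⟨i, hij, rfl⟩ := hKgt b hb hbt.1
      exact hmono hij
    · refine ht.2 a ha b ⟨hb, by simpa using hbt.1⟩ hbt.2
  · have : s ∪ insert (nseq j) t = insert (nseq j) s ∪ t := by
      rw [Finset.union_insert, Finset.insert_union]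
    rw [this]; exact htF



/-- Extend rejection for a finite family of finite sets simultaneously. -/
lemma family_reject (𝒮 : Finset (Finset ℕ)) :
    ∀ M : Set ℕ, M.Infinite → (∀ s ∈ 𝒮, Rejects F s M) →
      ∃ M' ⊆ M, M'.Infinite ∧ ∀ s ∈ 𝒮, ∀ n ∈ M', Rejects F (insert n s) M' := by
  classical
  induction 𝒮 using Finset.induction with
  | empty => exact fun M hM _ => ⟨M, subset_rfl, hM, by simp⟩
  | @insert a 𝒮 ha ih =>
    intro M hM h
    obtain ⟨M1, hsub1, hinf1, hrej1⟩ := ih M hM (fun s hs => h s (Finset.mem_insert_of_mem hs))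
    obtain ⟨M2, hsub2, hinf2, hrej2⟩ :=
      step_reject F hinf1 (Rejects.mono F (h a (Finset.mem_insert_self _ _)) hsub1)
    refine ⟨M2, hsub2.trans hsub1, hinf2, ?_⟩
    intro s hs n hn
    rcases Finset.mem_insert.mp hs with rfl | hs
    · exact hrej2 n hn
    · exact Rejects.mono F (hrej1 s hs n (hsub2 hn)) hsub2

/-- Galvin's lemma. -/
lemma galvin (M₀ : Set ℕ) (hM₀ : M₀.Infinite) :
    (∃ N ⊆ M₀, N.Infinite ∧ ∀ K ⊆ N, K.Infinite → ∃ t : Finset ℕ, IsInit t K ∧ F t) ∨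
    (∃ N ⊆ M₀, N.Infinite ∧ ∀ s : Finset ℕ, ↑s ⊆ N → ¬ F s) := by
  classical
  by_cases h : Rejects F ∅ M₀
  · right
    let Qp : Finset ℕ × Set ℕ → Prop := fun p =>
      p.2 ⊆ M₀ ∧ ↑p.1 ⊆ M₀ ∧ p.2.Infinite ∧ (∀ s ⊆ p.1, Rejects F s p.2) ∧
        ∀ a ∈ p.1, ∀ b ∈ p.2, a < b
    let Rp : Finset ℕ × Set ℕ → Finset ℕ × Set ℕ → Prop := fun p p' =>
      ∃ n ∈ p.2, p'.1 = insert n p.1 ∧ p'.2 ⊆ p.2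
    have hstep : ∀ p, Qp p → ∃ p', Qp p' ∧ Rp p p' := by
      rintro ⟨S, M⟩ ⟨hMM₀, hSM₀, hMi, hrej, hord⟩
      obtain ⟨M', hM'sub, hM'inf, hM'rej⟩ :=
        family_reject F S.powerset M hMi (fun s hs => hrej s (Finset.mem_powerset.mp hs))
      obtain ⟨n, hn⟩ := hM'inf.nonempty
      refine ⟨(insert n S, M' ∩ Set.Ioi n), ⟨?_, ?_, ?_, ?_, ?_⟩, n, hM'sub hn, rfl, ?_⟩
      · exact Set.inter_subset_left.trans (hM'sub.trans hMM₀)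
      · intro a ha
        simp only [Finset.coe_insert, Set.mem_insert_iff] at ha
        rcases ha with rfl | ha
        · exact hMM₀ (hM'sub hn)
        · exact hSM₀ ha
      · have : M' ∩ Set.Ioi n = M' \ Set.Iic n := by
          ext m; simp [Set.mem_Ioi, Set.mem_Iic, not_le]
        rw [this]; exact hM'inf.diff (Set.finite_Iic n)
      · intro s hs
        by_cases hns : n ∈ s
        · have : s = insert n (s.erase n) := (Finset.insert_erase hns).symm
          rw [this]
          refine Rejects.mono F (hM'rej (s.erase n) ?_ n hn) Set.inter_subset_left
          exact Finset.mem_powerset.mpr (fun m hm => by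
            have := hs (Finset.mem_of_mem_erase hm)
            rcases Finset.mem_insert.mp this with rfl | h2
            · exact absurd rfl (Finset.ne_of_mem_erase hm)
            · exact h2)
        · have hsS : s ⊆ S := by
            intro m hm
            rcases Finset.mem_insert.mp (hs hm) with rfl | h2
            · exact absurd hm hns
            · exact h2
          exact Rejects.mono F (hrej s hsS) (Set.inter_subset_left.trans hM'sub)
      · intro a ha b hb
        rcases Finset.mem_insert.mp ha with rfl | ha
        · exact hb.2
        · exact hord a ha b (Set.inter_subset_left.trans hM'sub hb)
      · exact Set.inter_subset_left.trans hM'sub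
    have hQ0 : Qp (∅, M₀) := by
      refine ⟨subset_rfl, by simp, hM₀, ?_, by simp⟩
      intro s hs
      have : s = ∅ := Finset.subset_empty.mp hs
      rw [this]; exact h
    obtain ⟨g, hg0, hgQ, hgR⟩ := exists_seq Qp Rp (∅, M₀) hQ0 hstep
    set Sseq : ℕ → Finset ℕ := fun k => (g k).1 with hSseq
    set Mseq : ℕ → Set ℕ := fun k => (g k).2 with hMseq
    choose nseq hnm hSsucc hMsub using hgR
    have hSmono : ∀ i j, i ≤ j → Sseq i ⊆ Sseq j := by
      intro i j hij
      induction j with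
      | zero => simp_all
      | succ j ih =>
        rcases Nat.lt_or_ge i (j + 1) with hlt | hge
        · refine (ih (Nat.lt_succ_iff.mp hlt)).trans ?_
          show (g j).1 ⊆ (g (j + 1)).1
          rw [hSsucc j]; exact Finset.subset_insert _ _
        · have : i = j + 1 := le_antisymm hij hge
          subst this; exact subset_rfl
    set N : Set ℕ := {m | ∃ k, m ∈ Sseq k} with hN
    have hnsN : ∀ k, nseq k ∈ N := by
      intro k
      exact ⟨k + 1, by show nseq k ∈ (g (k + 1)).1; rw [hSsucc k]; exact Finset.mem_insert_self _ _⟩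
    have hnmono : StrictMono nseq := by
      apply strictMono_nat_of_lt_succ
      intro k
      have h1 : nseq k ∈ Sseq (k + 1) := by
        show nseq k ∈ (g (k + 1)).1
        rw [hSsucc k]; exact Finset.mem_insert_self _ _
      exact (hgQ (k + 1)).2.2.2.2 _ h1 _ (hnm (k + 1))
    refine ⟨N, ?_, ?_, ?_⟩
    · rintro m ⟨k, hk⟩
      exact (hgQ k).2.1 hk
    · exact Set.infinite_of_injective_forall_mem hnmono.injective hnsN
    · intro s hsN
      have hex : ∃ k, s ⊆ Sseq k := by
        classical
        induction s using Finset.induction with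
        | empty => exact ⟨0, by simp⟩
        | @insert a s ha ih =>
          obtain ⟨k1, hk1⟩ := ih (fun m hm => hsN (by
            simp only [Finset.coe_insert, Set.mem_insert_iff]
            exact Or.inr hm))
          obtain ⟨k2, hk2⟩ := hsN (show a ∈ (↑(insert a s) : Set ℕ) from by simp)
          refine ⟨max k1 k2, Finset.insert_subset
            (hSmono k2 _ (le_max_right _ _) hk2) (hk1.trans (hSmono k1 _ (le_max_left _ _)))⟩
      obtain ⟨k, hk⟩ := hex
      intro hF
      have hrej : Rejects F s (Mseq k) := (hgQ k).2.2.2.1 s hk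
      refine hrej (Mseq k) subset_rfl (hgQ k).2.2.1 ?_
      intro K hK hKi
      exact ⟨∅, isInit_empty K, by simpa using hF⟩
  · left
    rw [Rejects] at h
    push_neg at h
    obtain ⟨N, hN1, hN2, hN3⟩ := h
    refine ⟨N, hN1, hN2, ?_⟩
    intro K hK hKi
    obtain ⟨t, ht1, ht2⟩ := hN3 K hK hKi
    exact ⟨t, ht1, by simpa using ht2⟩


variable {T : Type*}

open Classical in
/-- The "alternating" intersection pattern associated to a finite index set:
the element of rank `i` (in increasing order) contributes `A` if `i` is even, `B` if odd. -/
noncomputable def altSet (A B : ℕ → Set T) (F : Finset ℕ) : Set T :=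
  ⋂ n ∈ F, (if Even ((F.filter (· < n)).card) then A n else B n)

lemma filt_img (s : Finset ℕ) (f : ℕ → ℕ) (hf : Function.Injective f) (p : ℕ → Prop)
    [DecidablePred p] : (s.image f).filter p = (s.filter fun a => p (f a)).image f := by
  ext b
  simp only [Finset.mem_filter, Finset.mem_image]
  constructor
  · rintro ⟨⟨a, ha, rfl⟩, hp⟩
    exact ⟨a, ⟨ha, hp⟩, rfl⟩
  · rintro ⟨a, ⟨ha, hp⟩, rfl⟩
    exact ⟨⟨a, ha, rfl⟩, hp⟩

/-- A strictly monotone enumeration inside an infinite set of naturals. -/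
lemma exists_strictMono_mem {N : Set ℕ} (hN : N.Infinite) :
    ∃ e : ℕ → ℕ, StrictMono e ∧ ∀ i, e i ∈ N := by
  obtain ⟨m0, hm0⟩ := hN.nonempty
  obtain ⟨g, hg0, hgQ, hgR⟩ := exists_seq (fun m => m ∈ N) (fun m m' => m < m') m0 hm0
    (fun m hm => by
      obtain ⟨m', hm', hlt⟩ := hN.exists_gt m
      exact ⟨m', hm', hlt⟩)
  exact ⟨g, strictMono_nat_of_lt_succ hgR, hgQ⟩

/-- Rosenthal's dichotomy for a sequence of pairs of sets. -/
lemma dichotomy (A B : ℕ → Set T) (M₀ : Set ℕ) (hM₀ : M₀.Infinite) :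
    (∃ φ : ℕ → ℕ, StrictMono φ ∧ (∀ i, φ i ∈ M₀) ∧ ∀ (k : ℕ) (σ : ℕ → Bool),
        (⋂ i ∈ Finset.range k, (if σ i then B (φ i) else A (φ i))).Nonempty) ∨
    (∃ N ⊆ M₀, N.Infinite ∧ ∀ t : T,
        {n | n ∈ N ∧ t ∈ A n}.Finite ∨ {n | n ∈ N ∧ t ∈ B n}.Finite) := by
  classical
  rcases galvin (fun s => ¬ (altSet A B s).Nonempty) M₀ hM₀ with
    ⟨N, hN1, hN2, hN3⟩ | ⟨N, hN1, hN2, hN3⟩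
  · -- convergence branch
    right
    refine ⟨N, hN1, hN2, ?_⟩
    intro t0
    by_contra hcon
    push_neg at hcon
    obtain ⟨hA, hB⟩ := hcon
    have hAinf : {n | n ∈ N ∧ t0 ∈ A n}.Infinite := hA
    have hBinf : {n | n ∈ N ∧ t0 ∈ B n}.Infinite := hB
    -- build an interleaving sequence
    set Qp : ℕ × ℕ → Prop := fun p =>
      p.2 ∈ N ∧ t0 ∈ (if Even p.1 then A p.2 else B p.2) with hQp
    set Rp : ℕ × ℕ → ℕ × ℕ → Prop := fun p p' => p'.1 = p.1 + 1 ∧ p.2 < p'.2 with hRp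
    obtain ⟨m0, hm0⟩ := hAinf.nonempty
    have h0 : Qp (0, m0) := ⟨hm0.1, by simp [hm0.2]⟩
    obtain ⟨g, hg0, hgQ, hgR⟩ := exists_seq Qp Rp (0, m0) h0 (by
      rintro ⟨j, m⟩ ⟨hmN, hmem⟩
      by_cases hev : Even (j + 1)
      · obtain ⟨m', hm', hlt⟩ := hAinf.exists_gt m
        exact ⟨(j + 1, m'), ⟨hm'.1, by simp [hev, hm'.2]⟩, rfl, hlt⟩
      · obtain ⟨m', hm', hlt⟩ := hBinf.exists_gt m
        exact ⟨(j + 1, m'), ⟨hm'.1, by simp [hev, hm'.2]⟩, rfl, hlt⟩)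
    have hidx : ∀ i, (g i).1 = i := by
      intro i
      induction i with
      | zero => rw [hg0]
      | succ i ih => rw [(hgR i).1, ih]
    set kseq : ℕ → ℕ := fun i => (g i).2 with hkseq
    have hkmono : StrictMono kseq := strictMono_nat_of_lt_succ (fun i => (hgR i).2)
    have hkN : ∀ i, kseq i ∈ N := fun i => (hgQ i).1
    have hkmem : ∀ i, t0 ∈ (if Even i then A (kseq i) else B (kseq i)) := by
      intro i
      have := (hgQ i).2
      rwa [hidx i] at this
    have hKsub : Set.range kseq ⊆ N := by rintro _ ⟨i, rfl⟩; exact hkN i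
    have hKinf : (Set.range kseq).Infinite := Set.infinite_range_of_injective hkmono.injective
    obtain ⟨t, htinit, htne⟩ := hN3 (Set.range kseq) hKsub hKinf
    refine htne ⟨t0, ?_⟩
    rw [altSet, Set.mem_iInter₂]
    intro n hn
    obtain ⟨i, rfl⟩ := htinit.1 hn
    have hfilter : t.filter (· < kseq i) = (Finset.range i).image kseq := by
      ext a
      simp only [Finset.mem_filter, Finset.mem_image, Finset.mem_range]
      constructor
      · rintro ⟨hat, hlt⟩
        obtain ⟨j, rfl⟩ := htinit.1 hat
        exact ⟨j, hkmono.lt_iff_lt.mp hlt, rfl⟩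
      · rintro ⟨j, hj, rfl⟩
        have hjt : kseq j ∈ t := by
          by_contra hjt
          have := htinit.2 (kseq i) hn (kseq j) ⟨j, rfl⟩ hjt
          exact absurd (hkmono hj) (lt_asymm this)
        exact ⟨hjt, hkmono hj⟩
    have hcard : (t.filter (· < kseq i)).card = i := by
      rw [hfilter, Finset.card_image_of_injective _ hkmono.injective, Finset.card_range]
    rw [hcard]
    exact hkmem i
  · -- independence branch
    left
    have hreal : ∀ s : Finset ℕ, ↑s ⊆ N → (altSet A B s).Nonempty := by
      intro s hs
      by_contra hne
      exact hN3 s hs hne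
    obtain ⟨e, hemono, heN⟩ := exists_strictMono_mem hN2
    refine ⟨fun i => e (2 * i + 1), fun i j hij => hemono (by omega), fun i => hN1 (heN _), ?_⟩
    intro k σ
    -- padding indices
    set pad : ℕ → Bool := fun i => match i with
      | 0 => σ 0
      | (i + 1) => σ (i + 1) == σ i with hpad
    set pos : ℕ → ℕ := fun i => i + ∑ j ∈ Finset.range (i + 1), (pad j).toNat with hpos
    have hparity : ∀ i, Even (pos i) ↔ σ i = false := by
      intro i
      induction i with
      | zero =>
        have : pos 0 = (σ 0).toNat := by simp [hpos, hpad]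
        rw [this]
        cases h0 : σ 0 <;> simp [Nat.even_iff]
      | succ i ih =>
        have hstep : pos (i + 1) = pos i + 1 + (σ (i + 1) == σ i).toNat := by
          simp only [hpos, Finset.sum_range_succ]
          have : pad (i + 1) = (σ (i + 1) == σ i) := rfl
          rw [this]; ring
        rw [Nat.even_iff] at ih ⊢
        cases h1 : σ (i + 1) <;> cases h2 : σ i <;>
          simp [h1, h2, hstep] <;> (rw [h2] at ih; simp at ih; omega)
    set G : Finset ℕ := ((Finset.range k).image (fun i => 2 * i + 1)) ∪
      (((Finset.range k).filter (fun j => pad j = true)).image (fun j => 2 * j)) with hG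
    have hrankG : ∀ i < k, (G.filter (· < 2 * i + 1)).card = pos i := by
      intro i hik
      rw [hG, Finset.filter_union]
      rw [filt_img _ _ (fun a b h => by omega) _, filt_img _ _ (fun a b h => by omega) _]
      have h1 : (Finset.range k).filter (fun a => 2 * a + 1 < 2 * i + 1) = Finset.range i := by
        ext j; simp only [Finset.mem_filter, Finset.mem_range]; omega
      have h2 : ((Finset.range k).filter (fun j => pad j = true)).filter
          (fun a => 2 * a < 2 * i + 1) = (Finset.range (i + 1)).filter (fun j => pad j = true) := by
        rw [Finset.filter_filter]
        ext j; simp only [Finset.mem_filter, Finset.mem_range]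
        constructor
        · rintro ⟨hj, hp, hlt⟩; exact ⟨by omega, hp⟩
        · rintro ⟨hj, hp⟩; exact ⟨by omega, hp, by omega⟩
      rw [h1, h2]
      rw [Finset.card_union_of_disjoint (by
        rw [Finset.disjoint_left]
        rintro a ha hb
        simp only [Finset.mem_image] at ha hb
        obtain ⟨u, _, rfl⟩ := ha
        obtain ⟨v, _, hv⟩ := hb
        omega)]
      rw [Finset.card_image_of_injective _ (fun a b h => by omega),
        Finset.card_image_of_injective _ (fun a b h => by omega), Finset.card_range]
      rw [Finset.card_filter]
      have : ∀ j, (if pad j = true then 1 else 0) = (pad j).toNat := by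
        intro j; cases pad j <;> simp
      rw [Finset.sum_congr rfl (fun j _ => this j)]
    set Fs : Finset ℕ := G.image e with hFs
    have hFsub : ↑Fs ⊆ N := by
      rintro a ha
      simp only [hFs, Finset.coe_image, Set.mem_image, Finset.mem_coe] at ha
      obtain ⟨b, _, rfl⟩ := ha
      exact heN b
    obtain ⟨w, hw⟩ := hreal Fs hFsub
    refine ⟨w, ?_⟩
    rw [Set.mem_iInter₂]
    intro i hi
    rw [Finset.mem_range] at hi
    have hmemG : 2 * i + 1 ∈ G := by
      rw [hG]
      exact Finset.mem_union_left _ (Finset.mem_image_of_mem _ (Finset.mem_range.mpr hi))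
    have hmemF : e (2 * i + 1) ∈ Fs := Finset.mem_image_of_mem _ hmemG
    have hrankF : (Fs.filter (· < e (2 * i + 1))).card = (G.filter (· < 2 * i + 1)).card := by
      have : Fs.filter (· < e (2 * i + 1)) = (G.filter (· < 2 * i + 1)).image e := by
        rw [hFs, filt_img _ _ hemono.injective]
        congr 1
        ext a
        simp only [Finset.mem_filter]
        exact and_congr_right (fun _ => by rw [hemono.lt_iff_lt])
      rw [this, Finset.card_image_of_injective _ hemono.injective]
    rw [altSet, Set.mem_iInter₂] at hw
    have hw' := hw (e (2 * i + 1)) hmemF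
    rw [hrankF, hrankG i hi] at hw'
    cases hσ : σ i with
    | true =>
      have : ¬ Even (pos i) := by rw [hparity i, hσ]; simp
      rw [if_neg this] at hw'
      simpa [hσ] using hw'
    | false =>
      have : Even (pos i) := by rw [hparity i, hσ]
      rw [if_pos this] at hw'
      simpa [hσ] using hw'


end RosenthalAux

open RosenthalAux

/-- Rosenthal's ℓ¹ theorem: every bounded sequence in a real Banach space has a subsequence
that is either weakly Cauchy or equivalent to the standard unit vector basis of `ℓ¹`. -/
theorem rosenthal_l1 {X : Type*} [NormedAddCommGroup X] [NormedSpace ℝ X] [CompleteSpace X]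
    (x : ℕ → X) (C : ℝ) (hb : ∀ n, ‖x n‖ ≤ C) :
    ∃ φ : ℕ → ℕ, StrictMono φ ∧
      ((∀ f : X →L[ℝ] ℝ, ∃ l : ℝ, Tendsto (fun n => f (x (φ n))) atTop (nhds l)) ∨
        (∃ δ : ℝ, 0 < δ ∧ ∀ (c : ℕ → ℝ) (N : ℕ),
          δ * ∑ i ∈ Finset.range N, |c i| ≤ ‖∑ i ∈ Finset.range N, c i • x (φ i)‖)) := by
  classical
  have hC0 : (0:ℝ) ≤ C := le_trans (norm_nonneg (x 0)) (hb 0)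
  let Aq : ℚ → ℕ → Set (X →L[ℝ] ℝ) := fun r n => {h | ‖h‖ ≤ 1 ∧ h (x n) ≤ (r:ℝ)}
  let Bq : ℚ → ℕ → Set (X →L[ℝ] ℝ) := fun s n => {h | ‖h‖ ≤ 1 ∧ (s:ℝ) ≤ h (x n)}
  by_cases hind : ∃ (r s : ℚ), r < s ∧ ∃ φ : ℕ → ℕ, StrictMono φ ∧
      ∀ (k : ℕ) (σ : ℕ → Bool),
        (⋂ i ∈ Finset.range k, (if σ i then Bq s (φ i) else Aq r (φ i))).Nonempty
  · -- ℓ¹ branch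
    obtain ⟨r, s, hrs, φ, hφ, hpat⟩ := hind
    have hrsR : (r:ℝ) < s := by exact_mod_cast hrs
    refine ⟨φ, hφ, Or.inr ⟨((s:ℝ) - r)/2, half_pos (sub_pos.mpr hrsR), ?_⟩⟩
    intro c N
    rcases Nat.eq_zero_or_pos N with rfl | hN
    · simp
    obtain ⟨f, hf⟩ := hpat N (fun i => decide (0 ≤ c i))
    obtain ⟨gq, hg⟩ := hpat N (fun i => !decide (0 ≤ c i))
    rw [Set.mem_iInter₂] at hf hg
    have hf1 : ‖f‖ ≤ 1 := by
      have := hf 0 (Finset.mem_range.mpr hN)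
      split_ifs at this
      exacts [this.1, this.1]
    have hg1 : ‖gq‖ ≤ 1 := by
      have := hg 0 (Finset.mem_range.mpr hN)
      split_ifs at this
      exacts [this.1, this.1]
    have key : ∀ i ∈ Finset.range N,
        ((s:ℝ) - r) * |c i| ≤ c i * ((f - gq) (x (φ i))) := by
      intro i hi
      have hfi := hf i hi
      have hgi := hg i hi
      rw [ContinuousLinearMap.sub_apply]
      by_cases hc : 0 ≤ c i
      · rw [if_pos (by simp [hc]), Set.mem_setOf_eq] at hfi
        rw [if_neg (by simp [hc]), Set.mem_setOf_eq] at hgi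
        rw [abs_of_nonneg hc]
        nlinarith [hfi.2, hgi.2]
      · push_neg at hc
        rw [if_neg (by simp [not_le.mpr hc]), Set.mem_setOf_eq] at hfi
        rw [if_pos (by simp [not_le.mpr hc]), Set.mem_setOf_eq] at hgi
        rw [abs_of_neg hc]
        nlinarith [hfi.2, hgi.2]
    set S := ∑ i ∈ Finset.range N, c i • x (φ i) with hS
    have hsum : ((s:ℝ) - r) * ∑ i ∈ Finset.range N, |c i| ≤ (f - gq) S := by
      rw [hS, map_sum]
      rw [Finset.mul_sum]
      refine le_trans (Finset.sum_le_sum key) (le_of_eq ?_)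
      refine Finset.sum_congr rfl (fun i _ => ?_)
      rw [ContinuousLinearMap.map_smul, smul_eq_mul]
    have hnorm2 : ‖f - gq‖ ≤ 2 := le_trans (norm_sub_le f gq) (by linarith)
    have hfin : (f - gq) S ≤ 2 * ‖S‖ := by
      refine le_trans (le_abs_self _) ?_
      rw [← Real.norm_eq_abs]
      exact le_trans ((f - gq).le_opNorm S)
        (mul_le_mul_of_nonneg_right hnorm2 (norm_nonneg S))
    have hsumnn : (0:ℝ) ≤ ∑ i ∈ Finset.range N, |c i| :=
      Finset.sum_nonneg (fun i _ => abs_nonneg _)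
    nlinarith [hsum, hfin]
  · -- weakly Cauchy branch
    have key : ∀ (r s : ℚ), r < s → ∀ M : Set ℕ, M.Infinite →
        ∃ N, N ⊆ M ∧ N.Infinite ∧ ∀ f : X →L[ℝ] ℝ,
          {n | n ∈ N ∧ f ∈ Aq r n}.Finite ∨ {n | n ∈ N ∧ f ∈ Bq s n}.Finite := by
      intro r s hrs M hM
      rcases dichotomy (Aq r) (Bq s) M hM with ⟨φ, h1, _, h3⟩ | ⟨N, h1, h2, h3⟩
      · exact absurd ⟨r, s, hrs, φ, h1, h3⟩ hind
      · exact ⟨N, h1, h2, h3⟩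
    obtain ⟨q, hqsurj⟩ : ∃ q : ℕ → ℚ × ℚ, Function.Surjective q :=
      ⟨_, (Denumerable.eqv (ℚ × ℚ)).symm.surjective⟩
    let Good : ℕ → Set ℕ → Prop := fun j N =>
      (q j).1 < (q j).2 → ∀ f : X →L[ℝ] ℝ,
        {n | n ∈ N ∧ f ∈ Aq (q j).1 n}.Finite ∨ {n | n ∈ N ∧ f ∈ Bq (q j).2 n}.Finite
    have hGoodMono : ∀ j (N N' : Set ℕ), N' ⊆ N → Good j N → Good j N' := by
      intro j N N' hsub hg hlt f
      rcases hg hlt f with h | h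
      · exact Or.inl (h.subset (fun n hn => ⟨hsub hn.1, hn.2⟩))
      · exact Or.inr (h.subset (fun n hn => ⟨hsub hn.1, hn.2⟩))
    set Qp : ℕ × Set ℕ → Prop := fun p => p.2.Infinite ∧ ∀ j < p.1, Good j p.2 with hQp
    set Rp : ℕ × Set ℕ → ℕ × Set ℕ → Prop :=
      fun p p' => p'.1 = p.1 + 1 ∧ p'.2 ⊆ p.2 with hRp
    have hQ0 : Qp (0, Set.univ) := ⟨Set.infinite_univ, by omega⟩
    have hstep : ∀ p, Qp p → ∃ p', Qp p' ∧ Rp p p' := by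
      rintro ⟨k, M⟩ ⟨hMi, hMg⟩
      by_cases hlt : (q k).1 < (q k).2
      · obtain ⟨N, h1, h2, h3⟩ := key _ _ hlt M hMi
        refine ⟨(k + 1, N), ⟨h2, ?_⟩, rfl, h1⟩
        intro j hj
        rcases Nat.lt_or_ge j k with hjk | hjk
        · exact hGoodMono j M N h1 (hMg j hjk)
        · have : j = k := by omega
          subst this
          exact fun _ f => h3 f
      · refine ⟨(k + 1, M), ⟨hMi, ?_⟩, rfl, subset_rfl⟩
        intro j hj
        rcases Nat.lt_or_ge j k with hjk | hjk
        · exact hMg j hjk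
        · have : j = k := by omega
          subst this
          exact fun h => absurd h hlt
    obtain ⟨g, hg0, hgQ, hgR⟩ := exists_seq Qp Rp (0, Set.univ) hQ0 hstep
    have hidx : ∀ i, (g i).1 = i := by
      intro i
      induction i with
      | zero => rw [hg0]
      | succ i ih => rw [(hgR i).1, ih]
    set Mseq : ℕ → Set ℕ := fun k => (g k).2 with hMseq
    have hManti : ∀ i j, i ≤ j → Mseq j ⊆ Mseq i := by
      intro i j hij
      induction j with
      | zero => simp_all
      | succ j ih =>
        rcases Nat.lt_or_ge i (j + 1) with h | h
        · exact ((hgR j).2).trans (ih (Nat.lt_succ_iff.mp h))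
        · have : i = j + 1 := le_antisymm hij h
          subst this; exact subset_rfl
    have hMinf : ∀ k, (Mseq k).Infinite := fun k => (hgQ k).1
    have hMgood : ∀ j k, j < k → Good j (Mseq k) := by
      intro j k hjk
      have := (hgQ k).2 j (by rw [hidx k]; exact hjk)
      exact this
    -- diagonal sequence
    obtain ⟨m0, hm0⟩ := (hMinf 0).nonempty
    obtain ⟨g2, hg20, hg2Q, hg2R⟩ := exists_seq
      (fun p : ℕ × ℕ => p.2 ∈ Mseq p.1)
      (fun p p' => p'.1 = p.1 + 1 ∧ p.2 < p'.2) (0, m0) hm0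
      (by
        rintro ⟨k, m⟩ hm
        obtain ⟨m', hm', hlt⟩ := (hMinf (k + 1)).exists_gt m
        exact ⟨(k + 1, m'), hm', rfl, hlt⟩)
    have hidx2 : ∀ i, (g2 i).1 = i := by
      intro i
      induction i with
      | zero => rw [hg20]
      | succ i ih => rw [(hg2R i).1, ih]
    set nseq : ℕ → ℕ := fun i => (g2 i).2 with hnseq
    have hnmono : StrictMono nseq := strictMono_nat_of_lt_succ (fun i => (hg2R i).2)
    have hnmem : ∀ i, nseq i ∈ Mseq i := by
      intro i
      have := hg2Q i
      rwa [hidx2 i] at this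
    have hntail : ∀ k j, k ≤ j → nseq j ∈ Mseq k := fun k j hkj => hManti k j hkj (hnmem j)
    refine ⟨nseq, hnmono, Or.inl ?_⟩
    have main : ∀ f : X →L[ℝ] ℝ, ‖f‖ ≤ 1 →
        ∃ l : ℝ, Tendsto (fun n => f (x (nseq n))) atTop (nhds l) := by
      intro f hf1
      set a : ℕ → ℝ := fun j => f (x (nseq j)) with ha
      have habs : ∀ j, |a j| ≤ C := by
        intro j
        calc |a j| = ‖f (x (nseq j))‖ := (Real.norm_eq_abs _).symm
        _ ≤ ‖f‖ * ‖x (nseq j)‖ := f.le_opNorm _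
        _ ≤ 1 * C := mul_le_mul hf1 (hb _) (norm_nonneg _) zero_le_one
        _ = C := one_mul C
      have hbdd1 : IsBoundedUnder (· ≤ ·) atTop a :=
        isBoundedUnder_of ⟨C, fun j => (abs_le.mp (habs j)).2⟩
      have hbdd2 : IsBoundedUnder (· ≥ ·) atTop a :=
        isBoundedUnder_of ⟨-C, fun j => (abs_le.mp (habs j)).1⟩
      have heq : liminf a atTop = limsup a atTop := by
        rcases lt_or_ge (liminf a atTop) (limsup a atTop) with hlt | hle
        · exfalso
          obtain ⟨r, hr1, hr2⟩ := exists_rat_btwn hlt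
          obtain ⟨s, hs1, hs2⟩ := exists_rat_btwn hr2
          have hrsq : r < s := by exact_mod_cast hs1
          have hfreqA : {j | a j < (r:ℝ)}.Infinite :=
            Nat.frequently_atTop_iff_infinite.mp
              (frequently_lt_of_liminf_lt hbdd1.isCoboundedUnder_ge hr1)
          have hfreqB : {j | (s:ℝ) < a j}.Infinite :=
            Nat.frequently_atTop_iff_infinite.mp
              (frequently_lt_of_lt_limsup hbdd2.isCoboundedUnder_le hs2)
          obtain ⟨k, hqk⟩ := hqsurj (r, s)
          have hgood := hMgood k (k + 1) (Nat.lt_succ_self k)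
            (by rw [hqk]; exact_mod_cast hrsq) f
          rw [hqk] at hgood
          rcases hgood with hfin | hfin
          · have hinf2 : ({j | a j < (r:ℝ)} \ Set.Iio (k + 1)).Infinite :=
              hfreqA.diff (Set.finite_Iio _)
            refine hfin.not_infinite ?_
            refine Set.Infinite.mono ?_ (hinf2.image (hnmono.injective.injOn))
            rintro _ ⟨j, ⟨hjA, hjk⟩, rfl⟩
            refine ⟨hntail (k + 1) j (by simpa using hjk), hf1, le_of_lt hjA⟩
          · have hinf2 : ({j | (s:ℝ) < a j} \ Set.Iio (k + 1)).Infinite :=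
              hfreqB.diff (Set.finite_Iio _)
            refine hfin.not_infinite ?_
            refine Set.Infinite.mono ?_ (hinf2.image (hnmono.injective.injOn))
            rintro _ ⟨j, ⟨hjB, hjk⟩, rfl⟩
            refine ⟨hntail (k + 1) j (by simpa using hjk), hf1, le_of_lt hjB⟩
        · exact le_antisymm (liminf_le_limsup hbdd1 hbdd2) hle
      exact ⟨limsup a atTop, tendsto_of_liminf_eq_limsup heq rfl hbdd1 hbdd2⟩
    intro f
    by_cases hf0 : f = 0
    · refine ⟨0, ?_⟩
      simp only [hf0, ContinuousLinearMap.zero_apply]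
      exact tendsto_const_nhds
    · have hfn : ‖f‖ ≠ 0 := norm_ne_zero_iff.mpr hf0
      obtain ⟨l, hl⟩ := main (‖f‖⁻¹ • f)
        (by
          have hnn : ‖‖f‖⁻¹ • f‖ = ‖f‖⁻¹ * ‖f‖ := by
            rw [norm_smul ‖f‖⁻¹ f, Real.norm_eq_abs, abs_inv, abs_norm]
          rw [hnn, inv_mul_cancel₀ hfn])
      refine ⟨‖f‖ * l, ?_⟩
      have hrw : ∀ n, f (x (nseq n)) = ‖f‖ * ((‖f‖⁻¹ • f) (x (nseq n))) := by
        intro n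
        rw [ContinuousLinearMap.smul_apply, smul_eq_mul]
        field_simp
      have := hl.const_mul ‖f‖
      simpa only [← hrw] using this
end

section
/- If a Banach space B contains a closed subspace linearly isomorphic to c₀, then its dual B* contains a closed subspace linearly isomorphic to ℓ¹. -/
open scoped BigOperators

private lemma aux_mul_sign (x : ℝ) : x * Real.sign x = |x| := by
  rcases lt_trichotomy x 0 with h | h | h
  · rw [Real.sign_of_neg h, abs_of_neg h]; ring
  · simp [h]
  · rw [Real.sign_of_pos h, abs_of_pos h]; ring

private lemma aux_abs_sign_le (x : ℝ) : |Real.sign x| ≤ 1 := by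
  rcases lt_trichotomy x 0 with h | h | h
  · simp [Real.sign_of_neg h]
  · simp [h]
  · simp [Real.sign_of_pos h]

/-- Norm of an element of `lp _ 1` is the sum of the norms of coordinates. -/
private lemma aux_hasSum_norm (a : lp (fun _ : ℕ => ℝ) 1) :
    HasSum (fun n => ‖a n‖) ‖a‖ := by
  have h := lp.hasSum_norm (p := 1) (by norm_num) a
  simpa using h

set_option maxHeartbeats 1000000 in
/-- If a Banach space contains a closed subspace linearly isomorphic to `c₀`, then its dual
contains a closed subspace linearly isomorphic to `ℓ¹`. -/
theorem c0_subspace_dual_contains_l1 {B : Type*} [NormedAddCommGroup B] [NormedSpace ℝ B]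
    [CompleteSpace B]
    (T : ZeroAtInftyContinuousMap ℕ ℝ →L[ℝ] B) (c : ℝ) (hc : 0 < c)
    (hT : ∀ v, c * ‖v‖ ≤ ‖T v‖) :
    ∃ (S : lp (fun _ : ℕ => ℝ) 1 →L[ℝ] (B →L[ℝ] ℝ)) (c' : ℝ), 0 < c' ∧
      ∀ v, c' * ‖v‖ ≤ ‖S v‖ := by
  classical
  have hcinv : (0:ℝ) ≤ 1 / c := by positivity
  -- coordinate bound on C₀
  have hcoord : ∀ (v : ZeroAtInftyContinuousMap ℕ ℝ) (n : ℕ), ‖v n‖ ≤ ‖v‖ := by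
    intro v n
    have := BoundedContinuousFunction.norm_coe_le_norm v.toBCF n
    simpa [ZeroAtInftyContinuousMap.norm_toBCF_eq_norm] using this
  -- T is injective
  have hinj : Function.Injective T := by
    intro x y hxy
    have h1 := hT (x - y)
    rw [map_sub, hxy, sub_self, norm_zero] at h1
    have h2 : ‖x - y‖ ≤ 0 := by nlinarith [norm_nonneg (x - y)]
    have h3 : x - y = 0 := by
      have := norm_nonneg (x - y)
      exact norm_eq_zero.mp (le_antisymm h2 this)
    exact sub_eq_zero.mp h3
  have hinj' : Function.Injective (T : ZeroAtInftyContinuousMap ℕ ℝ →ₗ[ℝ] B) := hinj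
  set M : Submodule ℝ B := LinearMap.range (T : ZeroAtInftyContinuousMap ℕ ℝ →ₗ[ℝ] B) with hM
  let e : ZeroAtInftyContinuousMap ℕ ℝ ≃ₗ[ℝ] M :=
    LinearEquiv.ofInjective (T : ZeroAtInftyContinuousMap ℕ ℝ →ₗ[ℝ] B) hinj'
  have he_symm : ∀ (v : ZeroAtInftyContinuousMap ℕ ℝ) (h : T v ∈ M),
      e.symm ⟨T v, h⟩ = v := by
    intro v h
    apply e.injective
    rw [e.apply_symm_apply]
    apply Subtype.ext
    exact (LinearEquiv.ofInjective_apply _ v).symm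
  -- coordinate functionals, extended to B via Hahn-Banach
  have key : ∀ n : ℕ, ∃ g : B →L[ℝ] ℝ, ‖g‖ ≤ 1 / c ∧ ∀ v, g (T v) = v n := by
    intro n
    -- coordinate linear functional on C₀
    let coordLM : ZeroAtInftyContinuousMap ℕ ℝ →ₗ[ℝ] ℝ :=
      { toFun := fun v => v n
        map_add' := fun v w => rfl
        map_smul' := fun r v => rfl }
    have hbound : ∀ x : M, ‖(coordLM.comp e.symm.toLinearMap) x‖ ≤ (1 / c) * ‖x‖ := by
      rintro ⟨x, hx⟩
      obtain ⟨v, rfl⟩ := hx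
      have hmem : T v ∈ M := ⟨v, rfl⟩
      have h1 : (coordLM.comp e.symm.toLinearMap) ⟨T v, hmem⟩ = v n := by
        simp only [LinearMap.comp_apply, LinearEquiv.coe_toLinearMap]
        rw [he_symm v hmem]
        rfl
      show ‖(coordLM.comp e.symm.toLinearMap) (⟨T v, hmem⟩ : M)‖ ≤ (1 / c) * ‖(⟨T v, hmem⟩ : M)‖
      rw [h1]
      have h2 : ‖v n‖ ≤ ‖v‖ := hcoord v n
      have h3 : c * ‖v‖ ≤ ‖T v‖ := hT v
      have h4 : ‖(⟨T v, hmem⟩ : M)‖ = ‖T v‖ := rfl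
      rw [h4]
      calc ‖v n‖ ≤ ‖v‖ := h2
        _ ≤ (1 / c) * ‖T v‖ := by
            rw [div_mul_eq_mul_div, le_div_iff₀ hc]; linarith
    let φ : M →L[ℝ] ℝ := LinearMap.mkContinuous _ (1 / c) hbound
    obtain ⟨g, hg1, hg2⟩ := exists_extension_norm_eq M φ
    refine ⟨g, ?_, ?_⟩
    · rw [hg2]
      exact LinearMap.mkContinuous_norm_le _ hcinv _
    · intro v
      have hmem : T v ∈ M := ⟨v, rfl⟩
      have := hg1 ⟨T v, hmem⟩
      rw [this]
      show (coordLM.comp e.symm.toLinearMap) ⟨T v, hmem⟩ = v n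
      simp only [LinearMap.comp_apply, LinearEquiv.coe_toLinearMap]
      rw [he_symm v hmem]
      rfl
  choose f hf1 hf2 using key
  -- summability
  have hnormle : ∀ (a : lp (fun _ : ℕ => ℝ) 1) (n : ℕ), ‖a n • f n‖ ≤ ‖a n‖ * (1 / c) := by
    intro a n
    calc ‖a n • f n‖ ≤ ‖a n‖ * ‖f n‖ := ContinuousLinearMap.opNorm_smul_le (a n) (f n)
      _ ≤ ‖a n‖ * (1 / c) := mul_le_mul_of_nonneg_left (hf1 n) (norm_nonneg _)
  have hsummable_norm : ∀ a : lp (fun _ : ℕ => ℝ) 1, Summable (fun n => ‖a n • f n‖) := by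
    intro a
    exact Summable.of_nonneg_of_le (fun n => norm_nonneg _) (hnormle a)
      ((aux_hasSum_norm a).summable.mul_right _)
  have hsummable : ∀ a : lp (fun _ : ℕ => ℝ) 1, Summable (fun n => a n • f n) :=
    fun a => (hsummable_norm a).of_norm
  -- the linear map
  let Slin : lp (fun _ : ℕ => ℝ) 1 →ₗ[ℝ] (B →L[ℝ] ℝ) :=
    { toFun := fun a => ∑' n, a n • f n
      map_add' := by
        intro a b
        have h : (fun n => (a + b) n • f n) = fun n => a n • f n + b n • f n := by
          funext n
          have h0 : (a + b) n = a n + b n := by rw [lp.coeFn_add]; rfl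
          rw [h0, add_smul]
        show ∑' n, (a + b) n • f n = (∑' n, a n • f n) + ∑' n, b n • f n
        rw [h, Summable.tsum_add (hsummable a) (hsummable b)]
      map_smul' := by
        intro r a
        have h : (fun n => (r • a) n • f n) = fun n => r • (a n • f n) := by
          funext n
          have h0 : (r • a) n = r • a n := by rw [lp.coeFn_smul]; rfl
          rw [h0, smul_assoc]
        show ∑' n, (r • a) n • f n = r • ∑' n, a n • f n
        rw [h]
        exact ((hsummable a).hasSum.const_smul r).tsum_eq }
  have hSbound : ∀ a : lp (fun _ : ℕ => ℝ) 1, ‖Slin a‖ ≤ (1 / c) * ‖a‖ := by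
    intro a
    have h1 : ‖Slin a‖ ≤ ∑' n, ‖a n • f n‖ :=
      norm_tsum_le_tsum_norm (hsummable_norm a)
    have h2 : ∑' n, ‖a n • f n‖ ≤ ∑' n, ‖a n‖ * (1 / c) :=
      Summable.tsum_le_tsum (hnormle a) (hsummable_norm a) ((aux_hasSum_norm a).summable.mul_right _)
    have h3 : ∑' n, ‖a n‖ * (1 / c) = ‖a‖ * (1 / c) := by
      rw [tsum_mul_right, (aux_hasSum_norm a).tsum_eq]
    linarith [h1, h2, h3.le, h3.ge]
  let S : lp (fun _ : ℕ => ℝ) 1 →L[ℝ] (B →L[ℝ] ℝ) :=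
    LinearMap.mkContinuous Slin (1 / c) hSbound
  refine ⟨S, (‖T‖ + 1)⁻¹, by positivity, ?_⟩
  intro a
  -- lower bound
  have main : ∀ N : ℕ, ∑ n ∈ Finset.range N, ‖a n‖ ≤ (‖T‖ + 1) * ‖S a‖ := by
    intro N
    -- the finitely supported test vector
    let w : ℕ → ℝ := fun n => if n < N then Real.sign (a n) else 0
    have hwfin : ∀ᶠ n in Filter.cofinite, w n = 0 := by
      rw [Filter.eventually_cofinite]
      apply Set.Finite.subset (Set.finite_Iio N)
      intro n hn
      by_contra h
      simp only [Set.mem_Iio, not_lt] at h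
      exact hn (if_neg (not_lt.mpr h))
    let v : ZeroAtInftyContinuousMap ℕ ℝ :=
      ⟨⟨w, continuous_of_discreteTopology⟩, by
        rw [Filter.cocompact_eq_cofinite ℕ]
        have hwfin' : w =ᶠ[Filter.cofinite] (fun _ => (0:ℝ)) := hwfin
        exact Filter.Tendsto.congr' hwfin'.symm tendsto_const_nhds⟩
    have hv_apply : ∀ n, v n = w n := fun n => rfl
    have hv_norm : ‖v‖ ≤ 1 := by
      rw [← ZeroAtInftyContinuousMap.norm_toBCF_eq_norm]
      apply BoundedContinuousFunction.norm_le zero_le_one |>.mpr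
      intro n
      show ‖w n‖ ≤ 1
      by_cases h : n < N
      · simp only [w, if_pos h, Real.norm_eq_abs]
        exact aux_abs_sign_le _
      · simp [w, if_neg h]
    -- evaluate S a at T v
    have heval : S a (T v) = ∑' n, a n * w n := by
      show Slin a (T v) = _
      have := ((hsummable a).hasSum.mapL (ContinuousLinearMap.apply ℝ ℝ (T v))).tsum_eq
      simp only [ContinuousLinearMap.apply_apply] at this
      show (∑' n, a n • f n) (T v) = _
      rw [← this]
      · congr 1
        funext n
        rw [ContinuousLinearMap.smul_apply, hf2 n v, hv_apply, smul_eq_mul]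
  -- sum computation
    have hsum_eq : ∑' n, a n * w n = ∑ n ∈ Finset.range N, ‖a n‖ := by
      rw [tsum_eq_sum (s := Finset.range N)]
      · apply Finset.sum_congr rfl
        intro n hn
        rw [Finset.mem_range] at hn
        simp only [w, if_pos hn, Real.norm_eq_abs]
        exact aux_mul_sign (a n)
      · intro n hn
        rw [Finset.mem_range, not_lt] at hn
        simp [w, if_neg (not_lt.mpr hn)]
    have h1 : ∑ n ∈ Finset.range N, ‖a n‖ = S a (T v) := by rw [heval, hsum_eq]
    have h2 : S a (T v) ≤ ‖S a (T v)‖ := le_abs_self _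
    have h3 : ‖S a (T v)‖ ≤ ‖S a‖ * ‖T v‖ := (S a).le_opNorm _
    have h4 : ‖T v‖ ≤ ‖T‖ * ‖v‖ := T.le_opNorm v
    have h5 : ‖T‖ * ‖v‖ ≤ ‖T‖ := by
      calc ‖T‖ * ‖v‖ ≤ ‖T‖ * 1 := mul_le_mul_of_nonneg_left hv_norm (ContinuousLinearMap.opNorm_nonneg T)
        _ = ‖T‖ := mul_one _
    have h6 : ‖S a‖ * ‖T v‖ ≤ ‖S a‖ * ‖T‖ :=
      mul_le_mul_of_nonneg_left (h4.trans h5) (ContinuousLinearMap.opNorm_nonneg _)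
    have h7 : ‖S a‖ * ‖T‖ ≤ (‖T‖ + 1) * ‖S a‖ := by
      rw [mul_comm]
      exact mul_le_mul_of_nonneg_right (by linarith [ContinuousLinearMap.opNorm_nonneg (S a)]) (ContinuousLinearMap.opNorm_nonneg _)
    linarith
  have htsum : ‖a‖ ≤ (‖T‖ + 1) * ‖S a‖ := by
    rw [← (aux_hasSum_norm a).tsum_eq]
    exact Summable.tsum_le_of_sum_range_le (aux_hasSum_norm a).summable main
  rw [inv_mul_le_iff₀ (by positivity)]
  linarith
end

section
/- A Banach space B with a Schauder basis (x_i) is reflexive if and only if (x_i) is both boundedly complete and shrinking. -/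
open Filter

/-- `x` is a Schauder basis of `B`: every vector has a unique expansion whose partial sums
converge to it. -/
def IsSchauderBasis {B : Type*} [NormedAddCommGroup B] [NormedSpace ℝ B] (x : ℕ → B) : Prop :=
  ∀ y : B, ∃! a : ℕ → ℝ,
    Tendsto (fun N => ∑ i ∈ Finset.range N, a i • x i) atTop (nhds y)

/-- The basis `x` is boundedly complete. -/
def BoundedlyComplete {B : Type*} [NormedAddCommGroup B] [NormedSpace ℝ B] (x : ℕ → B) : Prop :=
  ∀ a : ℕ → ℝ, (∃ M : ℝ, ∀ N, ‖∑ i ∈ Finset.range N, a i • x i‖ ≤ M) →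
    ∃ y : B, Tendsto (fun N => ∑ i ∈ Finset.range N, a i • x i) atTop (nhds y)

/-- The basis `x` is shrinking: the norms of the restrictions of any `f ∈ B*` to the spans of
the tails `{x i : i ≥ n}` tend to `0`. -/
def Shrinking {B : Type*} [NormedAddCommGroup B] [NormedSpace ℝ B] (x : ℕ → B) : Prop :=
  ∀ f : B →L[ℝ] ℝ, ∀ ε > (0:ℝ), ∃ N : ℕ, ∀ n ≥ N,
    ∀ v ∈ Submodule.span ℝ (x '' {i | n ≤ i}), ‖v‖ ≤ 1 → |f v| ≤ ε

/-!
The coordinate functionals of a basis of a Banach space are continuous: the sequences of partial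
sums form a closed subspace of `C(OnePoint ℕ, B)` on which evaluation at `∞` is a bijection onto
`B`, so the bounded inverse theorem makes the partial sum operators `P n` continuous (and, by
Banach–Steinhaus, uniformly bounded).

If `B` is reflexive, bounded sequences have weak cluster points (Banach–Alaoglu in `B**`). A
cluster point of bounded partial sums `∑ i < n, a i • x i` has coordinates `a`, so the series
converges. Unit vectors `v N` taken from ever later tail spans with `|f (v N)| > ε` would have a
cluster point with vanishing coordinates, i.e. `0`, contradicting `|f 0| ≥ ε`.

Conversely, for `F ∈ B**` put `a i = F (coord i)`. Then `g (∑ i < n, a i • x i) = F (g ∘ P n)`,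
so these partial sums are bounded by `sup ‖P n‖ * ‖F‖`; bounded completeness provides their limit
`y`, and shrinking gives `g ∘ P n → g` in norm, whence `g y = F g`.
-/

open Topology Finset

theorem exists_forall_mapClusterPt_of_surjective_inclusionInDoubleDual
    {𝕜 E : Type*} [RCLike 𝕜] [NormedAddCommGroup E] [NormedSpace 𝕜 E]
    (hJ : Function.Surjective (NormedSpace.inclusionInDoubleDual 𝕜 E))
    {ι : Type*} {l : Filter ι} [l.NeBot] {z : ι → E} {M : ℝ} (hz : ∀ i, ‖z i‖ ≤ M) :
    ∃ y : E, ∀ g : StrongDual 𝕜 E, MapClusterPt (g y) l (fun i => g (z i)) := by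
  let u : ι → WeakDual 𝕜 (StrongDual 𝕜 E) := fun i =>
    StrongDual.toWeakDual (NormedSpace.inclusionInDoubleDual 𝕜 E (z i))
  have hu (i : ι) : WeakDual.toStrongDual (u i) ∈ Metric.closedBall 0 M := by
    refine Metric.mem_closedBall.2 <|
      (dist_zero_right (WeakDual.toStrongDual (u i) : StrongDual 𝕜 (StrongDual 𝕜 E))).trans_le ?_
    exact (NormedSpace.double_dual_bound 𝕜 E (z i)).trans (hz i)
  obtain ⟨F, -, hF⟩ := (WeakDual.isCompact_closedBall (𝕜 := 𝕜) 0 M).exists_mapClusterPt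
    (f := l) (tendsto_principal.2 (Eventually.of_forall hu))
  obtain ⟨y, hy⟩ := hJ (WeakDual.toStrongDual F)
  refine ⟨y, fun g => ?_⟩
  have : g y = F g := by rw [← NormedSpace.dual_def 𝕜 E y g, hy]; rfl
  exact this ▸ hF.continuousAt_comp (f := fun F => F g) (WeakDual.eval_continuous g).continuousAt

theorem abs_le_mul_norm_of_mem_closure {E : Type*} [NormedAddCommGroup E] [NormedSpace ℝ E]
    {S : Submodule ℝ E} {f : StrongDual ℝ E} {ε : ℝ} (hε : 0 ≤ ε)
    (hf : ∀ v ∈ S, ‖v‖ ≤ 1 → |f v| ≤ ε) {w : E} (hw : w ∈ closure (S : Set E)) :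
    |f w| ≤ ε * ‖w‖ := by
  have hnorm : ‖f.comp S.subtypeL‖ ≤ ε :=
    ContinuousLinearMap.opNorm_le_of_unit_norm hε fun v hv => hf v v.2 hv.le
  have hS : ∀ v ∈ S, |f v| ≤ ε * ‖v‖ := fun v hv =>
    (f.comp S.subtypeL).le_of_opNorm_le hnorm ⟨v, hv⟩
  exact closure_minimal hS
    (isClosed_le (continuous_abs.comp f.continuous) (continuous_const.mul continuous_norm)) hw

namespace SchauderBasis

variable {𝕜 X : Type*} [NontriviallyNormedField 𝕜] [NormedAddCommGroup X] [NormedSpace 𝕜 X]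
  (b : SchauderBasis 𝕜 X)

theorem coord_sum_smul (a : ℕ → 𝕜) {i n : ℕ} (hin : i < n) :
    b.coord i (∑ j ∈ range n, a j • b j) = a i := by
  simp [b.ortho, Pi.single_apply, hin]

theorem coord_eq_zero_of_mem_span_tail {i n : ℕ} (hin : i < n) {v : X}
    (hv : v ∈ Submodule.span 𝕜 (b '' {j | n ≤ j})) : b.coord i v = 0 := by
  refine (Submodule.span_le (p := LinearMap.ker (b.coord i).toLinearMap)).2 ?_ hv
  rintro - ⟨j, hj, rfl⟩
  simp [b.ortho, (hin.trans_le hj).ne]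

theorem eq_zero_of_forall_coord_eq_zero {y : X} (h : ∀ i, b.coord i y = 0) : y = 0 :=
  tendsto_nhds_unique (b.tendsto_proj y) (by simp [h])

theorem sub_proj_mem_closure_span_tail (n : ℕ) (y : X) :
    y - b.proj n y ∈ closure (Submodule.span 𝕜 (b '' {j | n ≤ j}) : Set X) := by
  refine mem_closure_of_tendsto ((b.tendsto_proj y).sub_const (b.proj n y)) ?_
  filter_upwards [eventually_ge_atTop n] with m hm
  rw [proj_apply, proj_apply, sum_range_sub_sum_range hm]
  exact Submodule.sum_mem _ fun i hi => Submodule.smul_mem _ _ <|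
    Submodule.subset_span ⟨i, (mem_filter.1 hi).2, rfl⟩

theorem comp_proj_eq_sum (g : StrongDual 𝕜 X) (n : ℕ) :
    g ∘L b.proj n = ∑ i ∈ range n, g (b i) • b.coord i := by
  ext y
  simp [mul_comm]

end SchauderBasis

section

variable {B : Type*} [NormedAddCommGroup B] [NormedSpace ℝ B]

def partialSumSeqs (x : ℕ → B) : Submodule ℝ C(OnePoint ℕ, B) where
  carrier := {φ | φ (0 : ℕ) = 0 ∧ ∀ n : ℕ, φ (n + 1 : ℕ) - φ n ∈ ℝ ∙ x n}
  zero_mem' := ⟨rfl, fun n => by simp⟩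
  add_mem' {φ ψ} hφ hψ := ⟨by simp [hφ.1, hψ.1], fun n => by
    simpa only [ContinuousMap.add_apply, add_sub_add_comm] using add_mem (hφ.2 n) (hψ.2 n)⟩
  smul_mem' c φ hφ := ⟨by simp [hφ.1], fun n => by
    simpa only [ContinuousMap.smul_apply, ← smul_sub] using Submodule.smul_mem _ c (hφ.2 n)⟩

theorem isClosed_partialSumSeqs (x : ℕ → B) :
    IsClosed (partialSumSeqs x : Set C(OnePoint ℕ, B)) := by
  have hspan (n : ℕ) : IsClosed ((ℝ ∙ x n : Submodule ℝ B) : Set B) :=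
    Submodule.closed_of_finiteDimensional _
  simp only [partialSumSeqs, Submodule.coe_set_mk, AddSubmonoid.coe_set_mk,
    AddSubsemigroup.coe_set_mk, Set.ofPred_and, Set.ofPred_forall]
  exact (isClosed_eq (continuous_eval_const _) continuous_const).inter <|
    isClosed_iInter fun n =>
      (hspan n).preimage ((continuous_eval_const _).sub (continuous_eval_const _))

instance [CompleteSpace B] (x : ℕ → B) : CompleteSpace (partialSumSeqs x) :=
  (isClosed_partialSumSeqs x).completeSpace_coe

theorem exists_eq_sum_of_mem_partialSumSeqs {x : ℕ → B} {φ : C(OnePoint ℕ, B)}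
    (hφ : φ ∈ partialSumSeqs x) : ∃ a : ℕ → ℝ, ∀ n : ℕ, φ n = ∑ i ∈ range n, a i • x i := by
  choose a ha using fun n => Submodule.mem_span_singleton.1 (hφ.2 n)
  refine ⟨a, fun n => ?_⟩
  induction n with
  | zero => simpa using hφ.1
  | succ n ih => rw [sum_range_succ, ← ih, ha n, add_sub_cancel]

noncomputable def limitCLM (x : ℕ → B) : partialSumSeqs x →L[ℝ] B :=
  (ContinuousMap.evalCLM ℝ OnePoint.infty).comp (partialSumSeqs x).subtypeL

namespace IsSchauderBasis

variable {x : ℕ → B} (hx : IsSchauderBasis x)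
include hx

noncomputable def coeff (y : B) : ℕ → ℝ := (hx y).choose

theorem tendsto_coeff (y : B) :
    Tendsto (fun N => ∑ i ∈ range N, hx.coeff y i • x i) atTop (𝓝 y) :=
  (hx y).choose_spec.1

theorem coeff_eq_of_tendsto {y : B} {a : ℕ → ℝ}
    (h : Tendsto (fun N => ∑ i ∈ range N, a i • x i) atTop (𝓝 y)) : hx.coeff y = a :=
  ((hx y).choose_spec.2 a h).symm

theorem coeff_zero : hx.coeff 0 = 0 :=
  hx.coeff_eq_of_tendsto (by simp)

theorem coeff_basis (j : ℕ) : hx.coeff (x j) = Pi.single j 1 := by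
  refine hx.coeff_eq_of_tendsto (tendsto_const_nhds.congr' ?_)
  filter_upwards [eventually_gt_atTop j] with N hN
  rw [sum_eq_single_of_mem j (mem_range.2 hN) fun i _ hij => by simp [hij]]
  simp

theorem ne_zero (i : ℕ) : x i ≠ 0 := fun hi => by
  simpa [hi, hx.coeff_zero] using congrFun (hx.coeff_basis i) i

theorem ker_limitCLM : (limitCLM x).ker = ⊥ := by
  refine LinearMap.ker_eq_bot'.2 fun ⟨φ, hφ⟩ hlim => ?_
  obtain ⟨a, ha⟩ := exists_eq_sum_of_mem_partialSumSeqs hφ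
  have htendsto := (OnePoint.continuous_iff_from_nat φ).1 φ.continuous
  have ha0 : a = 0 := by
    rw [← hx.coeff_eq_of_tendsto (y := 0) (a := a), hx.coeff_zero]
    have : φ OnePoint.infty = 0 := hlim
    simpa only [← ha, this] using htendsto
  ext t
  induction t using OnePoint.rec with
  | infty => exact hlim
  | coe n => simp [ha, ha0]

noncomputable def partialSumsMap (y : B) : C(OnePoint ℕ, B) :=
  OnePoint.continuousMapMkNat (fun N => ∑ i ∈ range N, hx.coeff y i • x i) y (hx.tendsto_coeff y)

theorem partialSumsMap_coe (y : B) (n : ℕ) :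
    hx.partialSumsMap y n = ∑ i ∈ range n, hx.coeff y i • x i :=
  rfl

theorem partialSumsMap_mem (y : B) : hx.partialSumsMap y ∈ partialSumSeqs x :=
  ⟨by simp [partialSumsMap_coe], fun n => by
    simp [partialSumsMap_coe, sum_range_succ, Submodule.smul_mem,
      Submodule.mem_span_singleton_self]⟩

theorem range_limitCLM : (limitCLM x).range = ⊤ :=
  LinearMap.range_eq_top.2 fun y => ⟨⟨hx.partialSumsMap y, hx.partialSumsMap_mem y⟩, rfl⟩

variable [CompleteSpace B]

noncomputable def limitEquiv : partialSumSeqs x ≃L[ℝ] B :=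
  .ofBijective (limitCLM x) hx.ker_limitCLM hx.range_limitCLM

noncomputable def partialSumCLM (n : ℕ) : B →L[ℝ] B :=
  (ContinuousMap.evalCLM ℝ (n : OnePoint ℕ)).comp
    ((partialSumSeqs x).subtypeL.comp hx.limitEquiv.symm.toContinuousLinearMap)

theorem partialSumCLM_apply (n : ℕ) (y : B) :
    hx.partialSumCLM n y = ∑ i ∈ range n, hx.coeff y i • x i := by
  have : hx.limitEquiv.symm y = ⟨hx.partialSumsMap y, hx.partialSumsMap_mem y⟩ :=
    hx.limitEquiv.symm_apply_eq.2 rfl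
  change ((hx.limitEquiv.symm y : partialSumSeqs x) : C(OnePoint ℕ, B)) n = _
  rw [this, partialSumsMap_coe]

/-- A functional `g` with `g (x n) = ‖x n‖` reads the `n`-th coefficient off
`partialSumCLM (n + 1) y - partialSumCLM n y = coeff y n • x n`. -/
noncomputable def coord (n : ℕ) : StrongDual ℝ B :=
  ‖x n‖⁻¹ • (exists_dual_vector'' ℝ (x n)).choose.comp
    (hx.partialSumCLM (n + 1) - hx.partialSumCLM n)

theorem coord_apply (n : ℕ) (y : B) : hx.coord n y = hx.coeff y n := by
  obtain ⟨-, hg⟩ := (exists_dual_vector'' ℝ (x n)).choose_spec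
  have hdiff : hx.partialSumCLM (n + 1) y - hx.partialSumCLM n y = hx.coeff y n • x n := by
    simp [partialSumCLM_apply, sum_range_succ]
  have hn : ‖x n‖ ≠ 0 := norm_ne_zero_iff.2 (hx.ne_zero n)
  simp only [coord, smul_apply, ContinuousLinearMap.comp_apply, sub_apply, hdiff, map_smul, hg,
    smul_eq_mul, RCLike.ofReal_real_eq_id, id]
  field_simp

noncomputable def toSchauderBasis : SchauderBasis ℝ B where
  basis := x
  coord := hx.coord
  ortho i j := by simp [coord_apply, coeff_basis, Pi.single_apply]
  expansion y := by
    rw [HasSum, SummationFilter.conditional_filter_eq_map_range, tendsto_map'_iff]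
    simpa only [Function.comp_def, coord_apply] using hx.tendsto_coeff y

end IsSchauderBasis

namespace SchauderBasis

variable (b : SchauderBasis ℝ B)

theorem boundedlyComplete_of_surjective
    (hJ : Function.Surjective (NormedSpace.inclusionInDoubleDual ℝ B)) :
    BoundedlyComplete ⇑b := by
  rintro a ⟨M, hM⟩
  obtain ⟨y, hy⟩ :=
    exists_forall_mapClusterPt_of_surjective_inclusionInDoubleDual hJ (l := atTop) hM
  have hcoord (i : ℕ) : b.coord i y = a i :=
    isClosed_singleton.mem_of_mapClusterPt (hy (b.coord i)) <| by
      filter_upwards [eventually_gt_atTop i] with n hn using b.coord_sum_smul a hn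
  exact ⟨y, (b.tendsto_proj y).congr fun n => by simp [hcoord]⟩

theorem shrinking_of_surjective
    (hJ : Function.Surjective (NormedSpace.inclusionInDoubleDual ℝ B)) :
    Shrinking ⇑b := by
  by_contra hns
  simp only [Shrinking, not_forall, not_exists, not_le] at hns
  obtain ⟨f, ε, hε, hbad⟩ := hns
  choose n hn v hv hv1 hfv using hbad
  obtain ⟨y, hy⟩ :=
    exists_forall_mapClusterPt_of_surjective_inclusionInDoubleDual hJ (l := atTop) hv1
  have hy0 : y = 0 := b.eq_zero_of_forall_coord_eq_zero fun i =>
    isClosed_singleton.mem_of_mapClusterPt (hy (b.coord i)) <| by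
      filter_upwards [eventually_gt_atTop i] with N hN using
        b.coord_eq_zero_of_mem_span_tail (hN.trans_le (hn N)) (hv N)
  have hfy : ε ≤ |f y| := (isClosed_le continuous_const continuous_abs).mem_of_mapClusterPt
    (hy f) (Eventually.of_forall fun N => (hfv N).le)
  linarith [show |f y| = 0 by simp [hy0]]

variable [CompleteSpace B]

theorem tendsto_comp_proj (hs : Shrinking ⇑b) (g : StrongDual ℝ B) :
    Tendsto (fun n => g ∘L b.proj n) atTop (𝓝 g) := by
  obtain ⟨C, hC⟩ := b.exists_norm_proj_le
  have hC0 : 0 ≤ C := (norm_nonneg _).trans (hC 0)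
  refine Metric.tendsto_atTop.2 fun ε hε => ?_
  obtain ⟨N, hN⟩ := hs g (ε / (2 * (1 + C))) (by positivity)
  refine ⟨N, fun n hn => ?_⟩
  rw [dist_eq_norm]
  refine lt_of_le_of_lt (ContinuousLinearMap.opNorm_le_bound _ (by positivity) fun y => ?_)
    (half_lt_self hε)
  calc ‖(g ∘L b.proj n - g) y‖ = |g (y - b.proj n y)| := by simp [abs_sub_comm]
    _ ≤ ε / (2 * (1 + C)) * ‖y - b.proj n y‖ := abs_le_mul_norm_of_mem_closure (by positivity)
        (hN n hn) (b.sub_proj_mem_closure_span_tail n y)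
    _ ≤ ε / (2 * (1 + C)) * ((1 + C) * ‖y‖) := by
        gcongr
        calc ‖y - b.proj n y‖ ≤ ‖y‖ + ‖b.proj n‖ * ‖y‖ :=
              (norm_sub_le _ _).trans (by gcongr; exact (b.proj n).le_opNorm y)
          _ ≤ (1 + C) * ‖y‖ := by nlinarith [hC n, norm_nonneg y]
    _ = ε / 2 * ‖y‖ := by field_simp

theorem surjective_inclusionInDoubleDual (hbc : BoundedlyComplete ⇑b) (hs : Shrinking ⇑b) :
    Function.Surjective (NormedSpace.inclusionInDoubleDual ℝ B) := by
  obtain ⟨C, hC⟩ := b.exists_norm_proj_le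
  have hC0 : 0 ≤ C := (norm_nonneg _).trans (hC 0)
  intro F
  let a (i : ℕ) : ℝ := F (b.coord i)
  have hFg (g : StrongDual ℝ B) (n : ℕ) : g (∑ i ∈ range n, a i • b i) = F (g ∘L b.proj n) := by
    simp [b.comp_proj_eq_sum, a, mul_comm]
  have hbdd (n : ℕ) : ‖∑ i ∈ range n, a i • b i‖ ≤ C * ‖F‖ :=
    NormedSpace.norm_le_dual_bound ℝ _ (by positivity) fun g => by
      rw [hFg]
      calc ‖F (g ∘L b.proj n)‖ ≤ ‖F‖ * (‖g‖ * ‖b.proj n‖) :=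
            (F.le_opNorm _).trans (by gcongr; exact g.opNorm_comp_le _)
        _ ≤ ‖F‖ * (‖g‖ * C) := by gcongr; exact hC n
        _ = C * ‖F‖ * ‖g‖ := by ring
  obtain ⟨y, hy⟩ := hbc a ⟨_, hbdd⟩
  refine ⟨y, ContinuousLinearMap.ext fun g => ?_⟩
  rw [NormedSpace.dual_def]
  refine tendsto_nhds_unique ((g.continuous.tendsto y).comp hy) ?_
  simpa only [Function.comp_def, hFg] using
    (F.continuous.tendsto g).comp (b.tendsto_comp_proj hs g)

end SchauderBasis

end

/-- A Banach space with a Schauder basis is reflexive iff the basis is both boundedly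
complete and shrinking. -/
theorem reflexive_iff_boundedlyComplete_and_shrinking {B : Type*} [NormedAddCommGroup B]
    [NormedSpace ℝ B] [CompleteSpace B] (x : ℕ → B) (hx : IsSchauderBasis x) :
    Function.Surjective (NormedSpace.inclusionInDoubleDual ℝ B) ↔
      (BoundedlyComplete x ∧ Shrinking x) := by
  let b := hx.toSchauderBasis
  exact ⟨fun hJ => ⟨b.boundedlyComplete_of_surjective hJ, b.shrinking_of_surjective hJ⟩,
    fun h => b.surjective_inclusionInDoubleDual h.1 h.2⟩
end

section
/- Let B be a Banach space with an unconditional Schauder basis (z_i). Then (z_i) fails to be boundedly complete if and only if B contains a closed subspace linearly isomorphic to c₀. -/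
open Filter

/-- The basis `x` is unconditional: every basis expansion converges unconditionally. -/
def IsUnconditional {B : Type*} [NormedAddCommGroup B] [NormedSpace ℝ B] (x : ℕ → B) : Prop :=
  ∀ (y : B) (a : ℕ → ℝ),
    Tendsto (fun N => ∑ i ∈ Finset.range N, a i • x i) atTop (nhds y) →
    HasSum (fun i => a i • x i) y

/-!
Let `C` bound the projections of the unconditional basis onto finite sets of coordinates. The
coordinate functionals are continuous since summation is an isomorphism, by the open mapping
theorem, from the Banach space of coefficient sequences with summable expansion onto `B`.

If the partial sums of `∑ aᵢ zᵢ` are bounded by `M` but diverge, they contain consecutive blocks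
`uⱼ` of norm at least `ε`, and every finite sum of blocks is a projection of a partial sum, hence
of norm at most `C M`. By Hahn–Banach such a series can be summed against any null sequence, which
gives an operator `T v = ∑ vⱼ uⱼ` on `c₀`; projecting `T v` onto the `j`-th block gives
`ε |vⱼ| ≤ C ‖T v‖`.

Conversely, if `T` embeds `c₀`, the vectors `xₘ = T eₘ` have norm at least `c` while their finite
sums are bounded by `‖T‖`, so every functional is absolutely summable along them and their
coordinates tend to `0`. A gliding hump makes a subsequence a small perturbation of consecutive
blocks with bounded partial sums. Bounded completeness makes the series of these blocks converge,
so the blocks tend to `0`, contradicting `‖xₘ‖ ≥ c`.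
-/

open Finset Topology ZeroAtInfty

theorem Summable.bddAbove_norm_sum {ι E : Type*} [SeminormedAddCommGroup E] {f : ι → E}
    (hf : Summable f) : BddAbove (Set.range fun s : Finset ι => ‖∑ i ∈ s, f i‖) := by
  classical
  obtain ⟨s₀, hs₀⟩ := hf.vanishing (Metric.ball_mem_nhds 0 one_pos)
  refine ⟨∑ i ∈ s₀, ‖f i‖ + 1, ?_⟩
  rintro _ ⟨s, rfl⟩
  have htail : ‖∑ i ∈ s \ s₀, f i‖ < 1 := by
    simpa using hs₀ (s \ s₀) sdiff_disjoint
  calc ‖∑ i ∈ s, f i‖ = ‖∑ i ∈ s ∩ s₀, f i + ∑ i ∈ s \ s₀, f i‖ := by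
        rw [sum_inter_add_sum_sdiff]
    _ ≤ ∑ i ∈ s ∩ s₀, ‖f i‖ + ‖∑ i ∈ s \ s₀, f i‖ := (norm_add_le _ _).trans
        (add_le_add_left (norm_sum_le _ _) _)
    _ ≤ ∑ i ∈ s₀, ‖f i‖ + 1 := add_le_add
        (sum_le_sum_of_subset_of_nonneg inter_subset_right fun _ _ _ => norm_nonneg _) htail.le

theorem exists_strictMono_le_dist_of_not_cauchySeq {X : Type*} [PseudoMetricSpace X] {s : ℕ → X}
    (hs : ¬CauchySeq s) :
    ∃ ε > 0, ∃ n : ℕ → ℕ, StrictMono n ∧ ∀ j, ε ≤ dist (s (n (j + 1))) (s (n j)) := by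
  rw [Metric.cauchySeq_iff'] at hs
  push Not at hs
  obtain ⟨ε, hε, h⟩ := hs
  choose f hf hfε using h
  have hlt : ∀ N, N < f N := fun N => (hf N).lt_of_ne fun h => by
    have := hfε N
    rw [← h, dist_self] at this
    linarith
  refine ⟨ε, hε, fun j => f^[j] 0, strictMono_nat_of_lt_succ fun j => ?_, fun j => ?_⟩
  · rw [Function.iterate_succ_apply']
    exact hlt _
  · dsimp only
    rw [Function.iterate_succ_apply']
    exact hfε _

theorem disjoint_Ico_of_ne {n : ℕ → ℕ} (hn : Monotone n) {j j' : ℕ} (h : j ≠ j') :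
    Disjoint (Ico (n j) (n (j + 1))) (Ico (n j') (n (j' + 1))) := by
  simpa [← coe_Ico, Order.succ_eq_add_one] using hn.pairwise_disjoint_on_Ico_succ h

namespace ZeroAtInftyContinuousMap

variable {α β : Type*} [TopologicalSpace α] [SeminormedAddCommGroup β]

theorem norm_apply_le (f : C₀(α, β)) (x : α) : ‖f x‖ ≤ ‖f‖ :=
  f.toBCF.norm_coe_le_norm x

theorem norm_le {f : C₀(α, β)} {C : ℝ} (hC : 0 ≤ C) : ‖f‖ ≤ C ↔ ∀ x, ‖f x‖ ≤ C :=
  BoundedContinuousFunction.norm_le hC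

theorem sum_apply {ι : Type*} (s : Finset ι) (f : ι → C₀(α, β)) (x : α) :
    (∑ i ∈ s, f i) x = ∑ i ∈ s, f i x :=
  map_sum (⟨⟨fun g => g x, rfl⟩, fun _ _ => rfl⟩ : C₀(α, β) →+ β) f s

theorem tendsto_atTop_zero (f : C₀(ℕ, β)) : Tendsto f atTop (𝓝 0) := by
  simpa [cocompact_eq_cofinite, Nat.cofinite_eq_atTop] using
    ZeroAtInftyContinuousMapClass.zero_at_infty f

end ZeroAtInftyContinuousMap

noncomputable def c0Single (m : ℕ) : C₀(ℕ, ℝ) where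
  toFun := Pi.single m (1 : ℝ)
  continuous_toFun := continuous_of_discreteTopology
  zero_at_infty' := by
    rw [cocompact_eq_cofinite]
    exact tendsto_const_nhds.congr'
      ((eventually_cofinite_ne m).mono fun i hi => by simp [hi])

theorem norm_sum_c0Single_le (S : Finset ℕ) : ‖∑ m ∈ S, c0Single m‖ ≤ 1 := by
  refine (ZeroAtInftyContinuousMap.norm_le zero_le_one).2 fun i => ?_
  rw [ZeroAtInftyContinuousMap.sum_apply]
  change ‖∑ m ∈ S, (Pi.single m 1 : ℕ → ℝ) i‖ ≤ 1
  rw [sum_pi_single]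
  split_ifs <;> simp

theorem one_le_norm_c0Single (m : ℕ) : 1 ≤ ‖c0Single m‖ := by
  simpa [c0Single] using (c0Single m).norm_apply_le m

section SubsetSums

variable {E : Type*} [NormedAddCommGroup E] [NormedSpace ℝ E] {u : ℕ → E} {M : ℝ}

theorem sum_abs_apply_le_of_norm_sum_le (hM : ∀ S : Finset ℕ, ‖∑ j ∈ S, u j‖ ≤ M)
    (g : StrongDual ℝ E) (F : Finset ℕ) : ∑ j ∈ F, |g (u j)| ≤ 2 * (‖g‖ * M) := by
  have hg : ∀ S, |∑ j ∈ S, g (u j)| ≤ ‖g‖ * M := fun S => by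
    rw [← map_sum, ← Real.norm_eq_abs]
    exact (g.le_opNorm _).trans (mul_le_mul_of_nonneg_left (hM S) (norm_nonneg g))
  have hpos : ∑ j ∈ F with 0 ≤ g (u j), |g (u j)| = ∑ j ∈ F with 0 ≤ g (u j), g (u j) :=
    sum_congr rfl fun j hj => abs_of_nonneg (mem_filter.1 hj).2
  have hneg : ∑ j ∈ F with ¬0 ≤ g (u j), |g (u j)| = -∑ j ∈ F with ¬0 ≤ g (u j), g (u j) := by
    rw [← sum_neg_distrib]
    exact sum_congr rfl fun j hj => abs_of_neg (not_le.1 (mem_filter.1 hj).2)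
  rw [← sum_filter_add_sum_filter_not F fun j => 0 ≤ g (u j), hpos, hneg]
  linarith [le_abs_self (∑ j ∈ F with 0 ≤ g (u j), g (u j)),
    neg_abs_le (∑ j ∈ F with ¬0 ≤ g (u j), g (u j)), hg {j ∈ F | 0 ≤ g (u j)},
    hg {j ∈ F | ¬0 ≤ g (u j)}]

theorem norm_sum_smul_le_of_norm_sum_le (hM : ∀ S : Finset ℕ, ‖∑ j ∈ S, u j‖ ≤ M)
    (F : Finset ℕ) {c : ℕ → ℝ} {D : ℝ} (hD : 0 ≤ D) (hc : ∀ j ∈ F, |c j| ≤ D) :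
    ‖∑ j ∈ F, c j • u j‖ ≤ 2 * M * D := by
  have hM0 : 0 ≤ M := by simpa using hM ∅
  obtain ⟨g, hg, hgx⟩ := exists_dual_vector'' ℝ (∑ j ∈ F, c j • u j)
  calc ‖∑ j ∈ F, c j • u j‖ = ∑ j ∈ F, c j * g (u j) := by simpa using hgx.symm
    _ ≤ ∑ j ∈ F, D * |g (u j)| := sum_le_sum fun j hj => (le_abs_self _).trans <| by
          rw [abs_mul]; exact mul_le_mul_of_nonneg_right (hc j hj) (abs_nonneg _)
    _ = D * ∑ j ∈ F, |g (u j)| := (mul_sum _ _ _).symm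
    _ ≤ D * (2 * (‖g‖ * M)) :=
          mul_le_mul_of_nonneg_left (sum_abs_apply_le_of_norm_sum_le hM g F) hD
    _ ≤ 2 * M * D := by nlinarith [mul_le_mul_of_nonneg_right hg hM0]

theorem tendsto_apply_zero_of_norm_sum_le (hM : ∀ S : Finset ℕ, ‖∑ j ∈ S, u j‖ ≤ M)
    (g : StrongDual ℝ E) : Tendsto (fun j => g (u j)) atTop (𝓝 0) :=
  (tendsto_zero_iff_abs_tendsto_zero _).2 (summable_of_sum_range_le (fun _ => abs_nonneg _)
    fun n => sum_abs_apply_le_of_norm_sum_le hM g (range n)).tendsto_atTop_zero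

variable [CompleteSpace E]

theorem summable_smul_of_norm_sum_le (hM : ∀ S : Finset ℕ, ‖∑ j ∈ S, u j‖ ≤ M) {c : ℕ → ℝ}
    (hc : Tendsto c atTop (𝓝 0)) : Summable fun j => c j • u j := by
  refine summable_iff_vanishing_norm.2 fun ε hε => ?_
  have hM0 : 0 ≤ M := by simpa using hM ∅
  have hδ : 0 < ε / (2 * M + 1) := by positivity
  obtain ⟨n, hn⟩ := Metric.tendsto_atTop.1 hc _ hδ
  refine ⟨range n, fun t ht => ?_⟩
  have htail : ∀ j ∈ t, |c j| ≤ ε / (2 * M + 1) := fun j hj => by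
    simpa using (hn j (not_lt.1 fun h => disjoint_left.1 ht hj (mem_range.2 h))).le
  calc ‖∑ j ∈ t, c j • u j‖ ≤ 2 * M * (ε / (2 * M + 1)) :=
        norm_sum_smul_le_of_norm_sum_le hM t hδ.le htail
    _ < ε := by
        rw [mul_div_assoc', div_lt_iff₀ (by positivity)]
        linarith

theorem exists_c0_hasSum_of_norm_sum_le (hM : ∀ S : Finset ℕ, ‖∑ j ∈ S, u j‖ ≤ M) :
    ∃ T : C₀(ℕ, ℝ) →L[ℝ] E, ∀ v, HasSum (fun j => v j • u j) (T v) := by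
  have hsum (v : C₀(ℕ, ℝ)) : Summable fun j => v j • u j :=
    summable_smul_of_norm_sum_le hM v.tendsto_atTop_zero
  let T : C₀(ℕ, ℝ) →ₗ[ℝ] E :=
    { toFun v := ∑' j, v j • u j
      map_add' v w := by
        simp only [ZeroAtInftyContinuousMap.coe_add, Pi.add_apply, add_smul]
        exact (hsum v).tsum_add (hsum w)
      map_smul' r v := by
        simp only [ZeroAtInftyContinuousMap.coe_smul, Pi.smul_apply, smul_eq_mul, mul_smul,
          RingHom.id_apply]
        exact (hsum v).tsum_const_smul r }
  refine ⟨T.mkContinuous (2 * M) fun v => ?_, fun v => (hsum v).hasSum⟩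
  exact le_of_tendsto' (hsum v).hasSum.norm fun F =>
    norm_sum_smul_le_of_norm_sum_le hM F (norm_nonneg v) fun j _ => v.norm_apply_le j

end SubsetSums

section

variable {B : Type*} [NormedAddCommGroup B] [NormedSpace ℝ B] (z : ℕ → B)

/-- The vanishing condition makes the norm on `CoeffSpace z` definite. -/
def summableCoeffs : Submodule ℝ (ℕ → ℝ) where
  carrier := {a | Summable (fun i => a i • z i) ∧ ∀ i, z i = 0 → a i = 0}
  add_mem' {a a'} ha ha' :=
    ⟨by simpa [add_smul] using ha.1.add ha'.1, fun i hi => by simp [ha.2 i hi, ha'.2 i hi]⟩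
  zero_mem' := ⟨by simp, fun _ _ => rfl⟩
  smul_mem' r a ha :=
    ⟨by simpa [smul_smul] using ha.1.const_smul r, fun i hi => by simp [ha.2 i hi]⟩

/-- A type synonym, so that the norm below does not compete with the topology that
`summableCoeffs z` inherits from `ℕ → ℝ`. -/
def CoeffSpace : Type _ := summableCoeffs z

end

namespace CoeffSpace

variable {B : Type*} [NormedAddCommGroup B] [NormedSpace ℝ B] (z : ℕ → B)

instance : AddCommGroup (CoeffSpace z) := inferInstanceAs (AddCommGroup (summableCoeffs z))

instance : Module ℝ (CoeffSpace z) := inferInstanceAs (Module ℝ (summableCoeffs z))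

noncomputable instance : Norm (CoeffSpace z) := ⟨fun a => ⨆ F : Finset ℕ, ‖∑ i ∈ F, a.1 i • z i‖⟩

variable {z}

theorem summable (a : CoeffSpace z) : Summable fun i => a.1 i • z i := a.2.1

theorem norm_sum_smul_le (a : CoeffSpace z) (F : Finset ℕ) : ‖∑ i ∈ F, a.1 i • z i‖ ≤ ‖a‖ :=
  le_ciSup a.summable.bddAbove_norm_sum F

theorem norm_le {a : CoeffSpace z} {C : ℝ} (h : ∀ F : Finset ℕ, ‖∑ i ∈ F, a.1 i • z i‖ ≤ C) :
    ‖a‖ ≤ C :=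
  ciSup_le h

theorem norm_coeff_smul_le (a : CoeffSpace z) (i : ℕ) : ‖a.1 i • z i‖ ≤ ‖a‖ := by
  simpa using a.norm_sum_smul_le {i}

theorem eq_zero_of_norm_eq_zero {a : CoeffSpace z} (h : ‖a‖ = 0) : a = 0 := by
  refine Subtype.ext (funext fun i => ?_)
  have : a.1 i • z i = 0 := norm_le_zero_iff.1 (h ▸ a.norm_coeff_smul_le i)
  exact (smul_eq_zero.1 this).elim id (a.2.2 i)

theorem zero_val : (0 : CoeffSpace z).1 = 0 := rfl

theorem add_val (a a' : CoeffSpace z) : (a + a').1 = a.1 + a'.1 := rfl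

theorem smul_val (r : ℝ) (a : CoeffSpace z) : (r • a).1 = r • a.1 := rfl

theorem normedSpaceCore : NormedSpace.Core ℝ (CoeffSpace z) where
  norm_nonneg a := by simpa using a.norm_sum_smul_le ∅
  norm_smul r a := by
    simp only [Norm.norm, smul_val, Pi.smul_apply, smul_eq_mul, mul_smul, ← smul_sum,
      norm_smul]
    exact (Real.mul_iSup_of_nonneg (abs_nonneg r) _).symm
  norm_triangle a a' := norm_le fun F => by
    simpa only [add_val, Pi.add_apply, add_smul, sum_add_distrib] using
      (norm_add_le _ _).trans (add_le_add (a.norm_sum_smul_le F) (a'.norm_sum_smul_le F))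
  norm_eq_zero_iff a := by
    refine ⟨eq_zero_of_norm_eq_zero, ?_⟩
    rintro rfl
    exact le_antisymm (norm_le fun F => by simp [zero_val])
      (by simpa using (0 : CoeffSpace z).norm_sum_smul_le ∅)

noncomputable instance : NormedAddCommGroup (CoeffSpace z) := .ofCore normedSpaceCore

noncomputable instance : NormedSpace ℝ (CoeffSpace z) := .ofCore normedSpaceCore

theorem abs_le_inv_mul_norm (a : CoeffSpace z) (i : ℕ) : |a.1 i| ≤ ‖z i‖⁻¹ * ‖a‖ := by
  by_cases hz : z i = 0
  · rw [a.2.2 i hz, abs_zero]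
    positivity
  · rw [le_inv_mul_iff₀ (norm_pos_iff.2 hz), mul_comm, ← Real.norm_eq_abs, ← norm_smul]
    exact a.norm_coeff_smul_le i

variable (z) in
noncomputable def coeff (i : ℕ) : CoeffSpace z →L[ℝ] ℝ :=
  LinearMap.mkContinuous
    { toFun a := a.1 i
      map_add' _ _ := rfl
      map_smul' _ _ := rfl }
    ‖z i‖⁻¹ fun a => a.abs_le_inv_mul_norm i

theorem coeff_apply (i : ℕ) (a : CoeffSpace z) : coeff z i a = a.1 i := rfl

instance [CompleteSpace B] : CompleteSpace (CoeffSpace z) := by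
  refine Metric.complete_of_cauchySeq_tendsto fun u hu => ?_
  choose a ha using fun i =>
    cauchySeq_tendsto_of_complete ((coeff z i).uniformContinuous.comp_cauchySeq hu)
  have uniform : ∀ ε > 0, ∃ n₀, ∀ n ≥ n₀, ∀ F : Finset ℕ,
      ‖∑ i ∈ F, (a i - (u n).1 i) • z i‖ ≤ ε := by
    intro ε hε
    obtain ⟨n₀, hn₀⟩ := Metric.cauchySeq_iff.1 hu ε hε
    refine ⟨n₀, fun n hn F => le_of_tendsto ((tendsto_finsetSum F fun i _ =>
      ((ha i).sub_const ((u n).1 i)).smul_const (z i)).norm) ?_⟩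
    filter_upwards [eventually_ge_atTop n₀] with m hm
    calc ‖∑ i ∈ F, ((u m).1 i - (u n).1 i) • z i‖ = ‖∑ i ∈ F, (u m - u n).1 i • z i‖ := rfl
      _ ≤ ‖u m - u n‖ := (u m - u n).norm_sum_smul_le F
      _ ≤ ε := (dist_eq_norm (u m) (u n) ▸ hn₀ m hm n hn).le
  have hsum : Summable fun i => a i • z i := by
    refine summable_iff_vanishing_norm.2 fun ε hε => ?_
    obtain ⟨n, hn⟩ := uniform (ε / 2) (half_pos hε)
    obtain ⟨s, hs⟩ := summable_iff_vanishing_norm.1 (u n).summable (ε / 2) (half_pos hε)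
    refine ⟨s, fun t ht => ?_⟩
    calc ‖∑ i ∈ t, a i • z i‖
        = ‖∑ i ∈ t, (a i - (u n).1 i) • z i + ∑ i ∈ t, (u n).1 i • z i‖ := by
          simp [← sum_add_distrib, ← add_smul]
      _ < ε / 2 + ε / 2 :=
          (norm_add_le _ _).trans_lt (add_lt_add_of_le_of_lt (hn n le_rfl t) (hs t ht))
      _ = ε := add_halves ε
  have hzero : ∀ i, z i = 0 → a i = 0 := fun i hi =>
    tendsto_nhds_unique (ha i) (by simp [Function.comp_def, coeff_apply, (u _).2.2 i hi])
  let lim : CoeffSpace z := ⟨a, hsum, hzero⟩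
  refine ⟨lim, Metric.tendsto_atTop.2 fun ε hε => ?_⟩
  obtain ⟨n₀, hn₀⟩ := uniform (ε / 2) (half_pos hε)
  refine ⟨n₀, fun n hn => ?_⟩
  rw [dist_comm, dist_eq_norm]
  exact (norm_le (hn₀ n hn)).trans_lt (half_lt_self hε)

variable (z) in
noncomputable def sumCLM : CoeffSpace z →L[ℝ] B :=
  LinearMap.mkContinuous
    { toFun a := ∑' i, a.1 i • z i
      map_add' a a' := by
        simp only [add_val, Pi.add_apply, add_smul]
        exact a.summable.tsum_add a'.summable
      map_smul' r a := by
        simp only [smul_val, Pi.smul_apply, smul_eq_mul, mul_smul, RingHom.id_apply]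
        exact a.summable.tsum_const_smul r }
    1 fun a => by
      rw [one_mul]
      exact le_of_tendsto' a.summable.hasSum.norm a.norm_sum_smul_le

theorem hasSum_sumCLM (a : CoeffSpace z) : HasSum (fun i => a.1 i • z i) (sumCLM z a) :=
  a.summable.hasSum

end CoeffSpace

namespace IsSchauderBasis

variable {B : Type*} [NormedAddCommGroup B] [NormedSpace ℝ B] {z : ℕ → B}

theorem coeff_unique (hb : IsSchauderBasis z) {a a' : ℕ → ℝ} {y : B}
    (ha : HasSum (fun i => a i • z i) y) (ha' : HasSum (fun i => a' i • z i) y) : a = a' := by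
  obtain ⟨_, -, huniq⟩ := hb y
  exact (huniq a ha.tendsto_sum_nat).trans (huniq a' ha'.tendsto_sum_nat).symm

theorem ne_zero_s14 (hb : IsSchauderBasis z) (i : ℕ) : z i ≠ 0 := by
  intro hi
  have expansion (c : ℝ) : HasSum (fun j => (Pi.single i c : ℕ → ℝ) j • z j) 0 := by
    convert hasSum_zero with j
    by_cases hj : j = i <;> simp [hj, hi]
  simpa using congr_fun (hb.coeff_unique (expansion 1) (expansion 0)) i

variable [CompleteSpace B]

noncomputable def coeffEquiv (hb : IsSchauderBasis z) (hu : IsUnconditional z) :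
    CoeffSpace z ≃L[ℝ] B :=
  ContinuousLinearEquiv.ofBijective (CoeffSpace.sumCLM z)
    (LinearMap.ker_eq_bot.2 fun a a' h => Subtype.ext <| hb.coeff_unique
      (CoeffSpace.hasSum_sumCLM a) (h ▸ CoeffSpace.hasSum_sumCLM a'))
    (LinearMap.range_eq_top.2 fun y => by
      obtain ⟨a, ha, -⟩ := hb y
      have hs := hu y a ha
      exact ⟨⟨a, hs.summable, fun i hi => absurd hi (hb.ne_zero_s14 i)⟩, hs.tsum_eq⟩)

theorem coeffEquiv_apply (hb : IsSchauderBasis z) (hu : IsUnconditional z)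
    (a : CoeffSpace z) : hb.coeffEquiv hu a = CoeffSpace.sumCLM z a :=
  rfl

theorem hasSum_coeffEquiv_symm (hb : IsSchauderBasis z) (hu : IsUnconditional z)
    (y : B) : HasSum (fun i => ((hb.coeffEquiv hu).symm y).1 i • z i) y := by
  have h := CoeffSpace.hasSum_sumCLM ((hb.coeffEquiv hu).symm y)
  rwa [← hb.coeffEquiv_apply hu, ContinuousLinearEquiv.apply_symm_apply] at h

noncomputable def toUnconditionalSchauderBasis (hb : IsSchauderBasis z)
    (hu : IsUnconditional z) : UnconditionalSchauderBasis ℕ ℝ B where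
  basis := z
  coord i := (CoeffSpace.coeff z i).comp (hb.coeffEquiv hu).symm.toContinuousLinearMap
  ortho i j := by
    have single : HasSum (fun k => (if k = j then 1 else 0 : ℝ) • z k) (z j) := by
      convert hasSum_ite_eq j (z j) using 2 with k
      split_ifs with hk <;> simp [hk]
    convert congr_fun (hb.coeff_unique (hb.hasSum_coeffEquiv_symm hu (z j)) single) i using 1
    · rfl
    · simp [Pi.single_apply]
  expansion := hb.hasSum_coeffEquiv_symm hu

end IsSchauderBasis

namespace UnconditionalSchauderBasis

variable {B : Type*} [NormedAddCommGroup B] [NormedSpace ℝ B] (b : UnconditionalSchauderBasis ℕ ℝ B)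

theorem proj_sum_smul (A G : Finset ℕ) (a : ℕ → ℝ) :
    b.proj A (∑ i ∈ G, a i • b i) = ∑ i ∈ A ∩ G, a i • b i := by
  classical
  simp only [map_sum, map_smul, b.proj_apply_basis_mem, smul_ite, smul_zero, sum_ite_mem,
    inter_comm]

theorem coord_proj_of_mem {A : Finset ℕ} {i : ℕ} (hi : i ∈ A) (y : B) :
    b.coord i (b.proj A y) = b.coord i y := by
  classical
  simp [GeneralSchauderBasis.proj_apply, map_sum, b.ortho, Pi.single_apply, hi]

theorem proj_Ico_eq_sub {m n : ℕ} (hmn : m ≤ n) (y : B) :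
    b.proj (Ico m n) y = b.proj (range n) y - b.proj (range m) y := by
  simp only [GeneralSchauderBasis.proj_apply, sum_Ico_eq_sub _ hmn]

theorem norm_proj_Ico_sub_le {m n : ℕ} (hmn : m ≤ n) (y : B) :
    ‖b.proj (Ico m n) y - y‖ ≤ ‖y - b.proj (range n) y‖ + ‖b.proj (range m) y‖ := by
  rw [proj_Ico_eq_sub _ hmn, ← norm_neg (y - _)]
  exact (norm_sub_le _ _).trans_eq' (by congr 1; abel)

theorem proj_range_proj_Ico {N : ℕ → ℕ} (hN : Monotone N) (J j : ℕ) (y : B) :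
    b.proj (range (N J)) (b.proj (Ico (N j) (N (j + 1))) y) =
      if j < J then b.proj (Ico (N j) (N (j + 1))) y else 0 := by
  rw [GeneralSchauderBasis.proj_apply b (Ico _ _), proj_sum_smul]
  split_ifs with hj
  · have : Ico (N j) (N (j + 1)) ⊆ range (N J) := fun i hi =>
      mem_range.2 ((mem_Ico.1 hi).2.trans_le (hN hj))
    rw [inter_eq_right.2 this]
  · have : Disjoint (range (N J)) (Ico (N j) (N (j + 1))) := disjoint_left.2 fun i hi hi' =>
      (mem_range.1 hi).not_ge ((hN (not_lt.1 hj)).trans (mem_Ico.1 hi').1)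
    rw [disjoint_iff_inter_eq_empty.1 this, sum_empty]

theorem norm_sum_smul_le_of_norm_partialSum_le {C M : ℝ} (hC : ∀ A, ‖b.proj A‖ ≤ C) {a : ℕ → ℝ}
    (hM : ∀ N, ‖∑ i ∈ range N, a i • b i‖ ≤ M) (A : Finset ℕ) : ‖∑ i ∈ A, a i • b i‖ ≤ C * M := by
  obtain ⟨N, hN⟩ := A.exists_nat_subset_range
  rw [← inter_eq_left.2 hN, ← proj_sum_smul]
  exact ((b.proj A).le_opNorm _).trans
    (mul_le_mul (hC A) (hM N) (norm_nonneg _) ((norm_nonneg _).trans (hC A)))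

theorem proj_Ico_sum_Ico {n : ℕ → ℕ} (hn : Monotone n) (a : ℕ → ℝ) (j j' : ℕ) :
    b.proj (Ico (n j) (n (j + 1))) (∑ i ∈ Ico (n j') (n (j' + 1)), a i • b i) =
      if j' = j then ∑ i ∈ Ico (n j) (n (j + 1)), a i • b i else 0 := by
  rw [proj_sum_smul]
  split_ifs with h
  · rw [h, inter_self]
  · rw [disjoint_iff_inter_eq_empty.1 (disjoint_Ico_of_ne hn (Ne.symm h)), sum_empty]

theorem exists_gliding_hump (x : ℕ → B) (hx : ∀ i, Tendsto (fun k => b.coord i (x k)) atTop (𝓝 0))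
    {η : ℕ → ℝ} (hη : ∀ j, 0 < η j) :
    ∃ k N : ℕ → ℕ, StrictMono k ∧ StrictMono N ∧
      ∀ j, ‖b.proj (Ico (N j) (N (j + 1))) (x (k j)) - x (k j)‖ < η j := by
  have step : ∀ j n₀ k₀, ∃ k > k₀, ∃ n > n₀,
      ‖b.proj (range n₀) (x k)‖ < η j / 2 ∧ ‖x k - b.proj (range n) (x k)‖ < η j / 2 := by
    intro j n₀ k₀
    have head : Tendsto (fun k => ‖b.proj (range n₀) (x k)‖) atTop (𝓝 0) := by
      simpa using (tendsto_finsetSum (range n₀) fun i _ => (hx i).smul_const (b i)).norm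
    obtain ⟨k, hk, hk₀⟩ :=
      ((head.eventually (gt_mem_nhds (half_pos (hη j)))).and (eventually_gt_atTop k₀)).exists
    have tail : Tendsto (fun n => ‖x k - b.proj (range n) (x k)‖) atTop (𝓝 0) := by
      simpa using ((tendsto_const_nhds (x := x k)).sub (b.expansion (x k)).tendsto_sum_nat).norm
    obtain ⟨n, hn, hn₀⟩ :=
      ((tail.eventually (gt_mem_nhds (half_pos (hη j)))).and (eventually_gt_atTop n₀)).exists
    exact ⟨k, hk₀, n, hn₀, hk, hn⟩
  choose K hK N' hN' hhead htail using step
  -- `p j = (N j, k (j - 1))`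
  obtain ⟨p, hp⟩ : ∃ p : ℕ → ℕ × ℕ, ∀ j, p (j + 1) = (N' j (p j).1 (p j).2, K j (p j).1 (p j).2) :=
    ⟨fun j => Nat.rec (0, 0) (fun j q => (N' j q.1 q.2, K j q.1 q.2)) j, fun _ => rfl⟩
  refine ⟨fun j => K j (p j).1 (p j).2, fun j => (p j).1, strictMono_nat_of_lt_succ fun j => ?_,
    strictMono_nat_of_lt_succ fun j => ?_, fun j => ?_⟩
  · simpa [hp j] using hK (j + 1) (p (j + 1)).1 (p (j + 1)).2
  · simpa [hp j] using hN' j (p j).1 (p j).2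
  · dsimp only
    rw [hp j]
    exact (b.norm_proj_Ico_sub_le (hN' j _ _).le _).trans_lt
      (by linarith [htail j (p j).1 (p j).2, hhead j (p j).1 (p j).2])

theorem norm_smul_block_le {C : ℝ} (hC : ∀ A, ‖b.proj A‖ ≤ C) {n : ℕ → ℕ} (hn : Monotone n)
    (a c : ℕ → ℝ) {y : B} (hy : HasSum (fun j => c j • ∑ i ∈ Ico (n j) (n (j + 1)), a i • b i) y)
    (j : ℕ) : ‖c j • ∑ i ∈ Ico (n j) (n (j + 1)), a i • b i‖ ≤ C * ‖y‖ := by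
  have hblock :
      b.proj (Ico (n j) (n (j + 1))) y = c j • ∑ i ∈ Ico (n j) (n (j + 1)), a i • b i := by
    refine ((b.proj _).hasSum hy).unique ?_
    convert hasSum_ite_eq j (c j • ∑ i ∈ Ico (n j) (n (j + 1)), a i • b i) using 2 with j'
    rw [map_smul, b.proj_Ico_sum_Ico hn]
    split_ifs with h <;> simp [h]
  rw [← hblock]
  exact ((b.proj _).le_opNorm _).trans (mul_le_mul_of_nonneg_right (hC _) (norm_nonneg _))

variable [CompleteSpace B]

theorem exists_pos_norm_proj_le : ∃ C > 0, ∀ A, ‖b.proj A‖ ≤ C := by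
  obtain ⟨C, hC⟩ := b.exists_norm_proj_le
  exact ⟨max C 1, by positivity, fun A => (hC A).trans (le_max_left C 1)⟩

/-- `w` is the sequence of partial sums, along `N`, of the expansion with coefficients
`b.coord i (w (i + 1))`. -/
theorem exists_tendsto_of_proj_eq (hbc : BoundedlyComplete ⇑b) {N : ℕ → ℕ} (hN : StrictMono N)
    {w : ℕ → B} {M : ℝ} (hw : ∀ J J', J ≤ J' → b.proj (range (N J)) (w J') = w J)
    (hM : ∀ J, ‖w J‖ ≤ M) : ∃ l, Tendsto w atTop (𝓝 l) := by
  obtain ⟨C, hC0, hC⟩ := b.exists_pos_norm_proj_le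
  have hcoord : ∀ i J, i < J → b.coord i (w J) = b.coord i (w (i + 1)) := fun i J hiJ => by
    rw [← hw (i + 1) J hiJ, b.coord_proj_of_mem (mem_range.2 (hN.id_le (i + 1)))]
  have hpartial : ∀ n, ∑ i ∈ range n, b.coord i (w (i + 1)) • b i = b.proj (range n) (w n) :=
    fun n => by
      rw [GeneralSchauderBasis.proj_apply]
      exact sum_congr rfl fun i hi => by rw [hcoord i n (mem_range.1 hi)]
  obtain ⟨l, hl⟩ := hbc _ ⟨C * M, fun n => by
    rw [hpartial]
    exact ((b.proj _).le_opNorm _).trans (mul_le_mul (hC _) (hM n) (norm_nonneg _) hC0.le)⟩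
  refine ⟨l, (hl.comp hN.tendsto_atTop).congr fun J => ?_⟩
  simp only [Function.comp, hpartial]
  exact hw J (N J) (hN.id_le J)

theorem tendsto_proj_Ico_zero (hbc : BoundedlyComplete ⇑b) {N : ℕ → ℕ} (hN : StrictMono N)
    (x : ℕ → B) {M : ℝ}
    (hM : ∀ J, ‖∑ j ∈ range J, b.proj (Ico (N j) (N (j + 1))) (x j)‖ ≤ M) :
    Tendsto (fun j => b.proj (Ico (N j) (N (j + 1))) (x j)) atTop (𝓝 0) := by
  set u := fun j => b.proj (Ico (N j) (N (j + 1))) (x j)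
  have hw : ∀ J J', J ≤ J' → b.proj (range (N J)) (∑ j ∈ range J', u j) = ∑ j ∈ range J, u j :=
    fun J J' hJ => by
      rw [map_sum, ← sum_range_add_sum_Ico _ hJ]
      simp only [u, b.proj_range_proj_Ico hN.monotone]
      rw [sum_ite_of_true fun j hj => mem_range.1 hj,
        sum_ite_of_false fun j hj => (mem_Ico.1 hj).1.not_gt, sum_const_zero, add_zero]
  obtain ⟨l, hl⟩ := b.exists_tendsto_of_proj_eq hbc hN hw hM
  simpa [sum_range_succ] using ((tendsto_add_atTop_iff_nat 1).2 hl).sub hl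

theorem exists_c0_of_not_boundedlyComplete (hbc : ¬BoundedlyComplete ⇑b) :
    ∃ (T : C₀(ℕ, ℝ) →L[ℝ] B) (c : ℝ), 0 < c ∧ ∀ v, c * ‖v‖ ≤ ‖T v‖ := by
  simp only [BoundedlyComplete, not_forall, not_exists] at hbc
  obtain ⟨a, ⟨M, hM⟩, hdiv⟩ := hbc
  obtain ⟨C, hC0, hC⟩ := b.exists_pos_norm_proj_le
  have hs : ¬CauchySeq fun N => ∑ i ∈ range N, a i • b i := fun h =>
    let ⟨y, hy⟩ := cauchySeq_tendsto_of_complete h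
    hdiv y hy
  obtain ⟨ε, hε, n, hn, hgap⟩ := exists_strictMono_le_dist_of_not_cauchySeq hs
  set u := fun j => ∑ i ∈ Ico (n j) (n (j + 1)), a i • b i
  have hu_low : ∀ j, ε ≤ ‖u j‖ := fun j => by
    simpa [u, dist_eq_norm, sum_Ico_eq_sub _ (hn.monotone j.le_succ)] using hgap j
  have hu_sum : ∀ S : Finset ℕ, ‖∑ j ∈ S, u j‖ ≤ C * M := fun S => by
    rw [← sum_biUnion fun j _ j' _ h => disjoint_Ico_of_ne hn.monotone h]
    exact b.norm_sum_smul_le_of_norm_partialSum_le hC hM _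
  obtain ⟨T, hT⟩ := exists_c0_hasSum_of_norm_sum_le hu_sum
  refine ⟨T, ε / C, div_pos hε hC0, fun v => ?_⟩
  rw [div_mul_eq_mul_div, div_le_iff₀ hC0, mul_comm ‖T v‖ C, ← le_div_iff₀' hε]
  refine (ZeroAtInftyContinuousMap.norm_le (by positivity)).2 fun j => (le_div_iff₀' hε).2 ?_
  calc ε * ‖v j‖ ≤ ‖v j • u j‖ := by
        rw [norm_smul, mul_comm]
        exact mul_le_mul_of_nonneg_left (hu_low j) (norm_nonneg _)
    _ ≤ C * ‖T v‖ := b.norm_smul_block_le hC hn.monotone a v (hT v) j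

theorem not_boundedlyComplete_of_c0 (T : C₀(ℕ, ℝ) →L[ℝ] B) {c : ℝ} (hc : 0 < c)
    (hT : ∀ v, c * ‖v‖ ≤ ‖T v‖) : ¬ BoundedlyComplete ⇑b := by
  intro hbc
  set x := fun m => T (c0Single m)
  have hx_sum : ∀ S : Finset ℕ, ‖∑ m ∈ S, x m‖ ≤ ‖T‖ := fun S => by
    rw [← map_sum]
    exact T.le_of_opNorm_le_of_le le_rfl (norm_sum_c0Single_le S) |>.trans_eq (mul_one _)
  have hx_low : ∀ m, c ≤ ‖x m‖ := fun m =>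
    (le_mul_of_one_le_right hc.le (one_le_norm_c0Single m)).trans (hT _)
  obtain ⟨k, N, hk, hN, hkN⟩ := b.exists_gliding_hump x
    (fun i => tendsto_apply_zero_of_norm_sum_le hx_sum (b.coord i))
    (η := fun j => c / 2 * (1 / 2) ^ j) fun j => by positivity
  set u := fun j => b.proj (Ico (N j) (N (j + 1))) (x (k j))
  have hu_bdd : ∀ J, ‖∑ j ∈ range J, u j‖ ≤ ‖T‖ + c := fun J => by
    have hsub : ‖∑ j ∈ range J, x (k j)‖ ≤ ‖T‖ := by
      rw [← sum_image fun i _ j _ h => hk.injective h]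
      exact hx_sum _
    have herr : ‖∑ j ∈ range J, (u j - x (k j))‖ ≤ c := by
      refine (norm_sum_le _ _).trans ((sum_le_sum fun j _ => (hkN j).le).trans ?_)
      rw [← mul_sum]
      nlinarith [sum_geometric_two_le J]
    calc ‖∑ j ∈ range J, u j‖ = ‖∑ j ∈ range J, x (k j) + ∑ j ∈ range J, (u j - x (k j))‖ := by
          rw [← sum_add_distrib]; simp
      _ ≤ ‖T‖ + c := (norm_add_le _ _).trans (add_le_add hsub herr)
  have hu_low : ∀ j, c / 2 ≤ ‖u j‖ := fun j => by
    have hpow : (1 / 2 : ℝ) ^ j ≤ 1 := pow_le_one₀ (by norm_num) (by norm_num)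
    have := norm_sub_norm_le (x (k j)) (u j)
    rw [norm_sub_rev] at this
    nlinarith [hkN j, hx_low (k j)]
  have hu_zero := (b.tendsto_proj_Ico_zero hbc hN (fun j => x (k j)) hu_bdd).norm
  rw [norm_zero] at hu_zero
  obtain ⟨j, hj⟩ := (hu_zero.eventually (gt_mem_nhds (half_pos hc))).exists
  exact (hu_low j).not_gt hj

end UnconditionalSchauderBasis

/-- An unconditional Schauder basis fails to be boundedly complete iff the space contains a
closed subspace linearly isomorphic to `c₀`. -/
theorem not_boundedlyComplete_iff_contains_c0 {B : Type*} [NormedAddCommGroup B]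
    [NormedSpace ℝ B] [CompleteSpace B] (z : ℕ → B)
    (hb : IsSchauderBasis z) (hu : IsUnconditional z) :
    ¬ BoundedlyComplete z ↔
      ∃ (T : ZeroAtInftyContinuousMap ℕ ℝ →L[ℝ] B) (c : ℝ), 0 < c ∧
        ∀ v, c * ‖v‖ ≤ ‖T v‖ := by
  let b := hb.toUnconditionalSchauderBasis hu
  exact ⟨b.exists_c0_of_not_boundedlyComplete,
    fun ⟨T, c, hc, hT⟩ => b.not_boundedlyComplete_of_c0 T hc hT⟩
end
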